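/- arXiv:2112.12202 — 8 statements merged into one kernel-verified Lean document; each statement's English description precedes it below -/
import Mathlib

section
/- Let r ≥ 1 be an integer. For every real ε with 1/(r + 1/(r²+r+1)) ≤ ε < 1/r, the minimum number of cubes of side ε needed to cover the three-dimensional unit torus equals r³ + r² + r + 1, i.e. μ(3;ε) = r³ + r² + r + 1. -/
set_option maxHeartbeats 1000000

open Set

noncomputable section

/-- A `sub-cube` of side `ε` of the torus `(ℝ/ℤ)^d` with base vertex `x0`:
the set of points whose `i`-th coordinate lies in `[x0 i, x0 i + ε]` mod 1. -/
def subCube (d : ℕ) (ε : ℝ) (x0 : Fin d → AddCircle (1:ℝ)) :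
    Set (Fin d → AddCircle (1:ℝ)) :=
  {x | ∀ i, ∃ θ : ℝ, 0 ≤ θ ∧ θ ≤ ε ∧ x i = x0 i + (θ : AddCircle (1:ℝ))}

/-- `μ(d; ε)`: the minimum number of sub-cubes of side `ε` needed to cover `(ℝ/ℤ)^d`. -/
def torusCoverNum (d : ℕ) (ε : ℝ) : ℕ :=
  sInf {n : ℕ | ∃ x0 : Fin n → (Fin d → AddCircle (1:ℝ)),
    (⋃ j, subCube d ε (x0 j)) = Set.univ}

open MeasureTheory
open scoped ENNReal Classical

def arcSet (ε : ℝ) (a : AddCircle (1:ℝ)) : Set (AddCircle (1:ℝ)) :=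
  {y | ∃ θ : ℝ, 0 ≤ θ ∧ θ ≤ ε ∧ y = a + (θ : AddCircle (1:ℝ))}

lemma arc_subset_ball (ε : ℝ) (hε : 0 ≤ ε) (a : AddCircle (1:ℝ)) :
    arcSet ε a ⊆ Metric.closedBall (a + ((ε/2 : ℝ) : AddCircle (1:ℝ))) (ε/2) := by
  rintro y ⟨θ, h0, h1, rfl⟩
  rw [Metric.mem_closedBall, dist_eq_norm]
  have : a + (θ : AddCircle (1:ℝ)) - (a + ((ε/2 : ℝ) : AddCircle (1:ℝ)))
      = ((θ - ε/2 : ℝ) : AddCircle (1:ℝ)) := by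
    rw [AddCircle.coe_sub]
    abel
  rw [this]
  calc ‖((θ - ε/2 : ℝ) : AddCircle (1:ℝ))‖ ≤ |θ - ε/2| := by
        exact QuotientAddGroup.norm_mk_le_norm.trans_eq (Real.norm_eq_abs _)
    _ ≤ ε/2 := by rw [abs_le]; constructor <;> linarith

lemma arc_measurable (ε : ℝ) (a : AddCircle (1:ℝ)) : MeasurableSet (arcSet ε a) := by
  rcases le_or_gt 0 ε with hε | hε
  · have : arcSet ε a = (fun θ : ℝ => a + (θ : AddCircle (1:ℝ))) '' Icc 0 ε := by
      ext y; constructor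
      · rintro ⟨θ, h0, h1, rfl⟩; exact ⟨θ, ⟨h0, h1⟩, rfl⟩
      · rintro ⟨θ, ⟨h0, h1⟩, rfl⟩; exact ⟨θ, h0, h1, rfl⟩
    rw [this]
    have hc : Continuous (fun θ : ℝ => a + (θ : AddCircle (1:ℝ))) :=
      (continuous_const.add (AddCircle.continuous_mk' 1))
    exact (isCompact_Icc.image hc).isClosed.measurableSet
  · have : arcSet ε a = ∅ := by
      ext y; simp only [arcSet, mem_setOf_eq, mem_empty_iff_false, iff_false]
      rintro ⟨θ, h0, h1, _⟩; linarith
    rw [this]; exact MeasurableSet.empty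

lemma arc_volume_le (ε : ℝ) (hε : 0 ≤ ε) (a : AddCircle (1:ℝ)) :
    volume (arcSet ε a) ≤ ENNReal.ofReal ε := by
  calc volume (arcSet ε a) ≤ volume (Metric.closedBall (a + ((ε/2 : ℝ) : AddCircle (1:ℝ))) (ε/2)) :=
        measure_mono (arc_subset_ball ε hε a)
    _ = ENNReal.ofReal (min 1 (2 * (ε/2))) := AddCircle.volume_closedBall _ _
    _ ≤ ENNReal.ofReal ε := by
        apply ENNReal.ofReal_le_ofReal
        rw [min_le_iff]; right; linarith

open Classical in
lemma count_lemma {n : ℕ} (ε : ℝ) (hε : 0 ≤ ε) (s : Finset (Fin n))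
    (a : Fin n → AddCircle (1:ℝ)) (m : ℕ)
    (hmul : ∀ y, m ≤ (s.filter (fun j => y ∈ arcSet ε (a j))).card) :
    (m : ℝ) ≤ s.card * ε := by
  have key : (m : ℝ≥0∞) ≤ (s.card : ℝ≥0∞) * ENNReal.ofReal ε := by
    have h1 : (m : ℝ≥0∞) * volume (univ : Set (AddCircle (1:ℝ)))
        ≤ ∫⁻ y, ∑ j ∈ s, (arcSet ε (a j)).indicator (fun _ => (1:ℝ≥0∞)) y := by
      rw [← lintegral_const]
      apply lintegral_mono
      intro y
      have : ∑ j ∈ s, (arcSet ε (a j)).indicator (fun _ => (1:ℝ≥0∞)) y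
          = ((s.filter (fun j => y ∈ arcSet ε (a j))).card : ℝ≥0∞) := by
        rw [Finset.card_filter]
        push_cast
        apply Finset.sum_congr rfl
        intro j _
        simp [Set.indicator_apply]
      simp only []
      rw [this]
      exact_mod_cast Nat.cast_le.mpr (hmul y)
    have h2 : ∫⁻ y, ∑ j ∈ s, (arcSet ε (a j)).indicator (fun _ => (1:ℝ≥0∞)) y
        ≤ (s.card : ℝ≥0∞) * ENNReal.ofReal ε := by
      rw [lintegral_finset_sum _ (fun j _ => (measurable_const.indicator (arc_measurable ε (a j))))]
      calc ∑ j ∈ s, ∫⁻ y, (arcSet ε (a j)).indicator (fun _ => (1:ℝ≥0∞)) y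
          = ∑ j ∈ s, volume (arcSet ε (a j)) := by
            apply Finset.sum_congr rfl; intro j _
            rw [lintegral_indicator (arc_measurable ε (a j)) (fun _ => (1:ℝ≥0∞))]
            simp
        _ ≤ ∑ _j ∈ s, ENNReal.ofReal ε := Finset.sum_le_sum (fun j _ => arc_volume_le ε hε (a j))
        _ = (s.card : ℝ≥0∞) * ENNReal.ofReal ε := by rw [Finset.sum_const, nsmul_eq_mul]
    calc (m : ℝ≥0∞) = (m : ℝ≥0∞) * volume (univ : Set (AddCircle (1:ℝ))) := by
          rw [AddCircle.measure_univ]; simp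
      _ ≤ _ := h1.trans h2
  have : ENNReal.ofReal (m : ℝ) ≤ ENNReal.ofReal (s.card * ε) := by
    rw [ENNReal.ofReal_mul (by positivity), ENNReal.ofReal_natCast, ENNReal.ofReal_natCast]
    exact key
  exact (ENNReal.ofReal_le_ofReal_iff (by positivity)).mp this

lemma count_lemma' {n : ℕ} (r : ℕ) (hr : 1 ≤ r) (ε : ℝ) (hε : 0 ≤ ε) (hεr : ε < 1 / r)
    (s : Finset (Fin n)) (a : Fin n → AddCircle (1:ℝ)) (m : ℕ) (hm : 1 ≤ m)
    (hmul : ∀ y, m ≤ (s.filter (fun j => y ∈ arcSet ε (a j))).card) :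
    m * r + 1 ≤ s.card := by
  have h := count_lemma ε hε s a m hmul
  have hr' : (0:ℝ) < r := by exact_mod_cast hr
  have hcard : (0:ℝ) < s.card := by
    have h0 := hmul 0
    have : 0 < (s.filter (fun j => (0:AddCircle (1:ℝ)) ∈ arcSet ε (a j))).card := lt_of_lt_of_le hm h0
    have h2 := Finset.card_le_card (Finset.filter_subset (fun j => (0:AddCircle (1:ℝ)) ∈ arcSet ε (a j)) s)
    exact_mod_cast lt_of_lt_of_le this h2
  have : (m : ℝ) * r < s.card := by
    have h3 : (s.card : ℝ) * ε < s.card * (1/r) := by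
      apply mul_lt_mul_of_pos_left hεr hcard
    have h4 : (m:ℝ) < s.card * (1/r) := lt_of_le_of_lt h h3
    calc (m:ℝ) * r < (s.card * (1/r)) * r := by apply mul_lt_mul_of_pos_right h4 hr'
      _ = s.card := by field_simp
  have : m * r < s.card := by exact_mod_cast this
  omega
lemma lower_bound {n r : ℕ} (hr : 1 ≤ r) (ε : ℝ) (hε : 0 ≤ ε) (hεr : ε < 1 / r)
    (x0 : Fin n → (Fin 3 → AddCircle (1:ℝ)))
    (hcov : (⋃ j, subCube 3 ε (x0 j)) = Set.univ) :
    r^3 + r^2 + r + 1 ≤ n := by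
  have hcov' : ∀ x : Fin 3 → AddCircle (1:ℝ), ∃ j, ∀ i, x i ∈ arcSet ε (x0 j i) := by
    intro x
    have : x ∈ ⋃ j, subCube 3 ε (x0 j) := hcov ▸ Set.mem_univ x
    obtain ⟨j, hj⟩ := Set.mem_iUnion.mp this
    exact ⟨j, fun i => hj i⟩
  have C1 : ∀ y₂ y₃ : AddCircle (1:ℝ), 1 * r + 1 ≤
      (Finset.univ.filter (fun j : Fin n =>
        y₃ ∈ arcSet ε (x0 j 2) ∧ y₂ ∈ arcSet ε (x0 j 1))).card := by
    intro y₂ y₃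
    apply count_lemma' r hr ε hε hεr _ (fun j => x0 j 0) 1 le_rfl
    intro y₁
    obtain ⟨j, hj⟩ := hcov' ![y₁, y₂, y₃]
    rw [Nat.one_le_iff_ne_zero, ← Nat.pos_iff_ne_zero, Finset.card_pos]
    refine ⟨j, ?_⟩
    simp only [Finset.mem_filter, Finset.mem_univ, true_and]
    refine ⟨⟨?_, ?_⟩, ?_⟩
    · simpa using hj 2
    · simpa using hj 1
    · simpa using hj 0
  have C2 : ∀ y₃ : AddCircle (1:ℝ), (r + 1) * r + 1 ≤
      (Finset.univ.filter (fun j : Fin n => y₃ ∈ arcSet ε (x0 j 2))).card := by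
    intro y₃
    apply count_lemma' r hr ε hε hεr _ (fun j => x0 j 1) (r+1) (by omega)
    intro y₂
    rw [Finset.filter_filter]
    have := C1 y₂ y₃
    omega
  have C3 : (r^2 + r + 1) * r + 1 ≤ (Finset.univ : Finset (Fin n)).card := by
    apply count_lemma' r hr ε hε hεr _ (fun j => x0 j 2) (r^2+r+1) (by omega)
    intro y₃
    have := C2 y₃
    have harith : (r + 1) * r + 1 = r^2 + r + 1 := by ring
    omega
  rw [Finset.card_univ, Fintype.card_fin] at C3
  have : (r^2 + r + 1) * r + 1 = r^3 + r^2 + r + 1 := by ring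
  omega
lemma ivt (m x : ℤ) (T : ℕ → ℤ) (K : ℕ) (h0 : T 0 ≤ x) (hK : x < T K)
    (hstep : ∀ i, i < K → T (i+1) ≤ T i + m) :
    ∃ j, j < K ∧ T j ≤ x ∧ x < T j + m := by
  induction K with
  | zero => exact absurd hK (not_lt.mpr h0)
  | succ K ih =>
    by_cases hc : T K ≤ x
    · exact ⟨K, Nat.lt_succ_self K, hc, lt_of_lt_of_le hK (hstep K (Nat.lt_succ_self K))⟩
    · obtain ⟨j, hj, h1, h2⟩ := ih (not_le.mp hc) (fun i hi => hstep i (Nat.lt_succ_of_lt hi))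
      exact ⟨j, Nat.lt_succ_of_lt hj, h1, h2⟩

-- Case A : r^2 ≤ d < N
lemma caseA (r : ℤ) (hr : 1 ≤ r) (d c₃ : ℤ)
    (hd1 : r^2 ≤ d) (hd2 : d < r^3+r^2+r+1) :
    ∃ s : ℤ, 0 ≤ s ∧ s ≤ (r^2+r+1) - 1 ∧
      (d - s*r) % (r^3+r^2+r+1) < r^2+r+1 ∧
      (c₃ - s*r^2) % (r^3+r^2+r+1) < r^2+r+1 := by
  set N : ℤ := r^3+r^2+r+1 with hN
  set m : ℤ := r^2+r+1 with hm
  have hN0 : 0 < N := by nlinarith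
  have hmN : m < N := by nlinarith
  have hm0 : 0 < m := by nlinarith
  -- the shift e
  set e : ℤ := if m - 1 ≤ d then (d - m + r) / r else 0 with he
  have heB : 0 ≤ e ∧ d - e*r ≤ m - 1 ∧ r^2 ≤ d - e*r ∧ e + r ≤ m - 1 := by
    by_cases hc : m - 1 ≤ d
    · have hdef := Int.mul_ediv_add_emod (d - m + r) r
      have hρ0 := Int.emod_nonneg (d - m + r) (by omega : r ≠ 0)
      have hρ1 := Int.emod_lt_of_pos (d - m + r) (by omega : 0 < r)
      rw [he, if_pos hc]
      set q := (d - m + r) / r with hq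
      set ρ := (d - m + r) % r with hρ
      -- r * q + ρ = d - m + r
      have hq0 : 0 ≤ q := by nlinarith
      have hqr1 : q*r ≤ d - m + r := by nlinarith
      have hqr2 : d - m + 1 ≤ q*r := by nlinarith
      refine ⟨hq0, by nlinarith, by nlinarith, ?_⟩
      -- q ≤ r^2
      have : q ≤ r^2 := by nlinarith
      omega
    · rw [he, if_neg hc]
      refine ⟨le_refl 0, by omega, by omega, by nlinarith⟩
  obtain ⟨he0, he1, he2, he3⟩ := heB
  -- x and the IVT
  set x : ℤ := (c₃ - e*r^2) % N with hx
  have hx0 : 0 ≤ x := Int.emod_nonneg _ (by omega)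
  have hxN : x < N := Int.emod_lt_of_pos _ hN0
  set T : ℕ → ℤ := fun j => if (j:ℤ) ≤ r then (j:ℤ) * r^2 else N with hT
  obtain ⟨j, hjK, hj1, hj2⟩ := ivt m x T (r.toNat + 1)
    (by simp only [hT, Nat.cast_zero, zero_mul]
        rw [if_pos (by omega : (0:ℤ) ≤ r)]
        exact hx0)
    (by
      have : ¬ ((r.toNat + 1 : ℤ) ≤ r) := by omega
      simp only [hT]
      push_cast
      rw [if_neg this]
      exact hxN)
    (by
      intro i hi
      have hi' : (i:ℤ) ≤ r := by omega
      simp only [hT]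
      push_cast
      by_cases hc : (i:ℤ) + 1 ≤ r
      · rw [if_pos hc, if_pos (by omega)]
        nlinarith
      · rw [if_neg hc, if_pos hi']
        have : (i:ℤ) = r := by omega
        rw [this]
        nlinarith)
  have hjr : (j:ℤ) ≤ r := by omega
  rw [hT] at hj1 hj2
  simp only [if_pos hjr] at hj1 hj2
  refine ⟨e + j, by omega, by omega, ?_, ?_⟩
  · -- second coordinate
    have hval1 : 0 ≤ d - (e + j)*r := by nlinarith
    have hval2 : d - (e + j)*r ≤ m - 1 := by nlinarith
    rw [Int.emod_eq_of_lt hval1 (by omega)]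
    omega
  · -- third coordinate
    have hcong : (c₃ - (e + (j:ℤ))*r^2) % N = (x - (j:ℤ)*r^2) % N := by
      have h1 : (c₃ - e*r^2) % N = x % N := by
        rw [← hx, Int.emod_emod_of_dvd _ dvd_rfl]
      have h2 : (c₃ - e*r^2 - (j:ℤ)*r^2) % N = (x - (j:ℤ)*r^2) % N :=
        Int.ModEq.sub_right _ h1
      have : c₃ - (e + (j:ℤ))*r^2 = c₃ - e*r^2 - (j:ℤ)*r^2 := by ring
      rw [this, h2]
    rw [hcong, Int.emod_eq_of_lt (by omega) (by omega)]
    omega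
-- Case B : 0 ≤ d < r^2
lemma caseB (r : ℤ) (hr : 1 ≤ r) (d c₃ : ℤ)
    (hd1 : 0 ≤ d) (hd2 : d ≤ r^2 - 1) :
    ∃ s : ℤ, 0 ≤ s ∧ s ≤ (r^2+r+1) - 1 ∧
      (d - s*r) % (r^3+r^2+r+1) < r^2+r+1 ∧
      (c₃ - s*r^2) % (r^3+r^2+r+1) < r^2+r+1 := by
  set N : ℤ := r^3+r^2+r+1 with hN
  set m : ℤ := r^2+r+1 with hm
  have hN0 : 0 < N := by nlinarith
  have hmN : m < N := by nlinarith
  have hm0 : 0 < m := by nlinarith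
  set b : ℤ := d / r with hb
  set ρ : ℤ := d % r with hρ
  have hdef : r * b + ρ = d := Int.mul_ediv_add_emod d r
  have hρ0 : 0 ≤ ρ := Int.emod_nonneg d (by omega)
  have hρ1 : ρ < r := Int.emod_lt_of_pos d (by omega)
  have hb0 : 0 ≤ b := by nlinarith
  have hb1 : b ≤ r - 1 := by nlinarith
  set x : ℤ := (c₃ - (r^2+b+1)*r^2) % N with hx
  have hx0 : 0 ≤ x := Int.emod_nonneg _ (by omega)
  have hxN : x < N := Int.emod_lt_of_pos _ hN0
  set T : ℕ → ℤ := fun j =>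
    if (j:ℤ) ≤ r - b - 1 then (j:ℤ)*r^2
    else if (j:ℤ) ≤ r then ((j:ℤ)-1)*r^2 + (m-1) else N with hT
  obtain ⟨j, hjK, hj1, hj2⟩ := ivt m x T (r.toNat + 1)
    (by simp only [hT, Nat.cast_zero, zero_mul]
        rw [if_pos (by omega : (0:ℤ) ≤ r - b - 1)]
        exact hx0)
    (by
      simp only [hT]
      push_cast
      rw [if_neg (by omega), if_neg (by omega)]
      exact hxN)
    (by
      intro i hi
      have hi' : (i:ℤ) ≤ r := by omega
      simp only [hT]
      push_cast
      by_cases c1 : (i:ℤ) + 1 ≤ r - b - 1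
      · rw [if_pos c1, if_pos (by omega)]
        nlinarith
      · by_cases c2 : (i:ℤ) ≤ r - b - 1
        · rw [if_neg c1, if_pos c2, if_pos (by omega)]
          nlinarith
        · by_cases c3 : (i:ℤ) + 1 ≤ r
          · rw [if_neg c1, if_neg c2, if_pos c3, if_pos hi']
            nlinarith
          · have hir : (i:ℤ) = r := by omega
            rw [if_neg c1, if_neg c3, if_neg c2, if_pos hi', hir]
            nlinarith)
  have hjr : (j:ℤ) ≤ r := by omega
  by_cases hjb : (j:ℤ) ≤ r - b - 1
  · -- branch A : s = r^2 + b + 1 + j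
    rw [hT] at hj1 hj2
    simp only [if_pos hjb] at hj1 hj2
    refine ⟨r^2 + b + 1 + j, by omega, by omega, ?_, ?_⟩
    · set v : ℤ := d + m - (b+1+(j:ℤ))*r with hv
      have hrw : d - (r^2+b+1+(j:ℤ))*r = v - N := by rw [hv, hm, hN]; ring
      have hv0 : 0 ≤ v := by nlinarith
      have hv1 : v ≤ m - 1 := by nlinarith
      have hrw2 : v - N = v + N * (-1) := by ring
      rw [hrw, hrw2, Int.add_mul_emod_self_left, Int.emod_eq_of_lt hv0 (by omega)]
      omega
    · have hcong : (c₃ - (r^2+b+1+(j:ℤ))*r^2) % N = (x - (j:ℤ)*r^2) % N := by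
        have h1 : (c₃ - (r^2+b+1)*r^2) % N = x % N := by
          rw [← hx, Int.emod_emod_of_dvd _ dvd_rfl]
        have h2 : (c₃ - (r^2+b+1)*r^2 - (j:ℤ)*r^2) % N = (x - (j:ℤ)*r^2) % N :=
          Int.ModEq.sub_right _ h1
        have : c₃ - (r^2+b+1+(j:ℤ))*r^2 = c₃ - (r^2+b+1)*r^2 - (j:ℤ)*r^2 := by ring
        rw [this, h2]
      rw [hcong, Int.emod_eq_of_lt (by omega) (by omega)]
      omega
  · -- branch B : s = j - (r - b)
    rw [hT] at hj1 hj2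
    simp only [if_neg hjb, if_pos hjr] at hj1 hj2
    refine ⟨(j:ℤ) - (r - b), by omega, by omega, ?_, ?_⟩
    · have hs1 : (j:ℤ) - (r - b) ≤ b := by omega
      have hv0 : 0 ≤ d - ((j:ℤ) - (r - b))*r := by nlinarith
      have hv1 : d - ((j:ℤ) - (r - b))*r ≤ m - 2 := by nlinarith
      rw [Int.emod_eq_of_lt hv0 (by omega)]
      omega
    · have heq : c₃ - ((j:ℤ) - (r - b))*r^2
          = (c₃ - (r^2+b+1)*r^2 - (((j:ℤ)-1)*r^2 + (m-1))) + N*r := by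
        rw [hm, hN]; ring
      have h1 : (c₃ - (r^2+b+1)*r^2) % N = x % N := by
        rw [← hx, Int.emod_emod_of_dvd _ dvd_rfl]
      have h2 : (c₃ - (r^2+b+1)*r^2 - (((j:ℤ)-1)*r^2 + (m-1))) % N
          = (x - (((j:ℤ)-1)*r^2 + (m-1))) % N :=
        Int.ModEq.sub_right _ h1
      rw [heq, Int.add_mul_emod_self_left, h2,
        Int.emod_eq_of_lt (by omega) (by omega)]
      omega

lemma key2 (r : ℤ) (hr : 1 ≤ r) (c₂ c₃ : ℤ) :
    ∃ s : ℤ, 0 ≤ s ∧ s ≤ (r^2+r+1) - 1 ∧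
      (c₂ - s*r) % (r^3+r^2+r+1) < r^2+r+1 ∧
      (c₃ - s*r^2) % (r^3+r^2+r+1) < r^2+r+1 := by
  set N : ℤ := r^3+r^2+r+1 with hN
  have hN0 : 0 < N := by nlinarith
  set d : ℤ := c₂ % N with hd
  have hd0 : 0 ≤ d := Int.emod_nonneg _ (by omega)
  have hdN : d < N := Int.emod_lt_of_pos _ hN0
  have hrepl : ∀ s : ℤ, (c₂ - s*r) % N = (d - s*r) % N := by
    intro s
    have h1 : d % N = c₂ % N := by rw [hd, Int.emod_emod_of_dvd _ dvd_rfl]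
    exact (Int.ModEq.sub_right _ h1.symm)
  rcases le_or_gt (r^2) d with hc | hc
  · obtain ⟨s, h0, h1, h2, h3⟩ := caseA r hr d c₃ hc hdN
    exact ⟨s, h0, h1, by rw [hrepl]; exact h2, h3⟩
  · obtain ⟨s, h0, h1, h2, h3⟩ := caseB r hr d c₃ hd0 (by omega)
    exact ⟨s, h0, h1, by rw [hrepl]; exact h2, h3⟩

lemma key (r : ℤ) (hr : 1 ≤ r) (u₁ u₂ u₃ : ℤ) :
    ∃ k : ℤ, (u₁ - k) % (r^3+r^2+r+1) < r^2+r+1 ∧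
      (u₂ - k*r) % (r^3+r^2+r+1) < r^2+r+1 ∧
      (u₃ - k*r^2) % (r^3+r^2+r+1) < r^2+r+1 := by
  set N : ℤ := r^3+r^2+r+1 with hN
  set m : ℤ := r^2+r+1 with hm
  have hN0 : 0 < N := by nlinarith
  have hmN : m < N := by nlinarith
  obtain ⟨s, h0, h1, h2, h3⟩ := key2 r hr (u₂ - (u₁ - (m-1))*r) (u₃ - (u₁ - (m-1))*r^2)
  refine ⟨u₁ - (m-1) + s, ?_, ?_, ?_⟩
  · have : u₁ - (u₁ - (m-1) + s) = m - 1 - s := by ring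
    rw [this, Int.emod_eq_of_lt (by omega) (by omega)]
    omega
  · have : u₂ - (u₁ - (m-1) + s)*r = (u₂ - (u₁ - (m-1))*r) - s*r := by ring
    rw [this]; exact h2
  · have : u₃ - (u₁ - (m-1) + s)*r^2 = (u₃ - (u₁ - (m-1))*r^2) - s*r^2 := by ring
    rw [this]; exact h3


lemma upper_cover (r : ℕ) (hr : 1 ≤ r) (ε : ℝ)
    (hε : ((r:ℝ)^2+r+1)/((r:ℝ)^3+(r:ℝ)^2+r+1) ≤ ε) :
    ∃ x0 : Fin (r^3+r^2+r+1) → (Fin 3 → AddCircle (1:ℝ)),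
      (⋃ j, subCube 3 ε (x0 j)) = Set.univ := by
  set Nn : ℕ := r^3+r^2+r+1 with hNn
  have hNn0 : 0 < Nn := by positivity
  have hNr0 : (0:ℝ) < (Nn:ℝ) := by exact_mod_cast hNn0
  set a : Fin 3 → ℕ := ![1, r, r^2] with ha
  refine ⟨fun j i => (((j:ℕ) * a i : ℝ) / (Nn:ℝ) : ℝ), ?_⟩
  rw [Set.eq_univ_iff_forall]
  intro x
  rw [Set.mem_iUnion]
  -- lift each coordinate
  have hy : ∀ i, ∃ y : ℝ, (y : AddCircle (1:ℝ)) = x i := by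
    intro i
    exact Quotient.exists_rep (x i)
  choose y hyx using hy
  set u : Fin 3 → ℤ := fun i => ⌊(Nn:ℝ) * y i⌋ with hu
  obtain ⟨k, hk1, hk2, hk3⟩ := key (r:ℤ) (by exact_mod_cast hr) (u 0) (u 1) (u 2)
  have hNcast : ((Nn:ℤ)) = (r:ℤ)^3+(r:ℤ)^2+(r:ℤ)+1 := by push_cast [hNn]; ring
  set N : ℤ := (r:ℤ)^3+(r:ℤ)^2+(r:ℤ)+1 with hNZ
  set m : ℤ := (r:ℤ)^2+(r:ℤ)+1 with hmZ
  have hrZ : (1:ℤ) ≤ (r:ℤ) := by exact_mod_cast hr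
  have hN0 : 0 < N := by nlinarith
  have hm0 : 0 < m := by nlinarith
  have hmN : m < N := by nlinarith
  set k' : ℤ := k % N with hk'
  have hk'0 : 0 ≤ k' := Int.emod_nonneg _ (by omega)
  have hk'N : k' < N := Int.emod_lt_of_pos _ hN0
  refine ⟨⟨k'.toNat, ?_⟩, ?_⟩
  · have : (k'.toNat : ℤ) < (Nn : ℤ) := by rw [hNcast, Int.toNat_of_nonneg hk'0]; exact hk'N
    exact_mod_cast this
  -- membership
  have hw : ∀ i, (u i - k * (a i : ℤ)) % N < m ∧ 0 ≤ (u i - k * (a i : ℤ)) % N := by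
    intro i
    refine ⟨?_, Int.emod_nonneg _ (by omega)⟩
    fin_cases i
    · simpa [ha] using hk1
    · simpa [ha, hmZ, hNZ] using hk2
    · simpa [ha, hmZ, hNZ] using hk3
  intro i
  set w : ℤ := (u i - k * (a i : ℤ)) % N with hwdef
  obtain ⟨hwm, hw0⟩ := hw i
  set t : ℝ := (Nn:ℝ) * y i - (u i : ℝ) with ht
  have ht0 : 0 ≤ t := by
    rw [ht, hu]
    simp only [sub_nonneg]
    exact Int.floor_le _
  have ht1 : t < 1 := by
    rw [ht, hu]
    linarith [Int.lt_floor_add_one ((Nn:ℝ) * y i)]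
  refine ⟨((w:ℝ) + t) / (Nn:ℝ), by positivity, ?_, ?_⟩
  · -- θ ≤ ε
    have h1 : (w:ℝ) + t < (m:ℝ) := by
      have : (w:ℝ) ≤ (m:ℝ) - 1 := by exact_mod_cast (by omega : w ≤ m - 1)
      linarith
    have h2 : ((w:ℝ) + t)/(Nn:ℝ) ≤ (m:ℝ)/(Nn:ℝ) := (div_le_div_iff_of_pos_right hNr0).mpr h1.le
    have h3 : ((m:ℤ):ℝ)/((Nn:ℕ):ℝ) = ((r:ℝ)^2+r+1)/((r:ℝ)^3+(r:ℝ)^2+r+1) := by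
      rw [hmZ, hNn]
      push_cast
      ring_nf
    calc ((w:ℝ) + t)/(Nn:ℝ) ≤ (m:ℝ)/(Nn:ℝ) := h2
      _ = ((r:ℝ)^2+r+1)/((r:ℝ)^3+(r:ℝ)^2+r+1) := h3
      _ ≤ ε := hε
  · -- the AddCircle equality
    have e1 : N * ((u i - k*(a i:ℤ))/N) + (u i - k*(a i:ℤ)) % N = u i - k*(a i:ℤ) :=
      Int.mul_ediv_add_emod _ N
    have e2 : N * (k/N) + k % N = k := Int.mul_ediv_add_emod k N
    set z : ℤ := (u i - k*(a i:ℤ))/N + (k/N)*(a i:ℤ) with hz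
    have hzkey : u i - k' * (a i:ℤ) - w = N * z := by
      rw [hz, hwdef, hk']
      linear_combination (-1 : ℤ) * e1 - (a i : ℤ) * e2
    -- real equality
    have hreal : y i = ((k'.toNat : ℕ) * a i : ℝ)/(Nn:ℝ) + ((w:ℝ) + t)/(Nn:ℝ) + (z:ℝ) := by
      have hjz : ((k'.toNat:ℕ):ℝ) = ((k':ℤ):ℝ) := by
        rw [← Int.cast_natCast, Int.toNat_of_nonneg hk'0]
      have hNr : ((N:ℤ):ℝ) = (Nn:ℝ) := by rw [← hNcast]; push_cast; ring
      have hcast : (u i : ℝ) - ((k':ℤ):ℝ) * ((a i:ℕ):ℝ) - (w:ℝ) = (Nn:ℝ) * (z:ℝ) := by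
        rw [← hNr]
        exact_mod_cast congrArg (Int.cast : ℤ → ℝ) hzkey
      rw [ht]
      field_simp [hjz]
      rw [hjz]
      linarith [hcast]
    have hreal' : y i = ((k'.toNat : ℕ) * a i : ℝ)/(Nn:ℝ) + (((w:ℝ) + t)/(Nn:ℝ) + (z:ℝ)) := by
      rw [hreal]; ring
    calc x i = ((y i : ℝ) : AddCircle (1:ℝ)) := (hyx i).symm
      _ = ((((k'.toNat : ℕ) * a i : ℝ)/(Nn:ℝ) + (((w:ℝ) + t)/(Nn:ℝ) + (z:ℝ)) : ℝ) : AddCircle (1:ℝ)) := by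
          rw [hreal']
      _ = (((((k'.toNat : ℕ) * a i : ℝ)/(Nn:ℝ) : ℝ) : AddCircle (1:ℝ)))
          + ((((w:ℝ) + t)/(Nn:ℝ) + (z:ℝ) : ℝ) : AddCircle (1:ℝ)) := by
          rw [AddCircle.coe_add]
      _ = (((((k'.toNat : ℕ) * a i : ℝ)/(Nn:ℝ) : ℝ) : AddCircle (1:ℝ)))
          + ((((w:ℝ) + t)/(Nn:ℝ) : ℝ) : AddCircle (1:ℝ)) := by
          rw [AddCircle.coe_add]
          have : (((z:ℝ) : ℝ) : AddCircle (1:ℝ)) = 0 := by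
            rw [AddCircle.coe_eq_zero_iff]
            exact ⟨z, by simp⟩
          rw [this, add_zero]

/-- Theorem 1: for integer `r ≥ 1` and `ε ∈ [1/(r + 1/(r²+r+1)), 1/r)`,
`μ(3; ε) = r³ + r² + r + 1`. -/
theorem mu_eq_on_left_interval (r : ℕ) (hr : 1 ≤ r) (ε : ℝ)
    (h1 : 1 / ((r : ℝ) + 1 / ((r : ℝ)^2 + r + 1)) ≤ ε)
    (h2 : ε < 1 / (r : ℝ)) :
    torusCoverNum 3 ε = r^3 + r^2 + r + 1 := by
  have hr0 : (0:ℝ) < r := by exact_mod_cast hr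
  have hq0 : (0:ℝ) < (r:ℝ)^2 + r + 1 := by positivity
  have hd0 : (0:ℝ) < (r:ℝ) + 1 / ((r:ℝ)^2 + r + 1) := by positivity
  have hε0 : 0 < ε := lt_of_lt_of_le (by positivity) h1
  have hmN : ((r:ℝ)^2+r+1)/((r:ℝ)^3+(r:ℝ)^2+r+1) ≤ ε := by
    refine le_trans (le_of_eq ?_) h1
    rw [div_eq_div_iff (by positivity) (ne_of_gt hd0), one_mul]
    field_simp
  obtain ⟨x0, hx0⟩ := upper_cover r hr ε hmN
  have hmem : (r^3+r^2+r+1) ∈ {n : ℕ | ∃ x0 : Fin n → (Fin 3 → AddCircle (1:ℝ)),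
      (⋃ j, subCube 3 ε (x0 j)) = Set.univ} := ⟨x0, hx0⟩
  rw [torusCoverNum]
  apply le_antisymm
  · exact Nat.sInf_le hmem
  · apply le_csInf ⟨_, hmem⟩
    rintro n ⟨x0', hcov⟩
    exact lower_bound hr ε hε0.le h2 x0' hcov

end
end

section
/- Let r ≥ 2 be an integer and ξ ∈ {1,…,r}. Set s = r² + r + ξ and t = r³ + r² + ξ(r+1). Then μ(3; s/t) ≤ t. -/
/-!
Put the `t` cubes at the points `k • (1, r, b) / t`, `k ∈ ℤ/t`, where `b = r² + r + 1`. Rounding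
a point of the torus down to the grid `(1/t)ℤ³`, it suffices that the translates of the box
`[0, s)³` by the multiples of `(1, r, b)` cover `(ℤ/t)³`. Taking `k = m₀ - (s - 1) + j` with
`0 ≤ j < s` settles the first coordinate, and it remains to find such a `j` with `Y - j r` and
`Z - j b` both in `[0, s)` mod `t`. As `b ≤ s`, the windows `[j b, j b + s)` for `r + 1`
consecutive `j` overlap and sweep all residues of `Z`; when `Y ≥ r²` a run of `r + 1` values of `j`
also keeps `Y - j r` in `[0, s)`. When `Y < r²` one uses `j` and `j + u` with `u = r² + ξ`: since
`u (r + 1) = t`, the shift by `u` moves `Y - j r` by `+u` and `Z - j b` by `-u`.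
-/

open Set

noncomputable section

lemma exists_add_mul_add_eq {b s L B Z : ℕ} (hb : 0 < b) (hbs : b ≤ s) (hBZ : B ≤ Z)
    (hZ : Z < B + L * b + s) : ∃ d ≤ L, ∃ c < s, B + d * b + c = Z := by
  have hdiv := Nat.div_add_mod' (Z - B) b
  rcases le_or_gt ((Z - B) / b) L with h | h
  · exact ⟨(Z - B) / b, h, (Z - B) % b, (Nat.mod_lt _ hb).trans_le hbs, by omega⟩
  · have hLb : (L + 1) * b ≤ Z - B := (Nat.le_div_iff_mul_le hb).1 h
    rw [add_one_mul] at hLb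
    exact ⟨L, le_rfl, Z - B - L * b, by omega, by omega⟩

lemma val_lt_of_eq_natCast {t c s : ℕ} {x : ZMod t} (hx : x = c) (hc : c < s) : x.val < s := by
  rw [hx, ZMod.val_natCast]
  exact (Nat.mod_le _ _).trans_lt hc

lemma exists_val_sub_sub_mul_lt {t b s L : ℕ} [NeZero t] (hb : 0 < b) (hbs : b ≤ s)
    (hcover : t ≤ L * b + s) (B Z : ZMod t) : ∃ d ≤ L, (Z - B - d * b).val < s := by
  have hlt : (Z - B).val < 0 + L * b + s := by have := (Z - B).val_lt; omega
  obtain ⟨d, hd, c, hc, hdc⟩ := exists_add_mul_add_eq hb hbs (Nat.zero_le _) hlt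
  refine ⟨d, hd, val_lt_of_eq_natCast ?_ hc⟩
  rw [← ZMod.natCast_zmod_val (Z - B), ← hdc]
  push_cast
  ring

lemma exists_start_of_sq_le {r s ξ y : ℕ} (hr : 0 < r) (hs : s = r * r + r + ξ)
    (hy : r * r ≤ y) (hyt : y < r * s + ξ) :
    ∃ j₀, j₀ + r < s ∧ j₀ * r + r * r ≤ y ∧ y < j₀ * r + s := by
  have hrr : 0 < r * r := Nat.mul_pos hr hr
  rcases lt_or_ge y (r * s) with h | h
  · have hlo : r ≤ y / r := (Nat.le_div_iff_mul_le hr).2 hy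
    have hhi : y / r < s := (Nat.div_lt_iff_lt_mul hr).2 (by rwa [mul_comm])
    have hsub : (y / r - r) * r + r * r = y / r * r := by
      rw [← add_mul, Nat.sub_add_cancel hlo]
    have := Nat.div_add_mod' y r
    have := Nat.mod_lt y hr
    exact ⟨y / r - r, by omega, by omega, by omega⟩
  · have hsub : (s - 1 - r) * r + r * r + r = r * s := by
      have h1 : s - 1 - r + r + 1 = s := by omega
      calc _ = (s - 1 - r + r + 1) * r := by ring
        _ = r * s := by rw [h1, mul_comm]
    exact ⟨s - 1 - r, by omega, by omega, by omega⟩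

section

variable {r ξ s t b : ℕ} [NeZero t]

lemma exists_val_sub_mul_lt_of_sq_le (hr : 0 < r) (hξ₁ : 1 ≤ ξ) (hξ : ξ ≤ r)
    (hs : s = r * r + r + ξ) (ht : t = r * s + ξ) (hb : b = r * r + r + 1) (Y Z : ZMod t)
    (hY : r * r ≤ Y.val) :
    ∃ j : ℕ, j < s ∧ (Y - j * r).val < s ∧ (Z - j * b).val < s := by
  obtain ⟨j₀, hj₀s, hj₀lo, hj₀hi⟩ := exists_start_of_sq_le hr hs hY (ht ▸ Y.val_lt)
  have hcover : t ≤ r * b + s := by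
    have h1 : r * b + ξ * r = r * s + r := by subst hb hs; ring
    have h2 : ξ * r ≤ r * r := Nat.mul_le_mul_right r hξ
    omega
  obtain ⟨d, hd, hZ⟩ := exists_val_sub_sub_mul_lt (by omega) (by omega) hcover (j₀ * b) Z
  have hdr : d * r ≤ r * r := Nat.mul_le_mul_right r hd
  refine ⟨j₀ + d, by omega, val_lt_of_eq_natCast (c := Y.val - (j₀ + d) * r) ?_ ?_, ?_⟩
  · rw [Nat.cast_sub (by rw [add_mul]; omega)]
    push_cast
    rw [ZMod.natCast_zmod_val]
  · rw [add_mul]; omega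
  · convert hZ using 2
    push_cast
    ring

lemma exists_val_sub_mul_lt_of_lt_mul_add {q : ℕ} (hb : 0 < b) (hbs : b ≤ s) (hqs : q < s)
    (Y Z : ZMod t) (hqY : q * r ≤ Y.val) (hYs : Y.val < s) (hZ : Z.val < q * b + s) :
    ∃ j : ℕ, j < s ∧ (Y - j * r).val < s ∧ (Z - j * b).val < s := by
  obtain ⟨d, hd, c, hc, hdc⟩ :=
    exists_add_mul_add_eq hb hbs (Nat.zero_le _) (by omega : Z.val < 0 + q * b + s)
  have hdr : d * r ≤ q * r := Nat.mul_le_mul_right r hd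
  refine ⟨d, by omega, val_lt_of_eq_natCast (c := Y.val - d * r) ?_ (by omega),
    val_lt_of_eq_natCast (c := c) ?_ hc⟩
  · rw [Nat.cast_sub (by omega)]
    push_cast
    rw [ZMod.natCast_zmod_val]
  · rw [← ZMod.natCast_zmod_val Z, ← hdc]
    push_cast
    ring

lemma exists_val_sub_mul_lt_of_mul_add_le {q : ℕ} (hr : 0 < r) (hξ₁ : 1 ≤ ξ) (hξ : ξ ≤ r)
    (hs : s = r * r + r + ξ) (ht : t = r * s + ξ) (hb : b = r * r + r + 1) (Y Z : ZMod t)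
    (hq : q < r) (hqY : q * r ≤ Y.val) (hYq : Y.val < q * r + r) (hZ : q * b + s ≤ Z.val) :
    ∃ j : ℕ, j < s ∧ (Y - j * r).val < s ∧ (Z - j * b).val < s := by
  set u := r * r + ξ with hu
  have hut : ((u * (r + 1) : ℕ) : ZMod t) = 0 := by
    rw [show u * (r + 1) = t by rw [ht, hs, hu]; ring, ZMod.natCast_self]
  have hub : ((u * b : ℕ) : ZMod t) = u := by
    rw [show u * b = t * r + u by rw [ht, hs, hu, hb]; ring]
    push_cast
    rw [ZMod.natCast_self, zero_mul, zero_add]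
  push_cast at hut hub
  have hcover : t ≤ u + (r - 1) * b + s := by
    have h1 : (r - 1) * b + b = r * b := by
      rw [← add_one_mul, Nat.sub_add_cancel (by omega : 1 ≤ r)]
    have h2 : r * b + ξ * r = r * s + r := by subst hb hs; ring
    have h3 : ξ * r ≤ r * r := Nat.mul_le_mul_right r hξ
    omega
  have hZ' : Z.val - u < q * b + (r - 1 - q) * b + s := by
    rw [← add_mul, show q + (r - 1 - q) = r - 1 by omega]
    have := Z.val_lt
    omega
  obtain ⟨d, hd, c, hc, hdc⟩ := exists_add_mul_add_eq (by omega) (by omega) (by omega) hZ'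
  have hqd : (q + d) * r ≤ r * r := Nat.mul_le_mul_right r (by omega)
  have hqdr : (q + d) * r = q * r + d * r := add_mul _ _ _
  refine ⟨u + (q + d), by omega,
    val_lt_of_eq_natCast (c := Y.val + u - (q + d) * r) ?_ (by omega),
    val_lt_of_eq_natCast (c := c) ?_ hc⟩
  · rw [Nat.cast_sub (by omega)]
    push_cast
    rw [ZMod.natCast_zmod_val]
    linear_combination (-1 : ZMod t) * hut
  · have hZval : Z.val = u + q * b + d * b + c := by omega
    rw [← ZMod.natCast_zmod_val Z, hZval]
    push_cast
    linear_combination (-1 : ZMod t) * hub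

lemma exists_val_sub_mul_lt_of_lt_sq (hr : 0 < r) (hξ₁ : 1 ≤ ξ) (hξ : ξ ≤ r)
    (hs : s = r * r + r + ξ) (ht : t = r * s + ξ) (hb : b = r * r + r + 1) (Y Z : ZMod t)
    (hY : Y.val < r * r) :
    ∃ j : ℕ, j < s ∧ (Y - j * r).val < s ∧ (Z - j * b).val < s := by
  set q := Y.val / r
  have hq : q < r := (Nat.div_lt_iff_lt_mul hr).2 hY
  have hqY : q * r ≤ Y.val := Nat.div_mul_le_self _ _
  have hYq : Y.val < q * r + r := by
    have : q * r + Y.val % r = Y.val := Nat.div_add_mod' Y.val r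
    have := Nat.mod_lt Y.val hr
    omega
  rcases lt_or_ge Z.val (q * b + s) with hZ | hZ
  · exact exists_val_sub_mul_lt_of_lt_mul_add (by omega) (by omega) (by omega) Y Z hqY
      (by omega) hZ
  · exact exists_val_sub_mul_lt_of_mul_add_le hr hξ₁ hξ hs ht hb Y Z hq hqY hYq hZ

lemma exists_val_sub_mul_lt (hr : 0 < r) (hξ₁ : 1 ≤ ξ) (hξ : ξ ≤ r)
    (hs : s = r * r + r + ξ) (ht : t = r * s + ξ) (hb : b = r * r + r + 1) (Y Z : ZMod t) :
    ∃ j : ℕ, j < s ∧ (Y - j * r).val < s ∧ (Z - j * b).val < s :=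
  (lt_or_ge Y.val (r * r)).elim (exists_val_sub_mul_lt_of_lt_sq hr hξ₁ hξ hs ht hb Y Z)
    (exists_val_sub_mul_lt_of_sq_le hr hξ₁ hξ hs ht hb Y Z)

lemma exists_forall_val_sub_mul_lt (hr : 0 < r) (hξ₁ : 1 ≤ ξ) (hξ : ξ ≤ r)
    (hs : s = r * r + r + ξ) (ht : t = r * s + ξ) (hb : b = r * r + r + 1) (m : Fin 3 → ZMod t) :
    ∃ k : ZMod t, ∀ i, (m i - k * ![1, (r : ZMod t), (b : ZMod t)] i).val < s := by
  set k₀ := m 0 - ((s - 1 : ℕ) : ZMod t)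
  obtain ⟨j, hjs, hY, hZ⟩ :=
    exists_val_sub_mul_lt hr hξ₁ hξ hs ht hb (m 1 - k₀ * r) (m 2 - k₀ * b)
  refine ⟨k₀ + j, fun i => ?_⟩
  fin_cases i
  · refine val_lt_of_eq_natCast (c := s - 1 - j) ?_ (by omega)
    rw [Nat.cast_sub (by omega)]
    simp [k₀]
    ring
  · convert hY using 2
    simp
    ring
  · convert hZ using 2
    simp
    ring

end

lemma UnitAddCircle.exists_eq_toAddCircle_add {N : ℕ} [NeZero N] (x : UnitAddCircle) :
    ∃ m : ZMod N, ∃ θ : ℝ, 0 ≤ θ ∧ θ ≤ 1 / N ∧ x = ZMod.toAddCircle m + θ := by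
  induction x using QuotientAddGroup.induction_on with | H v => ?_
  have hN : (0 : ℝ) < N := Nat.cast_pos.2 (NeZero.pos N)
  refine ⟨⌊v * N⌋, v - ⌊v * N⌋ / N, ?_, ?_, ?_⟩
  · rw [sub_nonneg, div_le_iff₀ hN]
    exact Int.floor_le _
  · rw [sub_le_iff_le_add, ← add_div, le_div_iff₀ hN]
    linarith [Int.lt_floor_add_one (v * N)]
  · rw [ZMod.toAddCircle_intCast, ← AddCircle.coe_add]
    congr 1
    ring

lemma exists_eq_toAddCircle_add_of_val_sub_lt {N s : ℕ} [NeZero N] {x : UnitAddCircle}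
    {m a : ZMod N} {θ : ℝ} (hθ0 : 0 ≤ θ) (hθ1 : θ ≤ 1 / N) (hx : x = ZMod.toAddCircle m + θ)
    (hma : (m - a).val < s) :
    ∃ θ' : ℝ, 0 ≤ θ' ∧ θ' ≤ s / N ∧ x = ZMod.toAddCircle a + θ' := by
  refine ⟨(m - a).val / N + θ, add_nonneg (by positivity) hθ0, ?_, ?_⟩
  · have hs : ((m - a).val : ℝ) + 1 ≤ s := by exact_mod_cast hma
    calc ((m - a).val : ℝ) / N + θ ≤ (m - a).val / N + 1 / N := by gcongr
      _ = ((m - a).val + 1) / N := by rw [add_div]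
      _ ≤ s / N := by gcongr
  · rw [hx, AddCircle.coe_add, ← ZMod.toAddCircle_apply, ← add_assoc, ← map_add,
      add_sub_cancel]

lemma torusCoverNum_le_card {d N s : ℕ} [NeZero N] {ι : Type*} [Fintype ι]
    (P : ι → Fin d → ZMod N) (hP : ∀ m : Fin d → ZMod N, ∃ k, ∀ i, (m i - P k i).val < s) :
    torusCoverNum d (s / N) ≤ Fintype.card ι := by
  refine Nat.sInf_le ⟨fun n i => ZMod.toAddCircle (P ((Fintype.equivFin ι).symm n) i), ?_⟩
  refine eq_univ_of_forall fun x => mem_iUnion.2 ?_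
  choose m θ hθ0 hθ1 hx using fun i => UnitAddCircle.exists_eq_toAddCircle_add (N := N) (x i)
  obtain ⟨k, hk⟩ := hP m
  refine ⟨Fintype.equivFin ι k, fun i => ?_⟩
  simpa using exists_eq_toAddCircle_add_of_val_sub_lt (hθ0 i) (hθ1 i) (hx i) (hk i)

/-- Theorem 4: improved upper bound `μ(3; s/t) ≤ t`. -/
theorem mu_le_t (r ξ : ℕ) (hr : 2 ≤ r) (hξ1 : 1 ≤ ξ) (hξ2 : ξ ≤ r)
    (s t : ℕ) (hs : s = r^2 + r + ξ) (ht : t = r^3 + r^2 + ξ*(r + 1)) :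
    torusCoverNum 3 ((s : ℝ) / (t : ℝ)) ≤ t := by
  have hs' : s = r * r + r + ξ := by rw [hs]; ring
  have ht' : t = r * s + ξ := by rw [ht, hs]; ring
  have : NeZero t := ⟨by omega⟩
  calc torusCoverNum 3 ((s : ℝ) / (t : ℝ))
      ≤ Fintype.card (ZMod t) :=
        torusCoverNum_le_card _ (exists_forall_val_sub_mul_lt (by omega) hξ1 hξ2 hs' ht' rfl)
    _ = t := ZMod.card t

end
end

section
/- Let d ≥ 2 be an integer. There exists an infinite strictly decreasing sequence of rational numbers 1 > s₁/t₁ > s₂/t₂ > … > 0 (with sᵢ, tᵢ positive integers) such that for every i ≥ 1: tᵢ ≤ μ(d; sᵢ/tᵢ), and μ(d; ε) = μ(d; sᵢ/tᵢ) for every real ε ∈ [sᵢ/tᵢ, sᵢ₋₁/tᵢ₋₁), where s₀ = t₀ = 1. -/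
open Set

noncomputable section

open scoped NNReal

local instance : Fact ((0:ℝ) < 1) := ⟨one_pos⟩
local instance : DecidableEq (AddCircle (1:ℝ)) := Classical.decEq _

abbrev Circ := AddCircle (1:ℝ)

/-- covering with `n` cubes of side `ε`. -/
def Covers (d n : ℕ) (ε : ℝ) : Prop :=
  ∃ x0 : Fin n → (Fin d → AddCircle (1:ℝ)), (⋃ j, subCube d ε (x0 j)) = Set.univ

lemma torusCoverNum_def (d : ℕ) (ε : ℝ) :
    torusCoverNum d ε = sInf {n | Covers d n ε} := rfl

lemma covers_iff (d n : ℕ) (ε : ℝ) :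
    Covers d n ε ↔ ∃ x0 : Fin n → (Fin d → AddCircle (1:ℝ)),
      ∀ x : Fin d → AddCircle (1:ℝ), ∃ j, x ∈ subCube d ε (x0 j) := by
  unfold Covers
  refine exists_congr fun x0 => ?_
  rw [eq_univ_iff_forall]
  simp [mem_iUnion]

lemma Covers.mono {d n : ℕ} {ε ε' : ℝ} (h : Covers d n ε) (hee : ε ≤ ε') :
    Covers d n ε' := by
  rw [covers_iff] at h ⊢
  obtain ⟨x0, hx0⟩ := h
  refine ⟨x0, fun x => ?_⟩
  obtain ⟨j, hj⟩ := hx0 x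
  exact ⟨j, fun i => by obtain ⟨θ, h1, h2, h3⟩ := hj i; exact ⟨θ, h1, h2.trans hee, h3⟩⟩

lemma covers_grid (d : ℕ) {ε : ℝ} (hε : 0 < ε) : Covers d (⌈ε⁻¹⌉₊ ^ d) ε := by
  set N := ⌈ε⁻¹⌉₊ with hN
  have hN1 : 1 ≤ N := Nat.one_le_ceil_iff.mpr (by positivity)
  have hNε : ε⁻¹ ≤ (N : ℝ) := Nat.le_ceil _
  have hNinv : (N : ℝ)⁻¹ ≤ ε := by
    rw [inv_le_comm₀ (by exact_mod_cast hN1) hε]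
    exact hNε
  rw [covers_iff]
  refine ⟨fun j i => (((finFunctionFinEquiv.symm j i : ℕ) : ℝ) / N : ℝ), fun x => ?_⟩
  -- representatives
  set y : Fin d → ℝ := fun i => (AddCircle.equivIco 1 0 (x i) : ℝ) with hy
  have hymem : ∀ i, y i ∈ Ico (0:ℝ) 1 := fun i => by
    have := (AddCircle.equivIco 1 0 (x i)).2; simpa using this
  have hyx : ∀ i, ((y i : ℝ) : AddCircle (1:ℝ)) = x i := fun i =>
    (AddCircle.equivIco 1 0).symm_apply_apply (x i)
  have hk : ∀ i, ⌊y i * N⌋₊ < N := by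
    intro i
    have h1 : y i * N < N := by
      have := (hymem i).2
      have : y i * N < 1 * N := by
        apply mul_lt_mul_of_pos_right this (by exact_mod_cast hN1)
      simpa using this
    have h2 : (0:ℝ) ≤ y i * N := by
      have := (hymem i).1
      positivity
    exact (Nat.floor_lt h2).mpr (by exact_mod_cast h1)
  refine ⟨finFunctionFinEquiv (fun i => ⟨⌊y i * N⌋₊, hk i⟩), fun i => ?_⟩
  refine ⟨y i - (⌊y i * N⌋₊ : ℝ) / N, ?_, ?_, ?_⟩
  · have h0 : (⌊y i * N⌋₊ : ℝ) ≤ y i * N := Nat.floor_le (by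
      have := (hymem i).1; positivity)
    have hNpos : (0:ℝ) < N := by exact_mod_cast hN1
    rw [sub_nonneg, div_le_iff₀ hNpos]
    linarith
  · have h0 : y i * N < ⌊y i * N⌋₊ + 1 := Nat.lt_floor_add_one _
    have hNpos : (0:ℝ) < N := by exact_mod_cast hN1
    have h1 : y i ≤ ((⌊y i * N⌋₊ : ℝ) + 1) / N := by
      rw [le_div_iff₀ hNpos]; linarith
    have h2 : ((⌊y i * N⌋₊ : ℝ) + 1) / N = (⌊y i * N⌋₊ : ℝ) / N + (N:ℝ)⁻¹ := by
      field_simp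
    have : y i - (⌊y i * N⌋₊ : ℝ) / N ≤ (N:ℝ)⁻¹ := by
      rw [h2] at h1; linarith
    exact this.trans hNinv
  · simp only [Equiv.symm_apply_apply]
    rw [← hyx i]
    rw [show ∀ a b : ℝ, ((a:ℝ) : AddCircle (1:ℝ)) + ((b:ℝ) : AddCircle (1:ℝ)) = ((a+b:ℝ) : AddCircle (1:ℝ)) from fun a b => rfl]
    congr 1
    ring

lemma Covers.one_le {d n : ℕ} {ε : ℝ} (hd : 0 < d) (hε0 : 0 < ε) (hε1 : ε < 1)
    (h : Covers d n ε) : (1:ℝ) ≤ 2 * n * ε := by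
  rw [covers_iff] at h
  obtain ⟨x0, hx0⟩ := h
  set i0 : Fin d := ⟨0, hd⟩
  set c : Fin n → ℝ := fun j => (AddCircle.equivIco 1 0 (x0 j i0) : ℝ) with hc
  have hcmem : ∀ j, c j ∈ Ico (0:ℝ) 1 := fun j => by
    have := (AddCircle.equivIco 1 0 (x0 j i0)).2; simpa using this
  have hcx : ∀ j, ((c j : ℝ) : AddCircle (1:ℝ)) = x0 j i0 := fun j =>
    (AddCircle.equivIco 1 0).symm_apply_apply (x0 j i0)
  have key : Ico (0:ℝ) 1 ⊆ ⋃ j, (Icc (c j) (c j + ε) ∪ Icc (c j - 1) (c j - 1 + ε)) := by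
    intro z hz
    obtain ⟨j, hj⟩ := hx0 (fun _ => ((z : ℝ) : AddCircle (1:ℝ)))
    obtain ⟨θ, hθ0, hθε, hθz⟩ := hj i0
    rw [← hcx j] at hθz
    rw [show ((c j : ℝ) : AddCircle (1:ℝ)) + ((θ:ℝ) : AddCircle (1:ℝ)) = ((c j + θ : ℝ) : AddCircle (1:ℝ)) from rfl] at hθz
    have hθz' : ((z:ℝ) : AddCircle (1:ℝ)) = ((c j + θ : ℝ) : AddCircle (1:ℝ)) := hθz
    have hsub : ((z - (c j + θ) : ℝ) : AddCircle (1:ℝ)) = 0 := by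
      rw [show ((z - (c j + θ) : ℝ) : AddCircle (1:ℝ))
          = ((z:ℝ) : AddCircle (1:ℝ)) - ((c j + θ : ℝ) : AddCircle (1:ℝ)) from rfl,
        hθz', sub_self]
    rw [AddCircle.coe_eq_zero_iff] at hsub
    obtain ⟨m, hm⟩ := hsub
    have hm' : (m:ℝ) = z - (c j + θ) := by simpa using hm
    have hz0 := hz.1; have hz1 := hz.2
    have hcj0 := (hcmem j).1; have hcj1 := (hcmem j).2
    have hmlt : (-2:ℝ) < m := by linarith
    have hmgt : (m:ℝ) < 1 := by linarith
    have : m = 0 ∨ m = -1 := by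
      have h1 : (-2:ℤ) < m := by exact_mod_cast hmlt
      have h2 : m < 1 := by exact_mod_cast hmgt
      omega
    refine mem_iUnion.mpr ⟨j, ?_⟩
    rcases this with h0 | h1
    · left; rw [h0] at hm'; norm_num at hm'
      constructor <;> linarith
    · right; rw [h1] at hm'; norm_num at hm'
      constructor <;> linarith
  have hvol := (MeasureTheory.measure_mono key).trans
    (MeasureTheory.measure_iUnion_fintype_le MeasureTheory.volume _)
  rw [Real.volume_Ico] at hvol
  have hbound : ∀ j : Fin n, MeasureTheory.volume ((Icc (c j) (c j + ε) ∪ Icc (c j - 1) (c j - 1 + ε)))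
      ≤ ENNReal.ofReal ε + ENNReal.ofReal ε := by
    intro j
    refine (MeasureTheory.measure_union_le _ _).trans ?_
    rw [Real.volume_Icc, Real.volume_Icc]
    simp
  have hvol2 : ENNReal.ofReal (1 - 0) ≤ ∑ _j : Fin n, (ENNReal.ofReal ε + ENNReal.ofReal ε) :=
    hvol.trans (Finset.sum_le_sum fun j _ => hbound j)
  rw [Finset.sum_const, Finset.card_univ, Fintype.card_fin] at hvol2
  have : ENNReal.ofReal 1 ≤ ENNReal.ofReal (2 * n * ε) := by
    calc ENNReal.ofReal 1 = ENNReal.ofReal (1 - 0) := by norm_num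
    _ ≤ n • (ENNReal.ofReal ε + ENNReal.ofReal ε) := hvol2
    _ = ENNReal.ofReal (2 * n * ε) := by
        rw [← ENNReal.ofReal_add hε0.le hε0.le, nsmul_eq_mul,
          ← ENNReal.ofReal_natCast n, ← ENNReal.ofReal_mul (by positivity)]
        congr 1; ring
  rwa [ENNReal.ofReal_le_ofReal_iff (by positivity)] at this

/-- the arc `[0, c]` as a subset of the circle -/
def Arc (c : ℝ) : Set (AddCircle (1:ℝ)) := (fun θ : ℝ => (θ : AddCircle (1:ℝ))) '' Icc 0 c

lemma continuous_mk1 : Continuous (fun θ : ℝ => (θ : AddCircle (1:ℝ))) :=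
  continuous_quotient_mk'

lemma arc_compact (c : ℝ) : IsCompact (Arc c) :=
  (isCompact_Icc).image continuous_mk1

lemma arc_mono {c c' : ℝ} (h : c ≤ c') : Arc c ⊆ Arc c' :=
  image_mono (Icc_subset_Icc le_rfl h)

lemma mem_subCube_iff {d : ℕ} {ε : ℝ} {x0 x : Fin d → AddCircle (1:ℝ)} :
    x ∈ subCube d ε x0 ↔ ∀ i, x i - x0 i ∈ Arc ε := by
  unfold subCube Arc
  refine forall_congr' fun i => ?_
  constructor
  · rintro ⟨θ, h0, h1, h2⟩
    exact ⟨θ, ⟨h0, h1⟩, by rw [h2]; abel⟩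
  · rintro ⟨θ, ⟨h0, h1⟩, h2⟩
    refine ⟨θ, h0, h1, ?_⟩
    have h2' : (θ : AddCircle (1:ℝ)) = x i - x0 i := h2
    exact sub_eq_iff_eq_add'.mp h2'.symm

lemma covers_of_forall_gt {d m : ℕ} {a b : ℝ} (ha : 0 < a) (hab : a < b)
    (h : ∀ ε, a < ε → ε < b → Covers d m ε) : Covers d m a := by
  set δ : ℕ → ℝ := fun n => (b - a) / (n + 2) with hδ
  have hδpos : ∀ n, 0 < δ n := fun n => by
    apply div_pos (by linarith) (by positivity)
  have hδlt : ∀ n, a + δ n < b := by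
    intro n
    have : δ n < b - a := by
      rw [hδ]
      rw [div_lt_iff₀ (by positivity)]
      nlinarith [sub_pos.mpr hab]
    linarith
  have hδanti : ∀ n, δ (n+1) ≤ δ n := by
    intro n
    apply div_le_div_of_nonneg_left (by linarith) (by positivity) (by push_cast; linarith)
  have hδanti' : Antitone δ := antitone_nat_of_succ_le hδanti
  set K : ℕ → Set (Fin m → Fin d → AddCircle (1:ℝ)) :=
    fun n => {c | ∀ x : Fin d → AddCircle (1:ℝ), ∃ j, ∀ i, x i - c j i ∈ Arc (a + δ n)} with hK
  have hKne : ∀ n, (K n).Nonempty := by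
    intro n
    obtain ⟨x0, hx0⟩ := (covers_iff d m _).mp (h (a + δ n) (by linarith [hδpos n]) (hδlt n))
    exact ⟨x0, fun x => by
      obtain ⟨j, hj⟩ := hx0 x
      exact ⟨j, fun i => (mem_subCube_iff.mp hj) i⟩⟩
  have hKcl : ∀ n, IsClosed (K n) := by
    intro n
    have : K n = ⋂ x : Fin d → AddCircle (1:ℝ),
        ⋃ j : Fin m, ⋂ i : Fin d, (fun c : Fin m → Fin d → AddCircle (1:ℝ) => x i - c j i) ⁻¹' Arc (a + δ n) := by
      ext c; simp [hK]
    rw [this]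
    refine isClosed_iInter fun x => ?_
    refine isClosed_iUnion_of_finite fun j => ?_
    refine isClosed_iInter fun i => ?_
    apply IsClosed.preimage
    · exact continuous_const.sub ((continuous_apply i).comp (continuous_apply j))
    · exact (arc_compact _).isClosed
  have hKanti : ∀ n, K (n+1) ⊆ K n := by
    intro n c hc x
    obtain ⟨j, hj⟩ := hc x
    exact ⟨j, fun i => arc_mono (by linarith [hδanti n]) (hj i)⟩
  have hne := IsCompact.nonempty_iInter_of_sequence_nonempty_isCompact_isClosed K hKanti hKne
    ((hKcl 0).isCompact) hKcl
  obtain ⟨c, hc⟩ := hne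
  simp only [mem_iInter] at hc
  rw [covers_iff]
  refine ⟨c, fun x => ?_⟩
  -- pigeonhole a single j working for infinitely many n
  have hJ : ∀ n : ℕ, ∃ j, ∀ i, x i - c j i ∈ Arc (a + δ n) := fun n => hc n x
  choose J hJ2 using hJ
  obtain ⟨j, hjinf⟩ := Finite.exists_infinite_fiber J
  have hjinf' : (J ⁻¹' {j}).Infinite := Set.infinite_coe_iff.mp hjinf
  refine ⟨j, mem_subCube_iff.mpr fun i => ?_⟩
  -- x i - c j i ∈ Arc (a + δ n) for all n
  have hmem : ∀ n, x i - c j i ∈ Arc (a + δ n) := by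
    intro n
    obtain ⟨n', hn', hnn'⟩ := hjinf'.exists_gt n
    have : J n' = j := hn'
    have h1 := hJ2 n' i
    rw [this] at h1
    exact arc_mono (by linarith [hδanti' (le_of_lt hnn')]) h1
  -- conclude membership in Arc a by compactness in ℝ
  set R : ℕ → Set ℝ := fun n => {θ | θ ∈ Icc 0 (a + δ n) ∧ (θ : AddCircle (1:ℝ)) = x i - c j i} with hR
  have hRne : ∀ n, (R n).Nonempty := by
    intro n
    obtain ⟨θ, hθ1, hθ2⟩ := hmem n
    exact ⟨θ, hθ1, hθ2⟩
  have hRcl : ∀ n, IsClosed (R n) := by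
    intro n
    apply IsClosed.inter isClosed_Icc
    exact isClosed_eq continuous_mk1 continuous_const
  have hRanti : ∀ n, R (n+1) ⊆ R n := by
    intro n θ hθ
    exact ⟨⟨hθ.1.1, hθ.1.2.trans (by linarith [hδanti n])⟩, hθ.2⟩
  have hRcomp : IsCompact (R 0) := IsCompact.of_isClosed_subset isCompact_Icc (hRcl 0)
    (fun θ hθ => hθ.1)
  obtain ⟨θ, hθ⟩ := IsCompact.nonempty_iInter_of_sequence_nonempty_isCompact_isClosed R hRanti hRne
    hRcomp hRcl
  simp only [mem_iInter] at hθ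
  have hθa : θ ≤ a := by
    by_contra hcon
    push_neg at hcon
    obtain ⟨n, hn⟩ := exists_nat_gt ((b - a) / (θ - a))
    have h1 : δ n < θ - a := by
      rw [hδ, div_lt_iff₀ (by positivity)]
      rw [div_lt_iff₀ (by linarith)] at hn
      nlinarith [sub_pos.mpr hcon, sub_pos.mpr hab]
    have := (hθ n).1.2
    linarith
  exact ⟨θ, ⟨(hθ 0).1.1, hθa⟩, (hθ 0).2⟩

def chainP (E : Finset Circ) (e : Circ) (x : Circ) (k : ℕ) : Prop :=
  ∀ l : ℕ, 1 ≤ l → l ≤ k → x - l • e ∈ E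

def depth (m : ℕ) (E : Finset Circ) (e : Circ) (x : Circ) : ℕ :=
  letI : DecidablePred (chainP E e x) := Classical.decPred _
  Nat.findGreatest (chainP E e x) m

lemma chainP_zero (E : Finset Circ) (e x : Circ) : chainP E e x 0 :=
  fun l h1 h0 => absurd (h1.trans h0) (by norm_num)

lemma depth_le (m : ℕ) (E : Finset Circ) (e x : Circ) : depth m E e x ≤ m := by
  letI : DecidablePred (chainP E e x) := Classical.decPred _
  unfold depth; exact Nat.findGreatest_le m

lemma chainP_depth (m : ℕ) (E : Finset Circ) (e x : Circ) :
    chainP E e x (depth m E e x) := by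
  letI : DecidablePred (chainP E e x) := Classical.decPred _
  unfold depth
  exact Nat.findGreatest_spec (Nat.zero_le m) (chainP_zero E e x)

lemma le_depth {m k : ℕ} (E : Finset Circ) (e x : Circ) (hk : k ≤ m)
    (h : chainP E e x k) : k ≤ depth m E e x := by
  letI : DecidablePred (chainP E e x) := Classical.decPred _
  unfold depth
  exact Nat.le_findGreatest hk h

lemma depth_lt {m : ℕ} {E : Finset Circ} {e : Circ} (hcard : E.card ≤ m)
    (he : ∀ k : ℕ, 1 ≤ k → k ≤ m → k • e ≠ 0) {x : Circ} (hx : x ∈ E) :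
    depth m E e x < m := by
  rcases Nat.lt_or_ge (depth m E e x) m with h | h
  · exact h
  exfalso
  have hd : depth m E e x = m := le_antisymm (depth_le _ _ _ _) h
  have hch : chainP E e x m := hd ▸ chainP_depth m E e x
  have hmap : ∀ l ∈ Finset.range (m+1), x - l • e ∈ E := by
    intro l hl
    rcases Nat.eq_zero_or_pos l with h0 | h0
    · simpa [h0] using hx
    · exact hch l h0 (by simpa [Nat.lt_succ_iff] using hl)
  obtain ⟨l₁, hl₁, l₂, hl₂, hne, heq⟩ :=
    Finset.exists_ne_map_eq_of_card_lt_of_maps_to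
      (by simpa using Nat.lt_succ_of_le hcard) hmap
  wlog hlt : l₁ < l₂ generalizing l₁ l₂
  · exact this l₂ hl₂ l₁ hl₁ hne.symm heq.symm (by omega)
  have h2 : (l₁:ℕ) • e = l₂ • e := sub_right_injective heq
  have h3 : (l₂ - l₁) • e = 0 := by
    rw [sub_nsmul e hlt.le, ← h2]
    abel
  exact he (l₂ - l₁) (by omega)
    (by have := Finset.mem_range.mp hl₂; omega) h3

lemma depth_succ {m : ℕ} {E : Finset Circ} {e : Circ} (hcard : E.card ≤ m)
    (he : ∀ k : ℕ, 1 ≤ k → k ≤ m → k • e ≠ 0) {x : Circ} (hx : x ∈ E) :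
    depth m E e x + 1 ≤ depth m E e (x + e) := by
  apply le_depth _ _ _ (depth_lt hcard he hx)
  intro l h1 h2
  rcases Nat.lt_or_ge l 2 with hl | hl
  · have : l = 1 := by omega
    simpa [this] using hx
  · have h4 := chainP_depth m E e x (l - 1) (by omega) (by omega)
    have h5 : (x + e) - l • e = x - (l - 1) • e := by
      rw [sub_nsmul e (by omega : 1 ≤ l)]
      simp
      abel
    rwa [h5]

lemma circ_norm_le_one (z : Circ) : ‖z‖ ≤ 1 := by
  have h1 : ((AddCircle.equivIco 1 0 z : ℝ) : Circ) = z :=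
    (AddCircle.equivIco 1 0).symm_apply_apply z
  have h2 : (AddCircle.equivIco 1 0 z : ℝ) ∈ Ico (0:ℝ) 1 := by
    have := (AddCircle.equivIco 1 0 z).2; simpa using this
  calc ‖z‖ = ‖((AddCircle.equivIco 1 0 z : ℝ) : Circ)‖ := by rw [h1]
    _ ≤ ‖(AddCircle.equivIco 1 0 z : ℝ)‖ := QuotientAddGroup.norm_mk_le_norm
    _ ≤ 1 := by rw [Real.norm_eq_abs, abs_le]; constructor <;> [linarith [h2.1]; linarith [h2.2]]

lemma circ_dist_le_one (x y : Circ) : dist x y ≤ 1 := by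
  rw [dist_eq_norm]; exact circ_norm_le_one _

lemma circ_dist_mk_le (r r' : ℝ) : dist ((r:ℝ) : Circ) ((r':ℝ) : Circ) ≤ |r - r'| := by
  rw [dist_eq_norm]
  rw [show ((r:ℝ) : Circ) - ((r':ℝ) : Circ) = ((r - r' : ℝ) : Circ) from rfl]
  calc ‖((r - r' : ℝ) : Circ)‖ ≤ ‖r - r'‖ := QuotientAddGroup.norm_mk_le_norm
    _ = |r - r'| := Real.norm_eq_abs _

variable (S : Finset Circ) (hS : S.Nonempty) (G : Circ → ℝ)

def pert (x : Circ) : ℝ := S.sup' hS (fun s => G s - (1/2) * dist x s)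

lemma le_pert {s : Circ} (hs : s ∈ S) (x : Circ) :
    G s - (1/2) * dist x s ≤ pert S hS G x := by
  unfold pert
  exact Finset.le_sup' (fun s => G s - (1/2) * dist x s) hs

lemma pert_le {x : Circ} {a : ℝ} (h : ∀ s ∈ S, G s - (1/2) * dist x s ≤ a) :
    pert S hS G x ≤ a := by
  unfold pert
  exact Finset.sup'_le _ _ h

lemma pert_le_add (x y : Circ) : pert S hS G x ≤ pert S hS G y + (1/2) * dist x y := by
  apply pert_le
  intro s hs
  have h1 : G s - (1/2) * dist y s ≤ pert S hS G y := le_pert S hS G hs y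
  have h2 : dist y s ≤ dist y x + dist x s := dist_triangle _ _ _
  have h3 : dist y x = dist x y := dist_comm _ _
  linarith

lemma pert_abs_sub_le (x y : Circ) : |pert S hS G x - pert S hS G y| ≤ (1/2) * dist x y := by
  rw [abs_sub_le_iff]
  constructor
  · linarith [pert_le_add S hS G x y]
  · have := pert_le_add S hS G y x
    rw [dist_comm] at this
    linarith

lemma pert_continuous : Continuous (pert S hS G) := by
  have : LipschitzWith (1/2 : ℝ≥0) (pert S hS G) := by
    apply LipschitzWith.of_dist_le_mul
    intro x y
    rw [Real.dist_eq]
    have := pert_abs_sub_le S hS G x y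
    calc |pert S hS G x - pert S hS G y| ≤ (1/2) * dist x y := this
      _ = ((1/2 : ℝ≥0) : ℝ) * dist x y := by norm_num
  exact this.continuous

lemma pert_eq_of (hG : ∀ s ∈ S, ∀ s' ∈ S, s ≠ s' → G s' - G s ≤ (1/2) * dist s s')
    {s : Circ} (hs : s ∈ S) : pert S hS G s = G s := by
  apply le_antisymm
  · apply pert_le
    intro s' hs'
    rcases eq_or_ne s s' with rfl | hne
    · simp
    · have := hG s hs s' hs' hne
      linarith [dist_nonneg (x := s) (y := s')]
  · have : G s - (1/2) * dist s s ≤ pert S hS G s := le_pert S hS G hs s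
    simpa using this

lemma pert_le_zero (hG : ∀ s ∈ S, G s ≤ 0) (x : Circ) : pert S hS G x ≤ 0 := by
  apply pert_le
  intro s hs
  have := dist_nonneg (x := x) (y := s)
  have := hG s hs
  linarith

lemma pert_lower (x : Circ) {s₀ : Circ} (hs₀ : s₀ ∈ S) :
    G s₀ - 1 ≤ pert S hS G x := by
  have h1 : G s₀ - (1/2) * dist x s₀ ≤ pert S hS G x := le_pert S hS G hs₀ x
  have h2 := circ_dist_le_one x s₀
  have := dist_nonneg (x := x) (y := s₀)
  linarith

def warp : ℝ → ℝ := fun r => r + pert S hS G ((r : ℝ) : Circ)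

lemma warp_continuous : Continuous (warp S hS G) :=
  continuous_id.add ((pert_continuous S hS G).comp continuous_quotient_mk')

lemma warp_mono : Monotone (warp S hS G) := by
  intro r r' h
  unfold warp
  have h1 := pert_abs_sub_le S hS G ((r':ℝ) : Circ) ((r:ℝ) : Circ)
  have h2 := circ_dist_mk_le r' r
  rw [abs_le] at h1
  have h3 : |r' - r| = r' - r := abs_of_nonneg (by linarith)
  nlinarith [h1.1]

lemma warp_add_int (r : ℝ) (n : ℤ) : warp S hS G (r + n) = warp S hS G r + n := by
  unfold warp
  have : ((r + n : ℝ) : Circ) = ((r : ℝ) : Circ) := by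
    have hn : (((n:ℝ) : ℝ) : Circ) = 0 := by
      rw [AddCircle.coe_eq_zero_iff]
      exact ⟨n, by simp⟩
    rw [show ((r + n : ℝ) : Circ) = ((r:ℝ) : Circ) + (((n:ℝ):ℝ) : Circ) from rfl, hn, add_zero]
  rw [this]; ring

lemma warp_surjective : Function.Surjective (warp S hS G) := by
  intro y
  set C : ℝ := S.sup' hS (fun s => |G s|) + 1 with hC
  have hC0 : 0 < C := by
    have : 0 ≤ S.sup' hS (fun s => |G s|) := by
      obtain ⟨s, hs⟩ := hS.exists_mem
      exact le_trans (abs_nonneg (G s)) (Finset.le_sup' (fun s => |G s|) hs)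
    linarith
  have hup : ∀ x, pert S hS G x ≤ C := by
    intro x
    apply pert_le
    intro s hs
    have h1 : |G s| ≤ S.sup' hS (fun s => |G s|) := Finset.le_sup' (fun s => |G s|) hs
    have := abs_nonneg (G s)
    have := dist_nonneg (x := x) (y := s)
    have := le_abs_self (G s)
    linarith
  have hlo : ∀ x, -C ≤ pert S hS G x := by
    intro x
    obtain ⟨s, hs⟩ := hS.exists_mem
    have h1 := pert_lower S hS G x hs
    have h2 : |G s| ≤ S.sup' hS (fun s => |G s|) := Finset.le_sup' (fun s => |G s|) hs
    have := neg_abs_le (G s)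
    linarith
  have h1 : warp S hS G (y - C) ≤ y := by
    unfold warp; linarith [hup (((y - C : ℝ)) : Circ)]
  have h2 : y ≤ warp S hS G (y + C) := by
    unfold warp; linarith [hlo (((y + C : ℝ)) : Circ)]
  have hsub := intermediate_value_Icc (by linarith : y - C ≤ y + C)
    ((warp_continuous S hS G).continuousOn)
  obtain ⟨r, _, hr⟩ := hsub ⟨h1, h2⟩
  exact ⟨r, hr⟩

lemma covers_shrink {d m : ℕ} {ε : ℝ} (hm : 0 < m) (hε0 : 0 < ε)
    (hcov : Covers d m ε)
    (he : ∀ k : ℕ, 1 ≤ k → k ≤ m → k • ((ε : ℝ) : Circ) ≠ 0) :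
    ∃ δ : ℝ, 0 < δ ∧ δ < ε ∧ Covers d m (ε - δ) := by
  obtain ⟨x0, hx0⟩ := (covers_iff d m ε).mp hcov
  set e : Circ := ((ε : ℝ) : Circ) with hedef
  haveI : Nonempty (Fin m) := ⟨⟨0, hm⟩⟩
  set E : Fin d → Finset Circ := fun i => Finset.image (fun j => x0 j i) Finset.univ with hE
  have hEne : ∀ i, (E i).Nonempty := fun i =>
    (Finset.univ_nonempty).image _
  have hEcard : ∀ i, (E i).card ≤ m := fun i =>
    le_trans (Finset.card_image_le) (by simp)
  set S : Fin d → Finset Circ := fun i => E i ∪ (E i).image (· + e) with hS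
  have hSne : ∀ i, (S i).Nonempty := fun i => (hEne i).mono Finset.subset_union_left
  set T : Finset Circ := Finset.univ.biUnion (fun i : Fin d => S i) with hT
  have hST : ∀ i, S i ⊆ T := fun i => Finset.subset_biUnion_of_mem _ (Finset.mem_univ i)
  set P : Finset ℝ :=
    insert (1:ℝ) (((T ×ˢ T).filter (fun p => p.1 ≠ p.2)).image (fun p => dist p.1 p.2)) with hP
  have hPne : P.Nonempty := Finset.insert_nonempty _ _
  set γ : ℝ := P.min' hPne with hγ
  have hγpos : 0 < γ := by
    rw [hγ, Finset.lt_min'_iff]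
    intro yv hy
    rcases Finset.mem_insert.mp hy with rfl | hy
    · norm_num
    · obtain ⟨p, hp, rfl⟩ := Finset.mem_image.mp hy
      exact dist_pos.mpr (Finset.mem_filter.mp hp).2
  have hγle : ∀ x ∈ T, ∀ y ∈ T, x ≠ y → γ ≤ dist x y := by
    intro x hx y hy hne
    apply Finset.min'_le
    exact Finset.mem_insert_of_mem (Finset.mem_image.mpr
      ⟨(x, y), Finset.mem_filter.mpr ⟨Finset.mem_product.mpr ⟨hx, hy⟩, hne⟩, rfl⟩)
  set δ : ℝ := min (ε/2) (γ/(2*m)) with hδ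
  have hδpos : 0 < δ := by
    apply lt_min (by linarith)
    apply div_pos hγpos
    positivity
  have hδε : δ < ε := lt_of_le_of_lt (min_le_left _ _) (by linarith)
  have hδm : δ * m ≤ γ / 2 := by
    have h1 : δ ≤ γ/(2*m) := min_le_right _ _
    have hm' : (0:ℝ) < m := by exact_mod_cast hm
    have h2 : δ * m ≤ (γ/(2*m)) * m := mul_le_mul_of_nonneg_right h1 hm'.le
    have h3 : (γ/(2*m)) * m = γ/2 := by field_simp
    linarith
  set G : Fin d → Circ → ℝ := fun i x => -(δ * (depth m (E i) e x)) with hG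
  have hGd : ∀ i, ∀ s ∈ S i, ∀ s' ∈ S i, s ≠ s' → G i s' - G i s ≤ (1/2) * dist s s' := by
    intro i s hs s' hs' hne
    have h1 : G i s' - G i s = δ * ((depth m (E i) e s : ℝ) - depth m (E i) e s') := by
      rw [hG]; ring
    have h2 : (depth m (E i) e s : ℝ) - depth m (E i) e s' ≤ m := by
      have := depth_le m (E i) e s
      have h3 : (depth m (E i) e s : ℝ) ≤ m := by exact_mod_cast this
      have h4 : (0:ℝ) ≤ depth m (E i) e s' := by positivity
      linarith
    have h5 : γ ≤ dist s s' := hγle s (hST i hs) s' (hST i hs') hne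
    have h6 : δ * ((depth m (E i) e s : ℝ) - depth m (E i) e s') ≤ δ * m := by
      apply mul_le_mul_of_nonneg_left h2 hδpos.le
    rw [h1]
    calc δ * ((depth m (E i) e s : ℝ) - depth m (E i) e s') ≤ δ * m := h6
      _ ≤ γ / 2 := hδm
      _ ≤ (1/2) * dist s s' := by linarith
  -- key inequality
  have hkey : ∀ i, ∀ b ∈ E i,
      pert (S i) (hSne i) (G i) (b + e) ≤ pert (S i) (hSne i) (G i) b - δ := by
    intro i b hb
    have hbS : b ∈ S i := Finset.mem_union_left _ hb
    have hbeS : b + e ∈ S i := Finset.mem_union_right _ (Finset.mem_image_of_mem _ hb)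
    rw [pert_eq_of (S i) (hSne i) (G i) (hGd i) hbS,
        pert_eq_of (S i) (hSne i) (G i) (hGd i) hbeS]
    have h1 := depth_succ (hEcard i) he hb
    have h2 : (depth m (E i) e b : ℝ) + 1 ≤ depth m (E i) e (b + e) := by exact_mod_cast h1
    rw [hG]
    simp only
    nlinarith
  -- representatives
  set rep : Fin m → Fin d → ℝ := fun j i => ((AddCircle.equivIco 1 0 (x0 j i)) : ℝ) with hrep
  have hrepx : ∀ j i, ((rep j i : ℝ) : Circ) = x0 j i := fun j i =>
    (AddCircle.equivIco 1 0).symm_apply_apply (x0 j i)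
  set w : Fin d → ℝ → ℝ := fun i => warp (S i) (hSne i) (G i) with hw
  refine ⟨δ, hδpos, hδε, ?_⟩
  rw [covers_iff]
  refine ⟨fun j i => ((w i (rep j i) : ℝ) : Circ), fun y => ?_⟩
  -- choose preimages
  have hsur : ∀ i, ∃ z : ℝ, w i z = ((AddCircle.equivIco 1 0 (y i)) : ℝ) := fun i =>
    warp_surjective (S i) (hSne i) (G i) _
  choose z hz using hsur
  obtain ⟨j, hj⟩ := hx0 (fun i => ((z i : ℝ) : Circ))
  refine ⟨j, fun i => ?_⟩
  obtain ⟨θ, hθ0, hθε, hθeq⟩ := hj i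
  have hθeq' : ((z i : ℝ) : Circ) = ((rep j i + θ : ℝ) : Circ) := by
    have : ((z i : ℝ) : Circ) = x0 j i + ((θ:ℝ) : Circ) := hθeq
    rw [this, ← hrepx j i]
    rfl
  have hzero : ((z i - (rep j i + θ) : ℝ) : Circ) = 0 := by
    rw [show ((z i - (rep j i + θ) : ℝ) : Circ)
        = ((z i : ℝ) : Circ) - ((rep j i + θ : ℝ) : Circ) from rfl, hθeq', sub_self]
  rw [AddCircle.coe_eq_zero_iff] at hzero
  obtain ⟨n, hn⟩ := hzero
  have hn' : (n:ℝ) = z i - (rep j i + θ) := by simpa using hn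
  have hzn : z i = (rep j i + θ) + n := by linarith
  -- monotonicity bounds
  have hmono := warp_mono (S i) (hSne i) (G i)
  have h1 : w i (rep j i) ≤ w i (rep j i + θ) := hmono (by linarith)
  have h2 : w i (rep j i + θ) ≤ w i (rep j i + ε) := hmono (by linarith)
  have h3 : w i (rep j i + ε) ≤ w i (rep j i) + ε - δ := by
    have hmem : x0 j i ∈ E i := Finset.mem_image_of_mem _ (Finset.mem_univ j)
    have hk := hkey i (x0 j i) hmem
    have e1 : w i (rep j i + ε) = rep j i + ε + pert (S i) (hSne i) (G i) (x0 j i + e) := by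
      rw [hw]
      simp only [warp]
      congr 2
      rw [show ((rep j i + ε : ℝ) : Circ) = ((rep j i : ℝ) : Circ) + ((ε:ℝ) : Circ) from rfl,
        hrepx j i]
    have e2 : w i (rep j i) = rep j i + pert (S i) (hSne i) (G i) (x0 j i) := by
      rw [hw]
      simp only [warp]
      congr 1
      rw [hrepx j i]
    rw [e1, e2]
    linarith
  set θ' : ℝ := w i (rep j i + θ) - w i (rep j i) with hθ'
  refine ⟨θ', by linarith, by linarith, ?_⟩
  -- final equality
  have hyi : y i = ((w i (z i) : ℝ) : Circ) := by
    rw [hz i]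
    exact ((AddCircle.equivIco 1 0).symm_apply_apply (y i)).symm
  rw [hyi, hzn]
  rw [show w i (rep j i + θ + (n:ℤ)) = w i (rep j i + θ) + (n:ℤ) from warp_add_int _ _ _ _ n]
  have : w i (rep j i + θ) = w i (rep j i) + θ' := by rw [hθ']; ring
  rw [this]
  rw [show ((w i (rep j i) + θ' + (n:ℤ) : ℝ) : Circ)
      = ((w i (rep j i) : ℝ) : Circ) + ((θ' : ℝ) : Circ) + (((n:ℤ) : ℝ) : Circ) from rfl]
  have hnz : (((n:ℤ) : ℝ) : Circ) = 0 := by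
    rw [AddCircle.coe_eq_zero_iff]
    exact ⟨n, by simp⟩
  rw [hnz, add_zero]

lemma coverSet_nonempty (d : ℕ) {ε : ℝ} (hε : 0 < ε) : {n | Covers d n ε}.Nonempty :=
  ⟨_, covers_grid d hε⟩

lemma covers_torusCoverNum (d : ℕ) {ε : ℝ} (hε : 0 < ε) :
    Covers d (torusCoverNum d ε) ε :=
  Nat.sInf_mem (coverSet_nonempty d hε)

lemma torusCoverNum_le {d n : ℕ} {ε : ℝ} (h : Covers d n ε) : torusCoverNum d ε ≤ n :=
  Nat.sInf_le h

lemma torusCoverNum_anti (d : ℕ) {ε ε' : ℝ} (hε : 0 < ε) (h : ε ≤ ε') :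
    torusCoverNum d ε' ≤ torusCoverNum d ε :=
  torusCoverNum_le ((covers_torusCoverNum d hε).mono h)

/-- The main construction step. -/
lemma exists_step (d : ℕ) (hd : 2 ≤ d) {r : ℝ} (hr0 : 0 < r) (hr1 : r ≤ 1) :
    ∃ s t : ℕ, 0 < s ∧ 0 < t ∧ 0 < (s:ℝ)/(t:ℝ) ∧
      (s:ℝ)/(t:ℝ) < r ∧
      t ≤ torusCoverNum d ((s:ℝ)/(t:ℝ)) ∧
      (∀ ε : ℝ, (s:ℝ)/(t:ℝ) ≤ ε → ε < r → torusCoverNum d ε = torusCoverNum d ((s:ℝ)/(t:ℝ))) := by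
  have hd0 : 0 < d := by omega
  set F : ℝ → ℕ := fun ε => torusCoverNum d ε with hF
  set V : Set ℕ := {n | ∃ ε : ℝ, 0 < ε ∧ ε < r ∧ F ε = n} with hV
  have hVne : V.Nonempty := ⟨F (r/2), r/2, by linarith, by linarith, rfl⟩
  set m : ℕ := sInf V with hm
  obtain ⟨ε₀, hε₀0, hε₀r, hε₀F⟩ : m ∈ V := Nat.sInf_mem hVne
  have hmle : ∀ ε : ℝ, 0 < ε → ε < r → m ≤ F ε := fun ε h1 h2 =>
    Nat.sInf_le ⟨ε, h1, h2, rfl⟩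
  set T : Set ℝ := {ε | 0 < ε ∧ ε < r ∧ F ε = m} with hT
  have hTne : T.Nonempty := ⟨ε₀, hε₀0, hε₀r, hε₀F⟩
  have hTbdd : BddBelow T := ⟨0, fun ε hε => hε.1.le⟩
  set a : ℝ := sInf T with ha
  have hm0 : 0 < m := by
    have h1 : (1:ℝ) ≤ 2 * m * ε₀ := by
      rw [← hε₀F]
      exact (covers_torusCoverNum d hε₀0).one_le hd0 hε₀0 (lt_of_lt_of_le hε₀r hr1)
    by_contra h
    push_neg at h
    interval_cases m
    norm_num at h1
  have hlb : ∀ ε ∈ T, 1/(2*(m:ℝ)) ≤ ε := by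
    intro ε hε
    obtain ⟨h1, h2, h3⟩ := hε
    have h4 : (1:ℝ) ≤ 2 * m * ε := by
      rw [← h3]
      exact (covers_torusCoverNum d h1).one_le hd0 h1 (lt_of_lt_of_le h2 hr1)
    rw [div_le_iff₀ (by positivity)]
    linarith
  have ha0 : 0 < a := lt_of_lt_of_le (by positivity) (le_csInf hTne hlb)
  have haε₀ : a ≤ ε₀ := csInf_le hTbdd ⟨hε₀0, hε₀r, hε₀F⟩
  have har : a < r := lt_of_le_of_lt haε₀ hε₀r
  have hTmem : ∀ ε : ℝ, a < ε → ε < r → F ε = m := by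
    intro ε h1 h2
    obtain ⟨ε', hε', hε'ε⟩ := exists_lt_of_csInf_lt hTne h1
    refine le_antisymm ?_ (hmle ε (lt_trans hε'.1 hε'ε) h2)
    calc F ε ≤ F ε' := torusCoverNum_anti d hε'.1 hε'ε.le
      _ = m := hε'.2.2
  have hcova : Covers d m a := by
    apply covers_of_forall_gt ha0 har
    intro ε h1 h2
    have := hTmem ε h1 h2
    rw [← this]
    exact covers_torusCoverNum d (lt_trans ha0 h1)
  have hFa : F a = m := le_antisymm (torusCoverNum_le hcova) (hmle a ha0 har)
  have hmin : ∀ ε : ℝ, 0 < ε → ε < a → ¬ Covers d m ε := by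
    intro ε h1 h2 hcov
    have h3 : F ε = m := le_antisymm (torusCoverNum_le hcov) (hmle ε h1 (lt_trans h2 har))
    have : a ≤ ε := csInf_le hTbdd ⟨h1, lt_trans h2 har, h3⟩
    linarith
  -- rationality
  have hrat : ∃ k : ℕ, 1 ≤ k ∧ k ≤ m ∧ k • ((a : ℝ) : Circ) = 0 := by
    by_contra hcon
    push_neg at hcon
    have he : ∀ k : ℕ, 1 ≤ k → k ≤ m → k • ((a : ℝ) : Circ) ≠ 0 := fun k h1 h2 =>
      hcon k h1 h2
    obtain ⟨δ, hδ0, hδa, hcov'⟩ := covers_shrink hm0 ha0 hcova he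
    exact hmin (a - δ) (by linarith) (by linarith) hcov'
  obtain ⟨k, hk1, hkm, hka⟩ := hrat
  have hka' : ((k * a : ℝ) : Circ) = 0 := by
    rw [← hka]
    have hns : ∀ (n : ℕ) (x : ℝ), (n • ((x:ℝ) : Circ)) = (((n • x : ℝ)) : Circ) := by
      intro n x
      induction n with
      | zero => simp
      | succ n ih =>
        rw [succ_nsmul, succ_nsmul, ih]
        rfl
    rw [hns, nsmul_eq_mul]
  rw [AddCircle.coe_eq_zero_iff] at hka'
  obtain ⟨z, hz⟩ := hka'
  have hz' : (z:ℝ) = k * a := by simpa using hz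
  have hzpos : 0 < z := by
    have hk0 : (0:ℝ) < k := by exact_mod_cast hk1
    have : (0:ℝ) < (z:ℝ) := by rw [hz']; positivity
    exact_mod_cast this
  have hk0 : (0:ℝ) < k := by exact_mod_cast hk1
  have hcast : ((z.toNat : ℕ) : ℝ) = (z : ℝ) := by
    have := Int.toNat_of_nonneg hzpos.le
    exact_mod_cast congrArg (fun w : ℤ => (w : ℝ)) this
  have hact : ((z.toNat : ℕ) : ℝ) / (k:ℝ) = a := by
    rw [hcast, hz']
    field_simp
  refine ⟨z.toNat, k, by omega, by omega, ?_, ?_, ?_, ?_⟩ <;> rw [hact]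
  · exact ha0
  · exact har
  · show k ≤ F a
    rw [hFa]; exact hkm
  · intro ε h1 h2
    rcases eq_or_lt_of_le h1 with rfl | h1'
    · rfl
    · show F ε = F a
      rw [hFa]
      exact hTmem ε h1' h2

/-- Lemma 1: there is an infinite decreasing sequence of positive rationals
`1 = s₀/t₀ > s₁/t₁ > s₂/t₂ > …` such that `tᵢ ≤ μ(d; sᵢ/tᵢ)` and `μ(d; ·)` is
constantly equal to `μ(d; sᵢ/tᵢ)` on `[sᵢ/tᵢ, sᵢ₋₁/tᵢ₋₁)`, for every `i ≥ 1`. -/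
theorem critical_sequence (d : ℕ) (hd : 2 ≤ d) :
    ∃ s t : ℕ → ℕ, s 0 = 1 ∧ t 0 = 1 ∧
      (∀ i, 0 < s i ∧ 0 < t i) ∧
      (∀ i, (s (i+1) : ℝ) / (t (i+1) : ℝ) < (s i : ℝ) / (t i : ℝ)) ∧
      (∀ i, t (i+1) ≤ torusCoverNum d ((s (i+1) : ℝ) / (t (i+1) : ℝ))) ∧
      (∀ i, ∀ ε : ℝ, (s (i+1) : ℝ) / (t (i+1) : ℝ) ≤ ε → ε < (s i : ℝ) / (t i : ℝ) →
        torusCoverNum d ε = torusCoverNum d ((s (i+1) : ℝ) / (t (i+1) : ℝ))) := by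
  classical
  have hstep : ∀ p : ℕ × ℕ, ∃ p' : ℕ × ℕ,
      (0 < p.1 ∧ 0 < p.2 ∧ (p.1:ℝ)/(p.2:ℝ) ≤ 1 ∧ 0 < (p.1:ℝ)/(p.2:ℝ)) →
      (0 < p'.1 ∧ 0 < p'.2 ∧ (p'.1:ℝ)/(p'.2:ℝ) ≤ 1 ∧ 0 < (p'.1:ℝ)/(p'.2:ℝ) ∧
        (p'.1:ℝ)/(p'.2:ℝ) < (p.1:ℝ)/(p.2:ℝ) ∧
        p'.2 ≤ torusCoverNum d ((p'.1:ℝ)/(p'.2:ℝ)) ∧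
        ∀ ε : ℝ, (p'.1:ℝ)/(p'.2:ℝ) ≤ ε → ε < (p.1:ℝ)/(p.2:ℝ) →
          torusCoverNum d ε = torusCoverNum d ((p'.1:ℝ)/(p'.2:ℝ))) := by
    intro p
    by_cases h : 0 < p.1 ∧ 0 < p.2 ∧ (p.1:ℝ)/(p.2:ℝ) ≤ 1 ∧ 0 < (p.1:ℝ)/(p.2:ℝ)
    · obtain ⟨s', t', h1, h2, h3, h4, h5, h6⟩ := exists_step d hd h.2.2.2 h.2.2.1
      exact ⟨(s', t'), fun _ =>
        ⟨h1, h2, le_of_lt (lt_of_lt_of_le h4 h.2.2.1), h3, h4, h5, h6⟩⟩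
    · exact ⟨(1,1), fun hc => absurd hc h⟩
  choose g hg using hstep
  set u : ℕ → ℕ × ℕ := fun n => g^[n] (1,1) with hu
  have hu0 : u 0 = (1,1) := rfl
  have husucc : ∀ n, u (n+1) = g (u n) := fun n => Function.iterate_succ_apply' g n (1,1)
  have hinv : ∀ n, 0 < (u n).1 ∧ 0 < (u n).2 ∧
      ((u n).1:ℝ)/((u n).2:ℝ) ≤ 1 ∧ 0 < ((u n).1:ℝ)/((u n).2:ℝ) := by
    intro n
    induction n with
    | zero => rw [hu0]; norm_num
    | succ n ih =>
      rw [husucc]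
      obtain ⟨a1, a2, a3, a4, _⟩ := hg (u n) ih
      exact ⟨a1, a2, a3, a4⟩
  refine ⟨fun n => (u n).1, fun n => (u n).2,
    by show (u 0).1 = 1; rw [hu0], by show (u 0).2 = 1; rw [hu0], ?_, ?_, ?_, ?_⟩
  · exact fun i => ⟨(hinv i).1, (hinv i).2.1⟩
  · intro i
    show ((u (i+1)).1 : ℝ)/((u (i+1)).2 : ℝ) < ((u i).1 : ℝ)/((u i).2 : ℝ)
    rw [husucc]
    exact (hg (u i) (hinv i)).2.2.2.2.1
  · intro i
    show (u (i+1)).2 ≤ torusCoverNum d (((u (i+1)).1 : ℝ)/((u (i+1)).2 : ℝ))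
    rw [husucc]
    exact (hg (u i) (hinv i)).2.2.2.2.2.1
  · intro i ε h1 h2
    have h1' : ((u (i+1)).1 : ℝ)/((u (i+1)).2 : ℝ) ≤ ε := h1
    have h2' : ε < ((u i).1 : ℝ)/((u i).2 : ℝ) := h2
    show torusCoverNum d ε = torusCoverNum d (((u (i+1)).1 : ℝ)/((u (i+1)).2 : ℝ))
    rw [husucc] at h1' ⊢
    exact (hg (u i) (hinv i)).2.2.2.2.2.2 ε h1' h2'

end
end

section
/- Let d ≥ 2 and r ≥ 2 be integers and let ε ∈ [1/r, 1/(r−1)) be real. Let s/t be the largest rational number with s/t ≤ ε and denominator t ≤ r^d. Then μ(d; ε) = μ₀(d; s, t). -/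
open Set

noncomputable section

/-- A discrete `sub-cube` of side `s` of `(ℤ/tℤ)^d` with base vertex `x0`. -/
def dCube (d s t : ℕ) (x0 : Fin d → ZMod t) : Set (Fin d → ZMod t) :=
  {x | ∀ i, ∃ j : ℕ, j < s ∧ x i = x0 i + (j : ZMod t)}

/-- `μ₀(d; s, t)`: the minimum number of discrete sub-cubes of side `s` covering `(ℤ/tℤ)^d`. -/
def discCoverNum (d s t : ℕ) : ℕ :=
  sInf {n : ℕ | ∃ x0 : Fin n → (Fin d → ZMod t),
    (⋃ j, dCube d s t (x0 j)) = Set.univ}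

namespace MuAux

lemma coe_eq_coe_iff (a b : ℝ) : (↑a : AddCircle (1:ℝ)) = ↑b ↔ ∃ k : ℤ, b - a = k := by
  rw [show ((↑a : AddCircle (1:ℝ)) = ↑b) ↔ _ from QuotientAddGroup.eq_iff_sub_mem,
    AddSubgroup.mem_zmultiples_iff]
  constructor
  · rintro ⟨k, hk⟩
    refine ⟨-k, ?_⟩
    have : (k : ℝ) * 1 = a - b := by rw [← hk]; simp [zsmul_eq_mul]
    push_cast
    linarith
  · rintro ⟨k, hk⟩
    refine ⟨-k, ?_⟩
    have : ((-k : ℤ) : ℝ) * 1 = a - b := by push_cast; linarith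
    rw [← this]; simp [zsmul_eq_mul]

lemma coe_add' (a b : ℝ) : ((a + b : ℝ) : AddCircle (1:ℝ)) = ↑a + ↑b := rfl

lemma exists_lift (x : AddCircle (1:ℝ)) : ∃ ξ : ℝ, 0 ≤ ξ ∧ ξ < 1 ∧ x = ↑ξ := by
  obtain ⟨y, rfl⟩ := QuotientAddGroup.mk_surjective x
  refine ⟨Int.fract y, Int.fract_nonneg y, Int.fract_lt_one y, ?_⟩
  rw [show (QuotientAddGroup.mk y : AddCircle (1:ℝ)) = (y : AddCircle (1:ℝ)) from rfl,
    coe_eq_coe_iff]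
  exact ⟨-⌊y⌋, by rw [Int.fract]; push_cast; ring⟩

lemma mem_torusSet_of_disc (d s t n : ℕ) (hs : 0 < s) (ht : 0 < t) (ε : ℝ)
    (hst : (s:ℝ)/t ≤ ε)
    (x0 : Fin n → Fin d → ZMod t)
    (hx0 : (⋃ j, dCube d s t (x0 j)) = Set.univ) :
    ∃ y0 : Fin n → (Fin d → AddCircle (1:ℝ)), (⋃ j, subCube d ε (y0 j)) = Set.univ := by
  haveI : NeZero t := ⟨ht.ne'⟩
  have htR : (0:ℝ) < t := by exact_mod_cast ht
  refine ⟨fun j i => ↑(((x0 j i).val : ℝ)/t), ?_⟩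
  rw [Set.eq_univ_iff_forall]
  intro x
  choose ξ hξ0 hξ1 hξe using fun i => exists_lift (x i)
  have hcover := Set.eq_univ_iff_forall.mp hx0 (fun i => ((⌊ξ i * t⌋ : ℤ) : ZMod t))
  rw [Set.mem_iUnion] at hcover
  obtain ⟨j, hj⟩ := hcover
  refine Set.mem_iUnion.2 ⟨j, fun i => ?_⟩
  obtain ⟨m, hm, hgm⟩ := hj i
  simp only [] at hgm
  set v := (x0 j i).val with hv
  have hzv : ((v : ℕ) : ZMod t) = x0 j i := ZMod.natCast_rightInverse (x0 j i)
  have hz : ((⌊ξ i * t⌋ : ℤ) : ZMod t) = ((v + m : ℤ) : ZMod t) := by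
    rw [hgm, ← hzv]; push_cast; ring
  obtain ⟨c, hc⟩ : (t:ℤ) ∣ (v + m - ⌊ξ i * t⌋) :=
    Int.ModEq.dvd ((ZMod.intCast_eq_intCast_iff _ _ _).1 hz)
  have hfl : (⌊ξ i * t⌋ : ℝ) ≤ ξ i * t := Int.floor_le _
  have hfu : ξ i * t < (⌊ξ i * t⌋ : ℝ) + 1 := Int.lt_floor_add_one _
  set θ : ℝ := ξ i - (v:ℝ)/t + c with hθ
  have hkeyR : ((v:ℝ) + m - ⌊ξ i * t⌋) = t * c := by exact_mod_cast hc
  have he : θ * t = ξ i * t - v + c * t := by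
    rw [hθ]; field_simp
  have h1 : (m:ℝ) ≤ θ * t := by linarith
  have h2 : θ * t < (m:ℝ) + 1 := by linarith
  have hsR : (m:ℝ) + 1 ≤ s := by exact_mod_cast hm
  have hθ0 : 0 ≤ θ := by nlinarith
  have hθε : θ ≤ ε := by
    have hse : (s:ℝ) ≤ ε * t := by
      rw [div_le_iff₀ htR] at hst; linarith
    nlinarith
  refine ⟨θ, hθ0, hθε, ?_⟩
  rw [hξe i, ← coe_add', coe_eq_coe_iff]
  exact ⟨c, by rw [hθ]; push_cast; ring⟩

lemma disc_set_mem (d s t : ℕ) (hs : 0 < s) (ht : 0 < t) :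
    t ^ d ∈ {n : ℕ | ∃ x0 : Fin n → (Fin d → ZMod t),
      (⋃ j, dCube d s t (x0 j)) = Set.univ} := by
  haveI : NeZero t := ⟨ht.ne'⟩
  have hcard : Fintype.card (Fin d → ZMod t) = t ^ d := by
    rw [Fintype.card_fun]; simp
  obtain e := Fintype.equivFinOfCardEq hcard
  refine ⟨fun j => e.symm j, Set.eq_univ_iff_forall.2 fun x => Set.mem_iUnion.2
    ⟨e x, fun i => ⟨0, hs, by simp⟩⟩⟩

lemma part1 (d s t : ℕ) (hs : 0 < s) (ht : 0 < t) (ε : ℝ) (hst : (s:ℝ)/t ≤ ε) :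
    torusCoverNum d ε ≤ discCoverNum d s t := by
  obtain ⟨x0, hx0⟩ := Nat.sInf_mem ⟨t^d, disc_set_mem d s t hs ht⟩
  obtain ⟨y0, hy0⟩ := mem_torusSet_of_disc d s t _ hs ht ε hst x0 hx0
  exact Nat.sInf_le ⟨y0, hy0⟩

lemma torus_set_mem (d r : ℕ) (hr : 0 < r) (ε : ℝ) (hε : 1/(r:ℝ) ≤ ε) :
    r ^ d ∈ {n : ℕ | ∃ x0 : Fin n → (Fin d → AddCircle (1:ℝ)),
      (⋃ j, subCube d ε (x0 j)) = Set.univ} := by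
  obtain ⟨x0, hx0⟩ := disc_set_mem d 1 r one_pos hr
  obtain ⟨y0, hy0⟩ := mem_torusSet_of_disc d 1 r _ one_pos hr ε (by
    rw [div_le_iff₀ (by exact_mod_cast hr)] at hε ⊢
    · push_cast; linarith) x0 hx0
  exact ⟨y0, hy0⟩

lemma percoord (n : ℕ) (hn : 0 < n) (ε : ℝ) (hε0 : 0 < ε) (hε1 : ε < 1) (a : Fin n → ℝ)
    (hcov : ∀ x : ℝ, ∃ j, Int.fract (x - a j) < ε) :
    ∃ (L W : ℕ) (f : ℕ → ℝ), 0 < L ∧ L ≤ n ∧ 0 < W ∧ (W:ℝ) ≤ L * ε ∧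
      (∀ k, k < L → 0 ≤ f k ∧ f k < 1) ∧
      (∀ k k', k < k' → k' < L → f k < f k') ∧
      (∀ j, (((Finset.range L).filter (fun p => Int.fract (f p - a j) < ε)).card ≤ W)) := by
  classical
  haveI : Nonempty (Fin n) := Fin.pos_iff_nonempty.mp hn
  set q : ℝ → Fin n → ℝ :=
    fun x j => if Int.fract (x - a j) ≤ ε then ε - Int.fract (x - a j) else 0 with hq
  set step : ℝ → ℝ := fun x => Finset.univ.sup' Finset.univ_nonempty (q x) with hstep
  set G : ℝ → ℝ := fun x => x + step x with hG
  have step_le : ∀ x, step x ≤ ε := by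
    intro x
    apply Finset.sup'_le
    intro j _
    rw [hq]
    dsimp only
    split
    · have := Int.fract_nonneg (x - a j); linarith
    · linarith
  have step_pos : ∀ x, 0 < step x := by
    intro x
    obtain ⟨j, hj⟩ := hcov x
    calc (0:ℝ) < ε - Int.fract (x - a j) := by linarith
    _ = q x j := by rw [hq]; simp only [if_pos hj.le]
    _ ≤ step x := Finset.le_sup' _ (Finset.mem_univ j)
  have G_lt : ∀ x, x < G x := fun x => by
    have := step_pos x; rw [hG]; simp only; linarith
  have G_le : ∀ x, G x ≤ x + ε := fun x => by
    have := step_le x; rw [hG]; simp only; linarith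
  have G_int : ∀ (x : ℝ) (k : ℤ), G (x + k) = G x + k := by
    intro x k
    have hs : step (x + k) = step x := by
      rw [hstep]
      simp only
      apply Finset.sup'_congr _ rfl
      intro j _
      rw [hq]
      simp only
      rw [show x + (k:ℝ) - a j = (x - a j) + k by ring, Int.fract_add_intCast]
    rw [hG]; simp only [hs]; ring
  have G_rep : ∀ x, ∃ j, Int.fract (x - a j) ≤ ε ∧
      G x = x + (ε - Int.fract (x - a j)) := by
    intro x
    obtain ⟨j, _, hj⟩ := Finset.exists_mem_eq_sup' (Finset.univ_nonempty) (q x)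
    have hjq : step x = q x j := hj
    by_cases h : Int.fract (x - a j) ≤ ε
    · refine ⟨j, h, ?_⟩
      rw [hG]; simp only [hjq]; rw [hq]; simp only [if_pos h]
    · exfalso
      have h2 := step_pos x
      rw [hjq, hq] at h2; simp only [if_neg h] at h2; exact lt_irrefl _ h2
  have G_mono : Monotone G := by
    intro x y hxy
    rcases le_or_gt (G x) y with h | h
    · exact le_trans h (G_lt y).le
    · obtain ⟨j, hjle, hjeq⟩ := G_rep x
      set φ := Int.fract (x - a j) with hφ
      have hφ0 : 0 ≤ φ := Int.fract_nonneg _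
      have h1 : x - a j = ⌊x - a j⌋ + φ := by rw [hφ, Int.fract]; ring
      have hylt : y < x + (ε - φ) := by rw [hjeq] at h; linarith
      have hfl : ⌊y - a j⌋ = ⌊x - a j⌋ := by
        rw [Int.floor_eq_iff]
        constructor
        · linarith
        · push_cast; linarith
      have hfr : Int.fract (y - a j) = φ + (y - x) := by
        rw [Int.fract, hfl]; linarith
      have hle2 : Int.fract (y - a j) ≤ ε := by rw [hfr]; linarith
      have : ε - Int.fract (y - a j) ≤ step y := by
        calc ε - Int.fract (y - a j) = q y j := by rw [hq]; simp only [if_pos hle2]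
        _ ≤ step y := Finset.le_sup' _ (Finset.mem_univ j)
      rw [hG] at hjeq ⊢
      simp only at hjeq ⊢
      rw [hfr] at this
      linarith
  -- the orbit
  set u : ℕ → ℝ := fun m => G^[m] 0 with hu
  have u_succ : ∀ m, u (m+1) = G (u m) := fun m => Function.iterate_succ_apply' G m 0
  have u_lt : ∀ m, u m < u (m+1) := fun m => by rw [u_succ]; exact G_lt _
  have u_mono : StrictMono u := strictMono_nat_of_lt_succ u_lt
  have u_step : ∀ m, u (m+1) ≤ u m + ε := fun m => by rw [u_succ]; exact G_le _
  have u_res : ∀ m : ℕ, ∃ j, Int.fract (u (m+1)) = Int.fract (a j + ε) := by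
    intro m
    obtain ⟨j, hjle, hjeq⟩ := G_rep (u m)
    refine ⟨j, ?_⟩
    rw [u_succ, hjeq]
    have : u m + (ε - Int.fract (u m - a j)) = (a j + ε) + (⌊u m - a j⌋ : ℤ) := by
      rw [Int.fract]; push_cast; ring
    rw [this, Int.fract_add_intCast]
  choose vres hres using u_res
  have hpig : ∃ p p' : ℕ, 1 ≤ p ∧ p < p' ∧ p' ≤ n + 1 ∧
      Int.fract (u p) = Int.fract (u p') := by
    obtain ⟨m, m', hne, heq⟩ := Fintype.exists_ne_map_eq_of_card_lt
      (fun m : Fin (n+1) => vres m) (by simp)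
    have key : Int.fract (u (↑m+1)) = Int.fract (u (↑m'+1)) := by
      rw [hres, hres, heq]
    have hmm' : (m:ℕ) ≠ (m':ℕ) := fun h => hne (Fin.ext h)
    rcases Nat.lt_or_ge (m:ℕ) (m':ℕ) with h | h
    · exact ⟨m+1, m'+1, by omega, by omega, by have := m'.isLt; omega, key⟩
    · exact ⟨m'+1, m+1, by omega, by omega, by have := m.isLt; omega, key.symm⟩
  obtain ⟨p₀, p₀', hp1, hplt, hple, hpeq⟩ := hpig
  have hPex : ∃ mm : ℕ, ∃ p, 1 ≤ p ∧ p < mm ∧ Int.fract (u p) = Int.fract (u mm) :=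
    ⟨p₀', p₀, hp1, hplt, hpeq⟩
  set m1 := Nat.find hPex with hm1
  obtain ⟨m0, hm01, hm0lt, hfr⟩ := Nat.find_spec hPex
  have hm1le : m1 ≤ n + 1 := by
    have : m1 ≤ p₀' := Nat.find_le ⟨p₀, hp1, hplt, hpeq⟩
    omega
  have hdist : ∀ p p', 1 ≤ p → p < p' → p' < m1 →
      Int.fract (u p) ≠ Int.fract (u p') := by
    intro p p' h1 h2 h3 he
    exact Nat.find_min hPex h3 ⟨p, h1, h2, he⟩
  set L := m1 - m0 with hL
  have hL0 : 0 < L := by omega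
  have hLn : L ≤ n := by omega
  have humlt : u m0 < u m1 := u_mono hm0lt
  set Wz : ℤ := ⌊u m1⌋ - ⌊u m0⌋ with hWzdef
  have hWr : u m1 - u m0 = (Wz : ℝ) := by
    have h2 : Int.fract (u m1) = Int.fract (u m0) := hfr.symm
    rw [Int.fract, Int.fract] at h2
    rw [hWzdef]; push_cast; linarith
  have hWz0 : 0 < Wz := by
    have : (0:ℝ) < (Wz:ℝ) := by rw [← hWr]; linarith
    exact_mod_cast this
  set W := Wz.toNat with hW
  have hW0 : 0 < W := by omega
  have hWzW : ((W:ℕ):ℤ) = Wz := Int.toNat_of_nonneg hWz0.le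
  have huW : u m1 = u m0 + (W:ℝ) := by
    have : ((W:ℕ):ℝ) = (Wz:ℝ) := by exact_mod_cast hWzW
    rw [this, ← hWr]; ring
  have hWLε : (W:ℝ) ≤ L * ε := by
    have hgrow : ∀ k : ℕ, u (m0 + k) ≤ u m0 + k * ε := by
      intro k
      induction k with
      | zero => simp
      | succ k ih =>
        have := u_step (m0 + k)
        push_cast
        calc u (m0 + (k+1)) = u ((m0 + k) + 1) := by ring_nf
        _ ≤ u (m0 + k) + ε := this
        _ ≤ u m0 + k * ε + ε := by linarith
        _ = u m0 + (k + 1) * ε := by ring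
    have := hgrow L
    rw [show m0 + L = m1 by omega, huW] at this
    linarith
  -- the bi-infinite periodic orbit
  have hLz : (0:ℤ) < (L:ℤ) := by exact_mod_cast hL0
  set z : ℤ → ℝ :=
    fun p => u (m0 + (p % (L:ℤ)).toNat) + ((p / (L:ℤ) : ℤ) : ℝ) * (W:ℝ) with hz
  have zmod_lt : ∀ p : ℤ, (p % (L:ℤ)).toNat < L := by
    intro p
    have h1 := Int.emod_nonneg p (ne_of_gt hLz)
    have h2 := Int.emod_lt_of_pos p hLz
    omega
  have z_nat : ∀ p : ℕ, p < L → z p = u (m0 + p) := by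
    intro p hp
    have h1 : (((p:ℕ):ℤ) % (L:ℤ)) = (p:ℤ) := Int.emod_eq_of_lt (by positivity) (by exact_mod_cast hp)
    have h2 : (((p:ℕ):ℤ) / (L:ℤ)) = 0 := Int.ediv_eq_zero_of_lt (by positivity) (by exact_mod_cast hp)
    rw [hz]; simp only [h1, h2]; push_cast; simp
  have z_shift : ∀ (p c : ℤ), z (p + c * L) = z p + c * W := by
    intro p c
    have h1 : (p + c * (L:ℤ)) % L = p % L := Int.add_mul_emod_self_right _ _ _
    have h2 : (p + c * (L:ℤ)) / L = p / L + c := Int.add_mul_ediv_right _ _ (ne_of_gt hLz)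
    rw [hz]; simp only [h1, h2]; push_cast; ring
  have z_rec : ∀ p : ℤ, z (p + 1) = G (z p) := by
    intro p
    obtain ⟨r, c, hrL, hpqr⟩ : ∃ (r : ℕ) (c : ℤ), r < L ∧ p = (r:ℤ) + c * L := by
      refine ⟨(p % (L:ℤ)).toNat, p / L, zmod_lt p, ?_⟩
      have h2 := Int.mul_ediv_add_emod p L
      have h1 : ((p % (L:ℤ)).toNat : ℤ) = p % L :=
        Int.toNat_of_nonneg (Int.emod_nonneg p (ne_of_gt hLz))
      rw [h1]; linarith
    subst hpqr
    have e3 : z ((r:ℤ) + c*L) = u (m0 + r) + (c:ℝ)*W := by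
      rw [z_shift, z_nat r hrL]
    have hGz : G (z ((r:ℤ) + c*L)) = u (m0 + r + 1) + (c:ℝ)*W := by
      rw [e3, show u (m0 + r) + (c:ℝ)*(W:ℝ) = u (m0+r) + ((c*W : ℤ):ℝ) from by push_cast; ring,
        G_int, ← u_succ]
      all_goals push_cast
      all_goals ring
    rcases Nat.lt_or_ge (r+1) L with hlt | hge
    · have hre : (r:ℤ) + c*L + 1 = ((r+1:ℕ):ℤ) + c*L := by push_cast; ring
      rw [hre, z_shift, z_nat _ hlt, hGz, ← Nat.add_assoc]
    · have hrL1 : r + 1 = L := by omega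
      have hre : (r:ℤ) + c*L + 1 = (0:ℤ) + (c+1)*L := by
        have : ((r:ℤ)) + 1 = (L:ℤ) := by exact_mod_cast hrL1
        push_cast
        linarith [this]
      have e2 : z (0:ℤ) = u m0 := by simpa using z_nat 0 hL0
      rw [hre, z_shift, hGz, e2, show m0 + r + 1 = m1 from by omega, huW]
      all_goals push_cast
      all_goals ring
  have z_lt : ∀ p : ℤ, z p < z (p+1) := fun p => by rw [z_rec]; exact G_lt _
  have z_mono : StrictMono z := strictMono_int_of_lt_succ z_lt
  have G_ge_arc : ∀ (j : Fin n) (k : ℤ), a j + k + ε ≤ G (a j + k) := by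
    intro j k
    have h0 : Int.fract (a j + (k:ℝ) - a j) = 0 := by
      rw [show a j + (k:ℝ) - a j = (0:ℝ) + k by ring, Int.fract_add_intCast, Int.fract_zero]
    have hb : ε - Int.fract (a j + (k:ℝ) - a j) ≤ step (a j + k) := by
      calc ε - Int.fract (a j + (k:ℝ) - a j)
          = q (a j + k) j := by rw [hq]; dsimp only; rw [if_pos (by rw [h0]; linarith)]
      _ ≤ step (a j + k) := Finset.le_sup' _ (Finset.mem_univ j)
    rw [h0] at hb
    have : G (a j + k) = a j + k + step (a j + k) := by rw [hG]
    linarith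
  have z_window : ∀ (j : Fin n) (k : ℤ) (p p' : ℤ),
      a j + k ≤ z p → z p < a j + k + ε → a j + k ≤ z p' → z p' < a j + k + ε →
      p = p' := by
    have key : ∀ (j : Fin n) (k : ℤ) (p p' : ℤ), p < p' →
        a j + k ≤ z p → a j + k ≤ z p' → z p' < a j + k + ε → False := by
      intro j k p p' hlt h1 h3 h4
      have hzz : z (p+1) ≤ z p' := z_mono.le_iff_le.mpr (by omega)
      have h5 : G (a j + (k:ℝ)) ≤ G (z p) := G_mono h1
      have h6 := G_ge_arc j k
      rw [← z_rec] at h5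
      linarith
    intro j k p p' h1 h2 h3 h4
    rcases lt_trichotomy p p' with h | h | h
    · exact absurd (key j k p p' h h1 h3 h4) (by simp)
    · exact h
    · exact absurd (key j k p' p h h3 h1 h2) (by simp)
  -- the Q2 bound on orbit residues
  haveI : NeZero W := ⟨by omega⟩
  have hQ2orb : ∀ j, (((Finset.range L).filter
      (fun p => Int.fract (u (m0+p) - a j) < ε)).card ≤ W) := by
    intro j
    have hmaps : ∀ p ∈ (Finset.range L).filter
        (fun p => Int.fract (u (m0+p) - a j) < ε),
        ((⌊u (m0+p) - a j⌋ : ℤ) : ZMod W) ∈ (Finset.univ : Finset (ZMod W)) :=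
      fun _ _ => Finset.mem_univ _
    have hinj : Set.InjOn (fun p => ((⌊u (m0+p) - a j⌋ : ℤ) : ZMod W))
        ((Finset.range L).filter (fun p => Int.fract (u (m0+p) - a j) < ε)) := by
      intro p hp p' hp' heq
      simp only [Finset.coe_filter, Set.mem_setOf_eq, Finset.mem_range] at hp hp'
      obtain ⟨hpL, hpf⟩ := hp
      obtain ⟨hp'L, hp'f⟩ := hp'
      obtain ⟨c, hcc⟩ : (W:ℤ) ∣ (⌊u (m0+p') - a j⌋ - ⌊u (m0+p) - a j⌋) :=
        Int.ModEq.dvd ((ZMod.intCast_eq_intCast_iff _ _ _).1 heq)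
      set B := ⌊u (m0+p) - a j⌋ with hB
      set B' := ⌊u (m0+p') - a j⌋ with hB'
      have hw1a : a j + (B:ℝ) ≤ z p := by
        rw [z_nat p hpL]; linarith [Int.floor_le (u (m0+p) - a j)]
      have hw1b : z p < a j + (B:ℝ) + ε := by
        rw [z_nat p hpL]
        have : Int.fract (u (m0+p) - a j) = u (m0+p) - a j - B := by rw [Int.fract]
        linarith
      have hzp'' : z ((p':ℤ) + (-c) * L) = z p' + (-(c:ℝ)) * W := by
        have := z_shift (p':ℤ) (-c)
        push_cast at this
        linarith [this]
      have hw2a : a j + (B:ℝ) ≤ z ((p':ℤ) + (-c) * L) := by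
        rw [hzp'', z_nat p' hp'L]
        have hBB : (B:ℝ) = (B':ℝ) - W * c := by
          have : (B' : ℝ) - B = (W:ℝ) * c := by exact_mod_cast hcc
          linarith
        rw [hBB]
        have := Int.floor_le (u (m0+p') - a j)
        push_cast
        linarith
      have hw2b : z ((p':ℤ) + (-c) * L) < a j + (B:ℝ) + ε := by
        rw [hzp'', z_nat p' hp'L]
        have hBB : (B:ℝ) = (B':ℝ) - W * c := by
          have : (B' : ℝ) - B = (W:ℝ) * c := by exact_mod_cast hcc
          linarith
        rw [hBB]
        have : Int.fract (u (m0+p') - a j) = u (m0+p') - a j - B' := by rw [Int.fract]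
        push_cast
        linarith
      have := z_window j B p ((p':ℤ) + (-c) * L) hw1a hw1b hw2a hw2b
      -- p = p' - c L
      have hcl : (c:ℤ) * L = (p':ℤ) - p := by linarith [this]
      have hc0 : c = 0 := by
        rcases lt_trichotomy c 0 with h | h | h
        · have hc1 : c ≤ -1 := by omega
          have : c * (L:ℤ) ≤ -1 * L := mul_le_mul_of_nonneg_right hc1 hLz.le
          have hp'0 : (0:ℤ) ≤ p' := by positivity
          have hpL' : (p:ℤ) < L := by exact_mod_cast hpL
          linarith
        · exact h
        · have hc1 : 1 ≤ c := by omega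
          have : 1 * (L:ℤ) ≤ c * L := mul_le_mul_of_nonneg_right hc1 hLz.le
          have hp0 : (0:ℤ) ≤ p := by positivity
          have hp'L' : (p':ℤ) < L := by exact_mod_cast hp'L
          linarith
      rw [hc0] at hcl
      have : (p:ℤ) = p' := by linarith
      exact_mod_cast this
    have := Finset.card_le_card_of_injOn _ hmaps hinj
    simpa [ZMod.card] using this
  -- sorted atoms
  set e : ℕ → ℝ := fun p => Int.fract (u (m0 + p)) with he
  have hinjE : Set.InjOn e (Finset.range L) := by
    intro p hp p' hp' heq
    simp only [Finset.coe_range, Set.mem_Iio] at hp hp'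
    by_contra hne
    rcases Nat.lt_or_ge p p' with h | h
    · exact hdist (m0+p) (m0+p') (by omega) (by omega) (by omega) heq
    · have h' : p' < p := by omega
      exact hdist (m0+p') (m0+p) (by omega) (by omega) (by omega) heq.symm
  set F : Finset ℝ := (Finset.range L).image e with hF
  have hcardF : F.card = L := by
    rw [hF, Finset.card_image_of_injOn hinjE, Finset.card_range]
  set f : ℕ → ℝ := fun k => if h : k < L then ((F.orderIsoOfFin hcardF) ⟨k, h⟩ : ℝ) else 0
    with hf
  have hfmem : ∀ k (h : k < L), f k ∈ F := by
    intro k h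
    rw [hf]; dsimp only; rw [dif_pos h]
    exact ((F.orderIsoOfFin hcardF) ⟨k, h⟩).2
  have hFico : ∀ w ∈ F, 0 ≤ w ∧ w < 1 := by
    intro w hw
    rw [hF, Finset.mem_image] at hw
    obtain ⟨p, _, rfl⟩ := hw
    exact ⟨Int.fract_nonneg _, Int.fract_lt_one _⟩
  have hfmono : ∀ k k', k < k' → k' < L → f k < f k' := by
    intro k k' hkk hk'
    rw [hf]; dsimp only
    rw [dif_pos (by omega), dif_pos hk']
    have : (⟨k, by omega⟩ : Fin L) < ⟨k', hk'⟩ := by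
      simp [Fin.lt_def]; omega
    exact (F.orderIsoOfFin hcardF).lt_iff_lt.mpr this
  -- image of f on range L is F
  have hfimg : (Finset.range L).image f = F := by
    apply Finset.eq_of_subset_of_card_le
    · intro w hw
      rw [Finset.mem_image] at hw
      obtain ⟨k, hk, rfl⟩ := hw
      exact hfmem k (Finset.mem_range.mp hk)
    · rw [hcardF]
      rw [Finset.card_image_of_injOn, Finset.card_range]
      intro k hk k' hk' heq
      simp only [Finset.coe_range, Set.mem_Iio] at hk hk'
      by_contra hne
      rcases Nat.lt_or_ge k k' with h | h
      · exact absurd heq (ne_of_lt (hfmono k k' h hk'))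
      · exact absurd heq.symm (ne_of_lt (hfmono k' k (by omega) hk))
  -- transfer of the filter cardinality
  have htrans : ∀ (P : ℝ → Prop) [DecidablePred P],
      ((Finset.range L).filter (fun p => P (f p))).card
      = ((Finset.range L).filter (fun p => P (e p))).card := by
    intro P hP
    have h1 : ((Finset.range L).filter (fun p => P (f p))).card = (F.filter P).card := by
      rw [← hfimg, Finset.filter_image]
      rw [Finset.card_image_of_injOn]
      intro k hk k' hk' heq
      simp only [Finset.coe_filter, Set.mem_setOf_eq, Finset.mem_range] at hk hk'
      by_contra hne
      rcases Nat.lt_or_ge k k' with h | h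
      · exact absurd heq (ne_of_lt (hfmono k k' h hk'.1))
      · exact absurd heq.symm (ne_of_lt (hfmono k' k (by omega) hk.1))
    have h2 : ((Finset.range L).filter (fun p => P (e p))).card = (F.filter P).card := by
      rw [hF, Finset.filter_image]
      rw [Finset.card_image_of_injOn]
      exact hinjE.mono (by intro x hx; simp only [Finset.coe_filter, Set.mem_setOf_eq,
        Finset.mem_range, Finset.coe_range, Set.mem_Iio] at hx ⊢; exact hx.1)
    rw [h1, h2]
  refine ⟨L, W, f, hL0, hLn, hW0, hWLε, ?_, hfmono, ?_⟩
  · intro k hk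
    exact hFico _ (hfmem k hk)
  · intro j
    have := htrans (fun w => Int.fract (w - a j) < ε)
    rw [this]
    have hsame : ∀ p, Int.fract (e p - a j) = Int.fract (u (m0+p) - a j) := by
      intro p
      rw [he]; dsimp only
      rw [show Int.fract (u (m0+p)) - a j = (u (m0+p) - a j) + ((-⌊u (m0+p)⌋ : ℤ):ℝ) from by
        rw [Int.fract]; push_cast; ring]
      rw [Int.fract_add_intCast]
    simp only [hsame]
    exact hQ2orb j

lemma endgame (d n s t : ℕ) (hs : 0 < s) (ht : 0 < t) (ε : ℝ) (hε1 : ε < 1)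
    (A : Fin n → Fin d → ℝ) (hA : ∀ j i, 0 ≤ A j i ∧ A j i < 1)
    (L W : Fin d → ℕ) (f : Fin d → ℕ → ℝ)
    (hL : ∀ i, 0 < L i) (hW : ∀ i, 0 < W i) (hQ1 : ∀ i, W i * t ≤ s * L i)
    (hf01 : ∀ i k, k < L i → 0 ≤ f i k ∧ f i k < 1)
    (hmono : ∀ i k k', k < k' → k' < L i → f i k < f i k')
    (hQ2 : ∀ i j, ((Finset.range (L i)).filter
      (fun p => Int.fract (f i p - A j i) < ε)).card ≤ W i)
    (hcov : ∀ x : Fin d → ℝ, ∃ j, ∀ i, Int.fract (x i - A j i) < ε) :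
    ∃ x0 : Fin n → Fin d → ZMod t, (⋃ j, dCube d s t (x0 j)) = Set.univ := by
  classical
  haveI : NeZero t := ⟨ht.ne'⟩
  set R : Fin n → Fin d → ℕ :=
    fun j i => ((Finset.range (L i)).filter (fun k => f i k < A j i)).card with hR
  set B : Fin n → Fin d → ℕ := fun j i => (R j i * t + L i - 1) / L i with hB
  refine ⟨fun j i => ((B j i : ℕ) : ZMod t), ?_⟩
  rw [Set.eq_univ_iff_forall]
  intro g
  set gv : Fin d → ℕ := fun i => (g i).val with hgv
  have hgvt : ∀ i, gv i < t := fun i => ZMod.val_lt _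
  set K : Fin d → ℕ := fun i => gv i * L i / t with hK
  have hKL : ∀ i, K i < L i := by
    intro i
    rw [hK]
    dsimp only
    rw [Nat.div_lt_iff_lt_mul ht]
    have h1 : gv i * L i < t * L i := mul_lt_mul_of_pos_right (hgvt i) (hL i)
    have h2 : t * L i = L i * t := Nat.mul_comm _ _
    linarith
  obtain ⟨j, hj⟩ := hcov (fun i => f i (K i))
  rw [Set.mem_iUnion]
  refine ⟨j, fun i => ?_⟩
  -- per-coordinate verification
  have hKLi := hKL i
  have hfK := hf01 i (K i) hKLi
  have hAji := hA j i
  set φ := Int.fract (f i (K i) - A j i) with hφ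
  have hφε : φ < ε := hj i
  have hφ0 : 0 ≤ φ := Int.fract_nonneg _
  set Tφ := (Finset.range (L i)).filter (fun k => Int.fract (f i k - A j i) < φ) with hTφ
  set cnt := Tφ.card with hcnt
  -- fract formulas
  have fract_ge : ∀ k, k < L i → A j i ≤ f i k →
      Int.fract (f i k - A j i) = f i k - A j i := by
    intro k hk hge
    exact Int.fract_eq_self.mpr ⟨by linarith, by linarith [(hf01 i k hk).2, hAji.1]⟩
  have fract_lt : ∀ k, k < L i → f i k < A j i →
      Int.fract (f i k - A j i) = f i k - A j i + 1 := by
    intro k hk hlt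
    have h0 : (0:ℝ) ≤ f i k - A j i + 1 := by linarith [(hf01 i k hk).1, hAji.2]
    have h1 : f i k - A j i + 1 < 1 := by linarith
    have e : Int.fract ((f i k - A j i) + ((1:ℤ):ℝ)) = f i k - A j i + 1 := by
      rw [show ((1:ℤ):ℝ) = (1:ℝ) by norm_num]
      exact Int.fract_eq_self.mpr ⟨h0, h1⟩
    rw [Int.fract_add_intCast] at e
    exact e
  -- monotonicity reflection
  have hlt_iff : ∀ k, k < L i → (f i k < f i (K i) ↔ k < K i) := by
    intro k hk
    constructor
    · intro h
      by_contra hge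
      push_neg at hge
      rcases Nat.lt_or_ge (K i) k with h' | h'
      · exact absurd h (not_lt.mpr (hmono i (K i) k h' hk).le)
      · have : k = K i := by omega
        rw [this] at h; exact lt_irrefl _ h
    · intro h
      exact hmono i k (K i) h hKLi
  have hcardlt : ((Finset.range (L i)).filter (fun k => f i k < f i (K i))).card = K i := by
    have e1 : (Finset.range (L i)).filter (fun k => f i k < f i (K i))
        = (Finset.range (L i)).filter (fun k => k < K i) := by
      apply Finset.filter_congr
      intro k hk
      rw [Finset.mem_range] at hk
      exact hlt_iff k hk
    rw [e1]
    have e2 : (Finset.range (L i)).filter (fun k => k < K i) = Finset.range (K i) := by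
      ext k
      simp only [Finset.mem_filter, Finset.mem_range]
      omega
    rw [e2, Finset.card_range]
  -- main counting relation
  set w : ℕ := if f i (K i) < A j i then 1 else 0 with hw
  have hRle : R j i ≤ L i := by
    rw [hR]
    calc ((Finset.range (L i)).filter (fun k => f i k < A j i)).card
        ≤ (Finset.range (L i)).card := Finset.card_filter_le _ _
    _ = L i := Finset.card_range _
  have hcntrel : cnt + R j i = K i + w * L i := by
    rcases le_or_gt (A j i) (f i (K i)) with hcase | hcase
    · -- no wrap
      have hw0 : w = 0 := by rw [hw, if_neg (not_lt.mpr hcase)]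
      have φeq : φ = f i (K i) - A j i := by rw [hφ]; exact fract_ge (K i) hKLi hcase
      have hTeq : Tφ = (Finset.range (L i)).filter
          (fun k => A j i ≤ f i k ∧ f i k < f i (K i)) := by
        rw [hTφ]
        apply Finset.filter_congr
        intro k hk
        rw [Finset.mem_range] at hk
        rcases le_or_gt (A j i) (f i k) with hge | hlt
        · rw [fract_ge k hk hge, φeq]
          constructor
          · intro h; exact ⟨hge, by linarith [h]⟩
          · intro h; linarith [h.2]
        · rw [fract_lt k hk hlt, φeq]
          constructor
          · intro h; exact absurd h (by push_neg; linarith [hfK.2, (hf01 i k hk).1])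
          · intro h; linarith [h.1]
      have hdisj : Disjoint ((Finset.range (L i)).filter
            (fun k => A j i ≤ f i k ∧ f i k < f i (K i)))
          ((Finset.range (L i)).filter (fun k => f i k < A j i)) := by
        rw [Finset.disjoint_left]
        intro k h1 h2
        rw [Finset.mem_filter] at h1 h2
        linarith [h1.2.1, h2.2]
      have hunion : ((Finset.range (L i)).filter
            (fun k => A j i ≤ f i k ∧ f i k < f i (K i)))
          ∪ ((Finset.range (L i)).filter (fun k => f i k < A j i))
          = (Finset.range (L i)).filter (fun k => f i k < f i (K i)) := by
        ext k
        simp only [Finset.mem_union, Finset.mem_filter, Finset.mem_range]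
        constructor
        · rintro (⟨h1, h2, h3⟩ | ⟨h1, h2⟩)
          · exact ⟨h1, h3⟩
          · exact ⟨h1, by linarith⟩
        · rintro ⟨h1, h2⟩
          rcases le_or_gt (A j i) (f i k) with hge | hlt
          · exact Or.inl ⟨h1, hge, h2⟩
          · exact Or.inr ⟨h1, hlt⟩
      have hcu := Finset.card_union_of_disjoint hdisj
      rw [hunion, hcardlt] at hcu
      have hRcard : R j i
          = ((Finset.range (L i)).filter (fun k => f i k < A j i)).card := by rw [hR]
      rw [hcnt, hTeq, hw0]
      omega
    · -- wrap
      have hw1 : w = 1 := by rw [hw, if_pos hcase]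
      have φeq : φ = f i (K i) - A j i + 1 := by rw [hφ]; exact fract_lt (K i) hKLi hcase
      have hTeq : Tφ = ((Finset.range (L i)).filter (fun k => A j i ≤ f i k))
          ∪ ((Finset.range (L i)).filter (fun k => f i k < f i (K i))) := by
        rw [hTφ]
        ext k
        simp only [Finset.mem_union, Finset.mem_filter, Finset.mem_range]
        constructor
        · rintro ⟨h1, h2⟩
          rcases le_or_gt (A j i) (f i k) with hge | hlt
          · exact Or.inl ⟨h1, hge⟩
          · rw [fract_lt k h1 hlt, φeq] at h2
            exact Or.inr ⟨h1, by linarith⟩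
        · rintro (⟨h1, h2⟩ | ⟨h1, h2⟩)
          · refine ⟨h1, ?_⟩
            rw [fract_ge k h1 h2, φeq]
            linarith [(hf01 i k h1).2, hfK.1]
          · refine ⟨h1, ?_⟩
            have hlt : f i k < A j i := by linarith
            rw [fract_lt k h1 hlt, φeq]
            linarith
      have hdisj : Disjoint ((Finset.range (L i)).filter (fun k => A j i ≤ f i k))
          ((Finset.range (L i)).filter (fun k => f i k < f i (K i))) := by
        rw [Finset.disjoint_left]
        intro k h1 h2
        rw [Finset.mem_filter] at h1 h2
        linarith [h1.2, h2.2]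
      have hcompl : ((Finset.range (L i)).filter (fun k => A j i ≤ f i k)).card
          + R j i = L i := by
        have e1 : (Finset.range (L i)).filter (fun k => A j i ≤ f i k)
            = (Finset.range (L i)).filter (fun k => ¬ (f i k < A j i)) := by
          apply Finset.filter_congr
          intro k _
          simp only [not_lt]
        have hfc := Finset.card_filter_add_card_filter_not
          (s := Finset.range (L i)) (p := fun k => f i k < A j i)
        rw [Finset.card_range] at hfc
        have hRcard : R j i
            = ((Finset.range (L i)).filter (fun k => f i k < A j i)).card := rfl
        rw [e1, hRcard]
        omega
      have hcu := Finset.card_union_of_disjoint hdisj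
      rw [hcnt, hTeq, hw1, hcu, hcardlt]
      omega
  -- cnt + 1 ≤ W i
  have hcntW : cnt + 1 ≤ W i := by
    have hKin : K i ∈ (Finset.range (L i)).filter
        (fun p => Int.fract (f i p - A j i) < ε) := by
      rw [Finset.mem_filter, Finset.mem_range]
      exact ⟨hKLi, by rw [← hφ]; exact hφε⟩
    have hKnot : K i ∉ Tφ := by
      rw [hTφ, Finset.mem_filter]
      rintro ⟨-, h⟩
      rw [← hφ] at h
      exact lt_irrefl _ h
    have hsub : insert (K i) Tφ ⊆ (Finset.range (L i)).filter
        (fun p => Int.fract (f i p - A j i) < ε) := by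
      intro k hk
      rcases Finset.mem_insert.mp hk with rfl | hk'
      · exact hKin
      · rw [hTφ, Finset.mem_filter] at hk'
        rw [Finset.mem_filter]
        exact ⟨hk'.1, by linarith [hk'.2]⟩
    have e1 : (insert (K i) Tφ).card = cnt + 1 := by
      rw [Finset.card_insert_of_notMem hKnot, hcnt]
    have e2 := Finset.card_le_card hsub
    have e3 := hQ2 i j
    omega
  -- integer endgame
  have hdm := Nat.div_add_mod (gv i * L i) t
  set ρ : ℕ := (gv i * L i) % t with hρ
  have hρt : ρ < t := Nat.mod_lt _ ht
  have hdm' : t * K i + ρ = gv i * L i := hdm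
  have hBdm := Nat.div_add_mod (R j i * t + L i - 1) (L i)
  have hBσ : (R j i * t + L i - 1) % L i < L i := Nat.mod_lt _ (hL i)
  have hBl : (R j i : ℤ) * t ≤ (L i : ℤ) * B j i := by
    have h1 : (L i) * (B j i) + (R j i * t + L i - 1) % L i = R j i * t + L i - 1 := hBdm
    have h2 := hL i
    omega
  have hBu : (L i : ℤ) * B j i ≤ (R j i : ℤ) * t + L i - 1 := by
    have h1 : (L i) * (B j i) + (R j i * t + L i - 1) % L i = R j i * t + L i - 1 := hBdm
    have h2 := hL i
    omega
  have hkey : (L i : ℤ) * (gv i + w * t) = ((R j i : ℤ) + cnt) * t + ρ := by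
    have h1 : (t:ℤ) * K i + ρ = gv i * L i := by exact_mod_cast hdm'
    have h2 : (cnt : ℤ) + R j i = K i + w * L i := by exact_mod_cast hcntrel
    linear_combination -h1 - (t:ℤ) * h2
  set M : ℤ := (gv i : ℤ) + w * t - B j i with hM
  have hM0 : 0 ≤ M := by
    by_contra hneg
    push_neg at hneg
    have hM1 : M ≤ -1 := by omega
    have h3 : (L i : ℤ) * (gv i + w * t) ≤ (L i : ℤ) * (B j i - 1) := by
      apply mul_le_mul_of_nonneg_left _ (Int.natCast_nonneg (L i))
      omega
    have h4 : (0:ℤ) ≤ (cnt : ℤ) * t :=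
      mul_nonneg (Int.natCast_nonneg _) (Int.natCast_nonneg _)
    have h5 : (0:ℤ) ≤ (ρ : ℤ) := Int.natCast_nonneg _
    have h6 : (L i : ℤ) * (B j i - 1) = (L i : ℤ) * B j i - L i := by ring
    linarith [hkey, hBu]
  have hMs : M < s := by
    have h3 : (L i : ℤ) * M = ((R j i : ℤ) + cnt) * t + ρ - (L i : ℤ) * B j i := by
      rw [hM]; linarith [hkey]
    have h4 : (L i : ℤ) * M ≤ (cnt : ℤ) * t + ρ := by
      have := hBl
      linarith
    have h5 : ((cnt : ℤ) + 1) * t ≤ (W i : ℤ) * t := by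
      apply mul_le_mul_of_nonneg_right _ (Int.natCast_nonneg t)
      exact_mod_cast hcntW
    have h6 : (W i : ℤ) * t ≤ (s : ℤ) * L i := by exact_mod_cast hQ1 i
    have h7 : (L i : ℤ) * M < (L i : ℤ) * s := by
      calc (L i : ℤ) * M ≤ (cnt : ℤ) * t + ρ := h4
      _ < ((cnt : ℤ) + 1) * t := by push_cast; linarith [hρt]
      _ ≤ (s : ℤ) * L i := le_trans h5 h6
      _ = (L i : ℤ) * s := by ring
    exact lt_of_mul_lt_mul_left h7 (Int.natCast_nonneg (L i))
  refine ⟨M.toNat, ?_, ?_⟩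
  · have := Int.toNat_of_nonneg hM0
    omega
  · -- g i = B j i + M.toNat in ZMod t
    have hMt : (M.toNat : ℤ) = (gv i : ℤ) + w * t - B j i := by
      rw [Int.toNat_of_nonneg hM0, hM]
    have hnat : B j i + M.toNat = gv i + w * t := by omega
    have e3 : ((gv i : ℕ) : ZMod t) = g i := ZMod.natCast_rightInverse (g i)
    have key : ((B j i : ℕ) : ZMod t) + ((M.toNat : ℕ) : ZMod t) = ((gv i : ℕ) : ZMod t) := by
      have h1 : ((B j i + M.toNat : ℕ) : ZMod t) = ((gv i + w * t : ℕ) : ZMod t) := by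
        rw [hnat]
      push_cast at h1
      rw [ZMod.natCast_self] at h1
      rw [mul_zero, add_zero] at h1
      push_cast
      exact h1
    show g i = ((B j i : ℕ) : ZMod t) + ((M.toNat : ℕ) : ZMod t)
    rw [key, e3]

lemma real_cover (d n : ℕ) (ε : ℝ) (hε0 : 0 ≤ ε) (hε1 : ε < 1)
    (x0 : Fin n → Fin d → AddCircle (1:ℝ))
    (hx0 : (⋃ j, subCube d ε (x0 j)) = Set.univ) :
    ∃ A : Fin n → Fin d → ℝ, (∀ j i, 0 ≤ A j i ∧ A j i < 1) ∧
      ∀ x : Fin d → ℝ, ∃ j, ∀ i, Int.fract (x i - A j i) ≤ ε := by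
  choose A hA0 hA1 hAe using fun j i => exists_lift (x0 j i)
  refine ⟨A, fun j i => ⟨hA0 j i, hA1 j i⟩, fun x => ?_⟩
  have hmem := Set.eq_univ_iff_forall.mp hx0 (fun i => ((x i : ℝ) : AddCircle (1:ℝ)))
  rw [Set.mem_iUnion] at hmem
  obtain ⟨j, hj⟩ := hmem
  refine ⟨j, fun i => ?_⟩
  obtain ⟨θ, hθ0, hθε, hθe⟩ := hj i
  rw [hAe j i, ← coe_add', coe_eq_coe_iff] at hθe
  obtain ⟨k, hk⟩ := hθe
  have he : x i - A j i = θ - k := by linarith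
  rw [he, Int.fract_sub_intCast, Int.fract_eq_self.mpr ⟨hθ0, lt_of_le_of_lt hθε hε1⟩]
  exact hθε

lemma strict_cover (d n : ℕ) (ε : ℝ) (hε0 : 0 < ε) (hε1 : ε < 1)
    (A : Fin n → Fin d → ℝ)
    (hcov : ∀ x : Fin d → ℝ, ∃ j, ∀ i, Int.fract (x i - A j i) ≤ ε) :
    ∀ x : Fin d → ℝ, ∃ j, ∀ i, Int.fract (x i - A j i) < ε := by
  intro x
  have hσ : ∀ m : ℕ, 0 < ε / (m + 2) := by
    intro m; positivity
  choose jm hjm using fun m : ℕ => hcov (fun i => x i + ε / (m + 2))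
  haveI : Nonempty (Fin n) := ⟨jm 0⟩
  obtain ⟨j, hjinf⟩ := Finite.exists_infinite_fiber jm
  have hset : (jm ⁻¹' {j} : Set ℕ).Infinite := Set.infinite_coe_iff.mp hjinf
  refine ⟨j, fun i => ?_⟩
  set φ := Int.fract (x i - A j i) with hφ
  have hφ0 : 0 ≤ φ := Int.fract_nonneg _
  have hφ1 : φ < 1 := Int.fract_lt_one _
  obtain ⟨m, hmem, hmgt⟩ := hset.exists_gt ⌈ε / (1 - φ)⌉₊
  have hjmm : jm m = j := hmem
  have hσlt : ε / (m + 2) < 1 - φ := by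
    have h1φ : (0:ℝ) < 1 - φ := by linarith
    have h1 : ε / (1 - φ) < (m:ℝ) + 2 := by
      have := Nat.lt_of_ceil_lt hmgt
      push_cast at this ⊢
      linarith
    rw [div_lt_iff₀ h1φ] at h1
    rw [div_lt_iff₀ (by positivity : (0:ℝ) < (m:ℝ)+2)]
    have hcm := mul_comm ((m:ℝ)+2) (1-φ)
    linarith
  have hval := hjm m i
  rw [hjmm] at hval
  set σ := ε / (m + 2) with hσdef
  have hw : x i + σ - A j i = (x i - A j i) + σ := by ring
  rw [hw] at hval
  have hfloor : ⌊(x i - A j i) + σ⌋ = ⌊x i - A j i⌋ := by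
    have h1 : x i - A j i = ⌊x i - A j i⌋ + φ := by rw [hφ, Int.fract]; ring
    rw [Int.floor_eq_iff]
    constructor
    · linarith [hσ m]
    · push_cast; linarith [hσ m]
  have hfr : Int.fract ((x i - A j i) + σ) = φ + σ := by
    rw [Int.fract, hfloor, hφ, Int.fract]; ring
  rw [hfr] at hval
  linarith [hσ m]

lemma part2 (d r s t : ℕ) (hd : 0 < d) (hr : 2 ≤ r) (ε : ℝ)
    (hε1 : 1 / (r : ℝ) ≤ ε) (hε2 : ε < 1 / ((r : ℝ) - 1))
    (hs : 0 < s) (ht : 0 < t) (htr : t ≤ r^d)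
    (hmax : ∀ s' t' : ℕ, 0 < t' → t' ≤ r^d → (s' : ℝ) / (t' : ℝ) ≤ ε →
      (s' : ℝ) / (t' : ℝ) ≤ (s : ℝ) / (t : ℝ)) :
    discCoverNum d s t ≤ torusCoverNum d ε := by
  have hrR : (2:ℝ) ≤ (r:ℝ) := by exact_mod_cast hr
  have hε0 : 0 < ε := lt_of_lt_of_le (by positivity) hε1
  have hεlt1 : ε < 1 := by
    have h1 : (1:ℝ) ≤ (r:ℝ) - 1 := by linarith
    have h2 : 1 / ((r:ℝ) - 1) ≤ 1 := by
      rw [div_le_one (by linarith)]; linarith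
    linarith
  have hmem := torus_set_mem d r (by omega) ε hε1
  obtain ⟨x0, hx0⟩ := Nat.sInf_mem (⟨r^d, hmem⟩ : Set.Nonempty _)
  set n := torusCoverNum d ε with hn
  have hnr : n ≤ r^d := Nat.sInf_le hmem
  have hn0 : 0 < n := by
    rcases Nat.eq_zero_or_pos n with h0 | h
    · exfalso
      have hu := Set.eq_univ_iff_forall.mp hx0 (fun _ => (0 : AddCircle (1:ℝ)))
      rw [Set.mem_iUnion] at hu
      obtain ⟨j, -⟩ := hu
      have h2 : (j : ℕ) < torusCoverNum d ε := j.isLt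
      omega
    · exact h
  obtain ⟨A, hA01, hcovc⟩ := real_cover d n ε hε0.le hεlt1 x0 hx0
  have hcovs := strict_cover d n ε hε0 hεlt1 A hcovc
  have hper : ∀ i : Fin d, ∃ (L W : ℕ) (f : ℕ → ℝ), 0 < L ∧ L ≤ n ∧ 0 < W ∧
      (W:ℝ) ≤ L * ε ∧
      (∀ k, k < L → 0 ≤ f k ∧ f k < 1) ∧
      (∀ k k', k < k' → k' < L → f k < f k') ∧
      (∀ j, (((Finset.range L).filter
        (fun p => Int.fract (f p - A j i) < ε)).card ≤ W)) := by
    intro i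
    apply percoord n hn0 ε hε0 hεlt1 (fun j => A j i)
    intro ξ
    obtain ⟨j, hj⟩ := hcovs (fun _ => ξ)
    exact ⟨j, hj i⟩
  choose L W f hL0 hLn hW0 hWLε hf01 hfmono hfQ2 using hper
  have hQ1 : ∀ i, W i * t ≤ s * L i := by
    intro i
    have hLpos : (0:ℝ) < (L i : ℝ) := by exact_mod_cast hL0 i
    have htpos : (0:ℝ) < (t : ℝ) := by exact_mod_cast ht
    have hfrac : (W i : ℝ) / (L i : ℝ) ≤ ε := by
      rw [div_le_iff₀ hLpos]
      linarith [hWLε i, mul_comm (L i : ℝ) ε]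
    have := hmax (W i) (L i) (hL0 i) (le_trans (hLn i) hnr) hfrac
    rw [div_le_div_iff₀ hLpos htpos] at this
    exact_mod_cast this
  obtain ⟨y0, hy0⟩ := endgame d n s t hs ht ε hεlt1 A hA01 L W f hL0 hW0 hQ1
    (fun i k hk => hf01 i k hk) (fun i k k' h h' => hfmono i k k' h h')
    (fun i j => hfQ2 i j) hcovs
  exact Nat.sInf_le ⟨y0, hy0⟩

end MuAux

/-- Lemma 2 (first part): for `ε ∈ [1/r, 1/(r-1))`, if `s/t` is the largest rational
number `≤ ε` with denominator `t ≤ r^d`, then `μ(d; ε) = μ₀(d; s, t)`. -/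
theorem mu_eq_discrete (d r : ℕ) (hd : 2 ≤ d) (hr : 2 ≤ r) (ε : ℝ)
    (hε1 : 1 / (r : ℝ) ≤ ε) (hε2 : ε < 1 / ((r : ℝ) - 1))
    (s t : ℕ) (hs : 0 < s) (ht : 0 < t) (htr : t ≤ r^d)
    (hle : (s : ℝ) / (t : ℝ) ≤ ε)
    (hmax : ∀ s' t' : ℕ, 0 < t' → t' ≤ r^d → (s' : ℝ) / (t' : ℝ) ≤ ε →
      (s' : ℝ) / (t' : ℝ) ≤ (s : ℝ) / (t : ℝ)) :
    torusCoverNum d ε = discCoverNum d s t := by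
  refine le_antisymm (MuAux.part1 d s t hs ht ε hle) ?_
  exact MuAux.part2 d r s t (by omega) hr ε hε1 hε2 hs ht htr hmax

end
end

section
/- Let d ≥ 2 be an integer and let s ≤ t be positive integers. Then μ(d; s/t) = μ₀(d; s, t); in particular, μ₀(d;s,t) depends only on the ratio s/t. -/
open Set

noncomputable section

private lemma coe_eq_coe_iff' {x y : ℝ} :
    (x : AddCircle (1:ℝ)) = (y : AddCircle (1:ℝ)) ↔ ∃ m : ℤ, x - y = m := by
  rw [show (x : AddCircle (1:ℝ)) = (y : AddCircle (1:ℝ)) ↔ ((x - y : ℝ) : AddCircle (1:ℝ)) = 0 by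
    constructor
    · intro h; rw [AddCircle.coe_sub, h, sub_self]
    · intro h; exact sub_eq_zero.mp (by rwa [AddCircle.coe_sub] at h),
    AddCircle.coe_eq_zero_iff]
  constructor
  · rintro ⟨m, hm⟩; exact ⟨m, by simpa using hm.symm⟩
  · rintro ⟨m, hm⟩; exact ⟨m, by simpa using hm.symm⟩

private lemma rep' (x : AddCircle (1:ℝ)) : ∃ r : ℝ, 0 ≤ r ∧ r < 1 ∧ (r : AddCircle (1:ℝ)) = x := by
  obtain ⟨y, rfl⟩ := QuotientAddGroup.mk_surjective x
  refine ⟨Int.fract y, Int.fract_nonneg y, Int.fract_lt_one y, ?_⟩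
  show (↑(Int.fract y) : AddCircle (1:ℝ)) = ↑y
  rw [coe_eq_coe_iff']
  exact ⟨-⌊y⌋, by rw [Int.fract]; push_cast; ring⟩

/-- Lemma 2 (second part): for any rational `ε = s/t`, `μ(d; s/t) = μ₀(d; s, t)`;
in particular `μ₀(d; s, t)` depends only on the ratio `s/t`. -/
theorem mu_rat_eq_discrete (d s t : ℕ) (hd : 2 ≤ d) (hs : 0 < s) (hst : s ≤ t) :
    torusCoverNum d ((s : ℝ) / (t : ℝ)) = discCoverNum d s t := by
  have ht : 0 < t := lt_of_lt_of_le hs hst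
  haveI : NeZero t := ⟨ht.ne'⟩
  have htR : (0:ℝ) < t := by exact_mod_cast ht
  unfold torusCoverNum discCoverNum
  congr 1
  ext n
  simp only [Set.mem_setOf_eq]
  constructor
  · -- torus cover → discrete cover
    rintro ⟨y0, hy0⟩
    choose b hb0 hb1 hb using fun j i => rep' (y0 j i)
    obtain ⟨α, hα⟩ : ∃ α : ℝ, ∀ j i (m : ℤ), (t:ℝ) * b j i - α ≠ m := by
      by_contra h
      push_neg at h
      have hS : (⋃ (j : Fin n) (i : Fin d),
          Set.range (fun m : ℤ => (t:ℝ) * b j i - m)).Countable := by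
        apply Set.countable_iUnion; intro j
        apply Set.countable_iUnion; intro i
        exact Set.countable_range _
      apply Cardinal.not_countable_real
      refine Set.Countable.mono ?_ hS
      intro α _
      obtain ⟨j, i, m, h'⟩ := h α
      refine Set.mem_iUnion.2 ⟨j, Set.mem_iUnion.2 ⟨i, ⟨m, ?_⟩⟩⟩
      show (t:ℝ) * b j i - m = α
      linarith
    refine ⟨fun j i => ((⌈(t:ℝ) * b j i - α⌉ : ℤ) : ZMod t), ?_⟩
    rw [Set.eq_univ_iff_forall]
    intro a
    have hp : (fun i => (((((a i).val : ℝ) + α)/t : ℝ) : AddCircle (1:ℝ)))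
        ∈ ⋃ j, subCube d ((s:ℝ)/t) (y0 j) := hy0 ▸ Set.mem_univ _
    rw [Set.mem_iUnion] at hp
    obtain ⟨j, hj⟩ := hp
    rw [Set.mem_iUnion]
    refine ⟨j, fun i => ?_⟩
    obtain ⟨θ, hθ0, hθs, hpi⟩ := hj i
    rw [← hb j i, ← AddCircle.coe_add, coe_eq_coe_iff'] at hpi
    obtain ⟨m, hm⟩ := hpi
    -- hm : ((a i).val + α)/t - (b j i + θ) = m
    have hm2 : ((a i).val : ℝ) + α = (b j i + θ + m) * t := by
      have h2 : (((a i).val : ℝ) + α)/t = b j i + θ + m := by linarith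
      exact (div_eq_iff htR.ne').mp h2
    set r : ℝ := (t:ℝ) * b j i - α with hrdef
    have hval : ((a i).val : ℝ) = r + t*θ + t*m := by
      rw [hrdef]; linear_combination hm2
    set c : ℤ := ⌈r⌉ with hcdef
    have hrc : r < c := lt_of_le_of_ne (Int.le_ceil r) (fun h => hα j i c h)
    have hc1 : (c:ℝ) < r + 1 := Int.ceil_lt_add_one r
    set w : ℤ := ((a i).val : ℤ) - c - t*m with hwdef
    have hwr : (w:ℝ) = r + t*θ - c := by
      have hcast : ((w:ℤ):ℝ) = ((a i).val : ℝ) - c - t*m := by rw [hwdef]; push_cast; ring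
      rw [hcast, hval]; ring
    have htθ0 : 0 ≤ (t:ℝ)*θ := mul_nonneg htR.le hθ0
    have htθs : (t:ℝ)*θ ≤ s := by
      rw [le_div_iff₀ htR] at hθs; linarith
    have hw0 : 0 ≤ w := by
      have h5 : (-1:ℝ) < (w:ℝ) := by rw [hwr]; linarith
      have h6 : (-1:ℤ) < w := by exact_mod_cast h5
      omega
    have hws : w < (s:ℤ) := by
      have h5 : (w:ℝ) < (s:ℝ) := by rw [hwr]; linarith
      exact_mod_cast h5
    refine ⟨w.toNat, by omega, ?_⟩
    have e1 : (((a i).val : ℕ) : ZMod t) = a i := ZMod.natCast_rightInverse _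
    have e3 : (((a i).val : ℕ) : ℤ) = c + ((w.toNat:ℕ):ℤ) + t*m := by omega
    calc a i = (((a i).val : ℕ) : ZMod t) := e1.symm
      _ = ((((a i).val : ℕ) : ℤ) : ZMod t) := by push_cast; ring
      _ = ((c + ((w.toNat:ℕ):ℤ) + (t:ℤ)*m : ℤ) : ZMod t) := by rw [e3]
      _ = (c : ZMod t) + ((w.toNat : ℕ) : ZMod t) := by
          push_cast [ZMod.natCast_self]
          ring
  · -- discrete cover → torus cover
    rintro ⟨x0, hx0⟩
    refine ⟨fun j i => (((((x0 j i).val : ℝ)) / t : ℝ) : AddCircle (1:ℝ)), ?_⟩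
    rw [Set.eq_univ_iff_forall]
    intro x
    choose r hr0 hr1 hrx using fun i => rep' (x i)
    have ha : (fun i => ((⌊(t:ℝ) * r i⌋ : ℤ) : ZMod t)) ∈ ⋃ j, dCube d s t (x0 j) :=
      hx0 ▸ Set.mem_univ _
    rw [Set.mem_iUnion] at ha
    obtain ⟨j, hj⟩ := ha
    rw [Set.mem_iUnion]
    refine ⟨j, fun i => ?_⟩
    obtain ⟨k, hk, hak⟩ := hj i
    set v : ℕ := (x0 j i).val with hvdef
    have hvx : ((v : ℕ) : ZMod t) = x0 j i := ZMod.natCast_rightInverse _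
    have hak2 : ((⌊(t:ℝ) * r i⌋ : ℤ) : ZMod t) = x0 j i + (k : ZMod t) := hak
    have hak' : ((⌊(t:ℝ) * r i⌋ : ℤ) : ZMod t) = (((v + k : ℕ) : ℤ) : ZMod t) := by
      push_cast
      rw [hak2, ← hvx]
    rw [ZMod.intCast_eq_intCast_iff_dvd_sub] at hak'
    obtain ⟨m, hm⟩ := hak'
    have hmR : (v:ℝ) + k - (⌊(t:ℝ)*r i⌋ : ℤ) = t*m := by exact_mod_cast hm
    have hfl : (⌊(t:ℝ)*r i⌋ : ℝ) ≤ (t:ℝ) * r i := Int.floor_le _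
    have hfl2 : (t:ℝ) * r i < (⌊(t:ℝ)*r i⌋ : ℝ) + 1 := Int.lt_floor_add_one _
    refine ⟨((t:ℝ)*r i - (⌊(t:ℝ)*r i⌋ : ℤ) + k)/t, ?_, ?_, ?_⟩
    · have h0 : (0:ℝ) ≤ (k:ℝ) := Nat.cast_nonneg k
      have h1 : (0:ℝ) ≤ (t:ℝ)*r i - (⌊(t:ℝ)*r i⌋ : ℤ) + k := by linarith
      exact div_nonneg h1 htR.le
    · have hks : (k:ℝ) + 1 ≤ (s:ℝ) := by exact_mod_cast hk
      have hnum : (t:ℝ)*r i - (⌊(t:ℝ)*r i⌋ : ℤ) + k ≤ (s:ℝ) := by linarith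
      gcongr
    · rw [← hrx i, ← AddCircle.coe_add, coe_eq_coe_iff']
      refine ⟨-m, ?_⟩
      have h4 : (v:ℝ) + ((t:ℝ)*r i - (⌊(t:ℝ)*r i⌋ : ℤ) + k) = (r i + m)*t := by
        linear_combination hmR
      have h5 : (v:ℝ)/t + ((t:ℝ)*r i - (⌊(t:ℝ)*r i⌋ : ℤ) + k)/t = r i + m := by
        rw [← add_div, div_eq_iff htR.ne']
        linear_combination h4
      push_cast
      linarith [h5]


end
end

section
/- Let d ≥ 1 and μ ≥ 1 be integers, and let ε₀ be the minimum of all ε ∈ (0,1] such that the torus T^d = (ℝ/ℤ)^d can be covered by μ 'sub-cubes' of side ε (this minimum exists by compactness). Then ε₀ is rational, ε₀ = s₀/t₀ with s₀ and t₀ coprime positive integers and t₀ ≤ μ. -/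
open Set

noncomputable section

/-- `T^d` can be covered by `m` sub-cubes of side `ε`. -/
def Coverable (d m : ℕ) (ε : ℝ) : Prop :=
  ∃ x0 : Fin m → (Fin d → AddCircle (1:ℝ)), (⋃ j, subCube d ε (x0 j)) = Set.univ


lemma tp_fract_shift (a b : ℝ) (z : ℤ) (h : a - b = z) : Int.fract a = Int.fract b :=
  Int.fract_eq_fract.2 ⟨z, h⟩

lemma tp_fract_val (a v : ℝ) (z : ℤ) (h : a = v + z) (h0 : 0 ≤ v) (h1 : v < 1) :
    Int.fract a = v := by
  have := tp_fract_shift a v z (by rw [h]; ring)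
  rw [this, Int.fract_eq_self.2 ⟨h0, h1⟩]

lemma tp_fract_zero_iff (a : ℝ) : Int.fract a = 0 ↔ ∃ n : ℤ, a = n := by
  constructor
  · intro h
    exact ⟨⌊a⌋, by have := Int.self_sub_floor a; rw [h] at this; linarith⟩
  · rintro ⟨n, rfl⟩; exact Int.fract_intCast n

lemma tp_key (ε δ g : ℝ) (hε0 : 0 < ε) (hε1 : ε < 1) (hδ0 : 0 < δ) (hδg : δ ≤ g/8)
    (hg0 : 0 < g) (hgε : g ≤ ε) (hg1ε : g ≤ 1 - ε)
    {ι : Type*} (old nw : ι → ℝ)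
    (Dbd : ∀ p, |old p - nw p| ≤ g/8)
    (coin : ∀ p p', Int.fract (old p - old p') = 0 → old p - nw p = old p' - nw p')
    (gap : ∀ p p', Int.fract (old p - old p') ≠ 0 → g ≤ Int.fract (old p - old p'))
    (y t : ℝ) (ph : ι) (ht : ∀ p, t ≤ Int.fract (y - nw p)) (htp : Int.fract (y - nw ph) = t)
    (k0 k1 : ι) (hk : old k1 = old k0 + ε) (hk' : nw k1 = nw k0 + (ε - δ)) :
    (Int.fract (old ph + min t (g/2) - old k0) ≤ ε ↔ Int.fract (y - nw k0) ≤ ε - δ) := by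
  set τ := min t (g/2) with hτdef
  have ht0 : 0 ≤ t := htp ▸ Int.fract_nonneg _
  have ht1 : t < 1 := htp ▸ Int.fract_lt_one _
  have hτ0 : 0 ≤ τ := le_min ht0 (by linarith)
  have hτg : τ ≤ g/2 := min_le_right _ _
  -- y as t plus nw ph plus an integer
  have hyint : y - nw ph = t + (⌊y - nw ph⌋ : ℤ) := by
    have := Int.self_sub_floor (y - nw ph); rw [htp] at this; linarith
  have fract_y : ∀ p : ι, Int.fract (y - nw p) = Int.fract (t + (nw ph - nw p)) := by
    intro p
    exact tp_fract_shift _ _ ⌊y - nw ph⌋ (by linarith)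
  have strict : ∀ p, Int.fract (nw p - nw ph) ≠ 0 → t < Int.fract (nw p - nw ph) := by
    intro p hne
    set u := Int.fract (nw p - nw ph) with hu
    have hu0 : 0 < u := lt_of_le_of_ne (Int.fract_nonneg _) (Ne.symm hne)
    have hu1 : u < 1 := Int.fract_lt_one _
    by_contra hle
    push_neg at hle
    have hnp : nw p - nw ph = u + (⌊nw p - nw ph⌋ : ℤ) := by
      have := Int.self_sub_floor (nw p - nw ph); rw [← hu] at this; linarith
    have hv : Int.fract (y - nw p) = t - u := by
      rw [fract_y p]
      exact tp_fract_val _ _ (-⌊nw p - nw ph⌋) (by push_cast; linarith) (by linarith)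
        (by linarith)
    have h2 := ht p
    rw [hv] at h2
    linarith
  -- the basic quantities
  set w := Int.fract (old ph - old k0) with hwdef
  have hw0 : 0 ≤ w := Int.fract_nonneg _
  have hwint : old ph - old k0 = w + (⌊old ph - old k0⌋ : ℤ) := by
    have := Int.self_sub_floor (old ph - old k0); rw [← hwdef] at this; linarith
  have hwalt : w = 0 ∨ (g ≤ w ∧ w ≤ 1 - g) := by
    by_cases hw : w = 0
    · exact Or.inl hw
    · right
      refine ⟨gap _ _ hw, ?_⟩
      have hrev : Int.fract (old k0 - old ph) = 1 - w := by
        have : old k0 - old ph = -(old ph - old k0) := by ring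
        rw [this, Int.fract_neg hw]
      have hrne : Int.fract (old k0 - old ph) ≠ 0 := by
        rw [hrev]
        intro hcon
        have : w = 1 := by linarith
        have := Int.fract_lt_one (old ph - old k0)
        rw [← hwdef] at this; linarith
      have := gap _ _ hrne
      rw [hrev] at this; linarith
  -- left-hand value
  have hLval : Int.fract (old ph + τ - old k0) = w + τ := by
    refine tp_fract_val _ _ ⌊old ph - old k0⌋ (by linarith) (by linarith) ?_
    rcases hwalt with h | ⟨h1, h2⟩ <;> linarith
  rw [hLval]
  -- difference of displacements
  have habs : |(old ph - nw ph) - (old k0 - nw k0)| ≤ g/4 := by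
    have := Dbd ph; have := Dbd k0
    rw [abs_le] at *
    constructor <;> [skip; skip] <;> linarith [ (Dbd ph), (Dbd k0)]
  set Δ := (old ph - nw ph) - (old k0 - nw k0) with hΔdef
  set n₁ := ⌊old ph - old k0⌋ with hn₁
  have hnwdiff : nw ph - nw k0 = w - Δ + (n₁ : ℝ) := by
    rw [hΔdef]; linarith
  have hεδ0 : 0 < ε - δ := by linarith
  have hεδ1 : ε - δ < 1 := by linarith
  rcases hwalt with hw | ⟨hwg, hwg1⟩
  · -- case w = 0 : both sides true
    have hΔ0 : Δ = 0 := by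
      have := coin ph k0 (by rw [← hwdef]; exact hw)
      rw [hΔdef]; linarith
    have hRHS : Int.fract (y - nw k0) = t := by
      rw [fract_y k0]
      exact tp_fract_val _ _ n₁ (by rw [hnwdiff, hw, hΔ0]; ring) ht0 ht1
    have hstr : t < ε - δ := by
      have h1 : Int.fract (nw k1 - nw ph) = ε - δ := by
        refine tp_fract_val _ _ (-n₁) ?_ (by linarith) (by linarith)
        rw [hk']; push_cast; linarith [hnwdiff]
      have := strict k1 (by rw [h1]; linarith)
      rw [h1] at this; exact this
    rw [hRHS]
    exact iff_of_true (by linarith) (by linarith)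
  · by_cases hwe : Int.fract (old ph - old k1) = 0
    · -- w = ε case
      obtain ⟨n₂, hn₂⟩ := (tp_fract_zero_iff _).1 hwe
      have hwε : w = ε := by
        have h1 : old ph - old k0 = ε + (n₂ : ℝ) := by rw [hk] at hn₂; linarith
        rw [hwdef]
        exact tp_fract_val _ _ n₂ h1 (le_of_lt hε0) hε1
      have hΔδ : Δ = δ := by
        have h2 := coin ph k1 hwe
        rw [hk, hk'] at h2
        rw [hΔdef]; linarith
      have hRHS : Int.fract (y - nw k0) = Int.fract (t + (ε - δ)) := by
        rw [fract_y k0]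
        refine tp_fract_shift _ _ n₁ ?_
        rw [hnwdiff, hwε, hΔδ]; ring
      by_cases htz : t = 0
      · have hτz : τ = 0 := by rw [hτdef, htz]; simp; linarith
        rw [hτz, hRHS, htz]
        have : Int.fract ((0:ℝ) + (ε - δ)) = ε - δ :=
          tp_fract_val _ _ 0 (by push_cast; ring) (by linarith) (by linarith)
        rw [this]
        exact iff_of_true (by linarith) (by linarith)
      · have htpos : 0 < t := lt_of_le_of_ne ht0 (Ne.symm htz)
        have hτpos : 0 < τ := lt_min htpos (by linarith)
        have hstr : t < 1 - (ε - δ) := by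
          have h1 : Int.fract (nw k0 - nw ph) = 1 - (ε - δ) := by
            refine tp_fract_val _ _ (-n₁ - 1) ?_ (by linarith) (by linarith)
            push_cast; linarith [hnwdiff, hwε, hΔδ]
          have := strict k0 (by rw [h1]; intro hcon; linarith)
          rw [h1] at this; exact this
        have hRv : Int.fract (y - nw k0) = t + (ε - δ) := by
          rw [hRHS]
          exact tp_fract_val _ _ 0 (by push_cast; ring) (by linarith) (by linarith)
        rw [hRv, hwε]
        exact iff_of_false (by intro hcon; linarith) (by intro hcon; linarith)
    · -- generic case : w ≠ 0, ε, so at cyclic distance ≥ g from both ends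
      have trich : w ≤ ε - g ∨ ε + g ≤ w := by
        rcases lt_trichotomy w ε with hlt | heq | hgt
        · left
          have h1 : Int.fract (old k1 - old ph) = ε - w := by
            refine tp_fract_val _ _ (-n₁) ?_ (by linarith) (by linarith)
            rw [hk]; push_cast; linarith
          have := gap k1 ph (by rw [h1]; intro hcon; linarith)
          rw [h1] at this; linarith
        · exfalso
          apply hwe
          rw [(tp_fract_zero_iff _).2 ⟨n₁, by rw [hk]; push_cast; linarith⟩]
        · right
          have h1 : Int.fract (old ph - old k1) = w - ε := by
            refine tp_fract_val _ _ n₁ ?_ (by linarith) (by linarith)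
            rw [hk]; push_cast; linarith
          have := gap ph k1 (by rw [h1]; intro hcon; linarith)
          rw [h1] at this; linarith
      have hΔ4 : |Δ| ≤ g/4 := habs
      rw [abs_le] at hΔ4
      have hRHS : Int.fract (y - nw k0) = Int.fract (t + (w - Δ)) := by
        rw [fract_y k0]
        exact tp_fract_shift _ _ n₁ (by rw [hnwdiff]; ring)
      rcases trich with hle | hge
      · -- w ≤ ε - g : both sides true
        have hstr : t < ε - δ - w + Δ := by
          have h1 : Int.fract (nw k1 - nw ph) = ε - δ - w + Δ := by
            refine tp_fract_val _ _ (-n₁) ?_ (by linarith) (by linarith)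
            rw [hk']; push_cast; linarith [hnwdiff]
          have := strict k1 (by rw [h1]; intro hcon; linarith)
          rw [h1] at this; exact this
        have hRv : Int.fract (y - nw k0) = t + (w - Δ) := by
          rw [hRHS]
          exact tp_fract_val _ _ 0 (by push_cast; ring) (by linarith) (by linarith)
        rw [hRv]
        exact iff_of_true (by linarith) (by linarith)
      · -- ε + g ≤ w : both sides false
        have hstr : t < 1 - (w - Δ) := by
          have h1 : Int.fract (nw k0 - nw ph) = 1 - (w - Δ) := by
            refine tp_fract_val _ _ (-n₁ - 1) ?_ (by linarith) (by linarith)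
            push_cast; linarith [hnwdiff]
          have := strict k0 (by rw [h1]; intro hcon; linarith)
          rw [h1] at this; exact this
        have hRv : Int.fract (y - nw k0) = t + (w - Δ) := by
          rw [hRHS]
          exact tp_fract_val _ _ 0 (by push_cast; ring) (by linarith) (by linarith)
        rw [hRv]
        exact iff_of_false (by intro hcon; linarith) (by intro hcon; linarith)


lemma tp_int_eq (q a : ℤ) (hq : 0 < q) (h : q ∣ a) (h1 : -q < a) (h2 : a < q) : a = 0 := by
  obtain ⟨u, rfl⟩ := h
  rcases lt_trichotomy u 0 with hu | hu | hu
  · nlinarith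
  · simp [hu]
  · nlinarith

lemma tp_potential (m : ℕ) (ε : ℝ)
    (NR : ∀ t : ℕ, 1 ≤ t → t ≤ m → ∀ n : ℤ, (t:ℝ) * ε ≠ (n:ℝ))
    (v : Fin m → ℝ) :
    ∃ r : Fin m → ℤ, ∀ j k : Fin m, ∀ c : ℤ, |c| ≤ 1 →
      (∃ n : ℤ, v k = v j + (c:ℝ)*ε + (n:ℝ)) → r k = r j + c := by
  classical
  set Rel : Fin m → Fin m → Prop := fun j k => ∃ c n : ℤ, v k = v j + (c:ℝ)*ε + (n:ℝ)
    with hRel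
  have hrefl : ∀ j, Rel j j := fun j => ⟨0, 0, by push_cast; ring⟩
  have hsymm : ∀ {j k}, Rel j k → Rel k j := by
    rintro j k ⟨c, n, hc⟩; exact ⟨-c, -n, by push_cast; linarith⟩
  have htrans : ∀ {i j k}, Rel i j → Rel j k → Rel i k := by
    rintro i j k ⟨c, n, hc⟩ ⟨c', n', hc'⟩
    exact ⟨c + c', n + n', by push_cast; linarith⟩
  set Srel : Fin m → Finset (Fin m) := fun j => Finset.univ.filter (fun k => Rel k j)
    with hSrel
  have hSne : ∀ j, (Srel j).Nonempty := fun j => ⟨j, by simp [hSrel, hrefl j]⟩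
  have hmin' : ∀ {s t : Finset (Fin m)} (hs : s.Nonempty) (h : s = t),
      s.min' hs = t.min' (h ▸ hs) := by
    intro s t hs h; subst h; rfl
  set rep : Fin m → Fin m := fun j => (Srel j).min' (hSne j) with hrep
  have hreprel : ∀ j, Rel (rep j) j := by
    intro j
    have := (Srel j).min'_mem (hSne j)
    simp only [hSrel, Finset.mem_filter] at this
    exact this.2
  have hrepeq : ∀ j k, Rel j k → rep j = rep k := by
    intro j k hjk
    have hset : Srel j = Srel k := by
      ext a
      simp only [hSrel, Finset.mem_filter, Finset.mem_univ, true_and]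
      exact ⟨fun h => htrans h hjk, fun h => htrans h (hsymm hjk)⟩
    exact hmin' (hSne j) hset
  have hex : ∀ j, ∃ c n : ℤ, v j = v (rep j) + (c:ℝ)*ε + (n:ℝ) := fun j => hreprel j
  choose cc nn hcn using hex
  by_cases hq : ∃ n : ℕ, 0 < n ∧ ∃ z : ℤ, (n:ℝ) * ε = (z:ℝ)
  · -- rational case : minimal period q with m < q
    set q := Nat.find hq with hqdef
    obtain ⟨hqpos, z, hz⟩ := Nat.find_spec hq
    have hqZ : (0:ℤ) < (q:ℤ) := by exact_mod_cast hqpos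
    have hmq : m < q := by
      by_contra hle
      push_neg at hle
      exact NR q hqpos hle z hz
    have hdvd : ∀ t : ℤ, (∃ z' : ℤ, (t:ℝ)*ε = (z':ℝ)) → (q:ℤ) ∣ t := by
      rintro t ⟨z', hz'⟩
      have hs0 : 0 ≤ t % q := Int.emod_nonneg t (by positivity)
      have hsq : t % q < q := Int.emod_lt_of_pos t hqZ
      have hts := Int.mul_ediv_add_emod t (q:ℤ)
      rw [Int.dvd_iff_emod_eq_zero]
      by_contra hne
      have hres : ((t % q : ℤ):ℝ) * ε = ((z' - (t / q) * z : ℤ):ℝ) := by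
        have hint : t % (q:ℤ) = t - t / (q:ℤ) * (q:ℤ) := by linarith
        have h1 : ((t % q : ℤ):ℝ) = (t:ℝ) - ((t / (q:ℤ) : ℤ):ℝ) * (q:ℝ) := by
          rw [hint]; push_cast; ring
        rw [h1]
        push_cast
        calc ((t:ℝ) - ((t / (q:ℤ) : ℤ):ℝ) * (q:ℝ)) * ε
            = (t:ℝ)*ε - ((t / (q:ℤ) : ℤ):ℝ) * ((q:ℝ)*ε) := by ring
          _ = (z':ℝ) - ((t / (q:ℤ) : ℤ):ℝ) * (z:ℝ) := by rw [hz', hz]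
      have hPs : 0 < (t % q).toNat ∧ ∃ z'' : ℤ, (((t % q).toNat : ℕ):ℝ) * ε = (z'':ℝ) := by
        constructor
        · omega
        · refine ⟨z' - (t / q) * z, ?_⟩
          have hc : (((t % q).toNat : ℕ) : ℝ) = ((t % q : ℤ) : ℝ) := by
            exact_mod_cast congrArg (fun x : ℤ => (x : ℝ)) (Int.toNat_of_nonneg hs0)
          rw [hc]; exact hres
      have hlt : (t % q).toNat < q := by omega
      exact Nat.find_min hq hlt hPs
    have hCcong : ∀ (k : Fin m) (c c' n n' : ℤ),
        v k = v (rep k) + (c:ℝ)*ε + (n:ℝ) → v k = v (rep k) + (c':ℝ)*ε + (n':ℝ) →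
        (q:ℤ) ∣ (c - c') := by
      intro k c c' n n' h1 h2
      apply hdvd
      exact ⟨n' - n, by push_cast; linarith⟩
    -- find a free residue ρ
    have hcard : (Finset.image (fun j : Fin m => cc j % q) Finset.univ).card
        < (Finset.Ico (0:ℤ) (q:ℤ)).card := by
      have h1 : (Finset.image (fun j : Fin m => cc j % q) Finset.univ).card ≤ m := by
        calc _ ≤ (Finset.univ : Finset (Fin m)).card := Finset.card_image_le
          _ = m := by simp
      have h2 : (Finset.Ico (0:ℤ) (q:ℤ)).card = q := by
        rw [Int.card_Ico]; simp
      omega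
    have hex2 : ∃ ρ ∈ Finset.Ico (0:ℤ) (q:ℤ),
        ρ ∉ Finset.image (fun j : Fin m => cc j % q) Finset.univ := by
      by_contra hcon
      push_neg at hcon
      have hsub : Finset.Ico (0:ℤ) (q:ℤ) ⊆
          Finset.image (fun j : Fin m => cc j % q) Finset.univ := fun ρ hρ => hcon ρ hρ
      have := Finset.card_le_card hsub
      omega
    obtain ⟨ρ, hρmem, hρnot⟩ := hex2
    have hρ0 : 0 ≤ ρ := (Finset.mem_Ico.1 hρmem).1
    have hρq : ρ < q := (Finset.mem_Ico.1 hρmem).2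
    have hρne : ∀ j : Fin m, ¬ (q:ℤ) ∣ (cc j - ρ) := by
      intro j hdv
      apply hρnot
      rw [Finset.mem_image]
      refine ⟨j, Finset.mem_univ _, ?_⟩
      obtain ⟨u, hu⟩ := hdv
      have : cc j = ρ + q * u := by linarith
      rw [this]
      rw [Int.add_mul_emod_self_left]
      exact Int.emod_eq_of_lt hρ0 hρq
    set r : Fin m → ℤ := fun j => ρ + 1 + (cc j - ρ - 1) % q with hrdef
    have hrbnd : ∀ j, ρ + 1 ≤ r j ∧ r j ≤ ρ + q := by
      intro j
      have h0 : 0 ≤ (cc j - ρ - 1) % q := Int.emod_nonneg _ (by positivity)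
      have h1 : (cc j - ρ - 1) % q < q := Int.emod_lt_of_pos _ hqZ
      refine ⟨?_, ?_⟩ <;> (simp only [hrdef]; omega)
    have hrdvd : ∀ j, (q:ℤ) ∣ (r j - cc j) := by
      intro j
      have ha := Int.mul_ediv_add_emod (cc j - ρ - 1) (q:ℤ)
      exact ⟨-((cc j - ρ - 1)/q), by simp only [hrdef]; linarith⟩
    have hrne : ∀ j, r j ≤ ρ + q - 1 := by
      intro j
      rcases eq_or_lt_of_le (hrbnd j).2 with heq | hlt
      · exfalso
        apply hρne j
        have h1 := hrdvd j
        have : cc j - ρ = (r j - cc j) * (-1) + q := by omega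
        rw [this]
        exact dvd_add (Dvd.dvd.mul_right h1 _) ⟨1, by ring⟩
      · omega
    have hmem : ∀ j, ∃ n : ℤ, v j = v (rep j) + ((r j : ℤ):ℝ)*ε + (n:ℝ) := by
      intro j
      obtain ⟨u, hu⟩ := hrdvd j
      refine ⟨nn j - u * z, ?_⟩
      have h1 : ((r j : ℤ):ℝ) = (cc j : ℝ) + (u:ℝ) * (q:ℝ) := by
        have : (r j : ℝ) - (cc j : ℝ) = (q:ℝ) * (u:ℝ) := by exact_mod_cast congrArg Int.cast hu
        linarith
      rw [h1]
      have h2 := hcn j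
      push_cast
      calc v j = v (rep j) + (cc j:ℝ)*ε + (nn j:ℝ) := h2
        _ = v (rep j) + ((cc j:ℝ) + (u:ℝ)*(q:ℝ))*ε + ((nn j:ℝ) - (u:ℝ)*((q:ℝ)*ε)) := by ring
        _ = _ := by rw [hz]
    refine ⟨r, ?_⟩
    rintro j k c₀ hc₀ ⟨n₀, hrel⟩
    have hre : rep j = rep k := hrepeq j k ⟨c₀, n₀, hrel⟩
    obtain ⟨n1, hn1⟩ := hmem j
    obtain ⟨n2, hn2⟩ := hmem k
    have hup : v k = v (rep k) + ((r j + c₀ : ℤ):ℝ)*ε + ((n1 + n₀ : ℤ):ℝ) := by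
      rw [← hre]
      push_cast
      push_cast at hn1 hrel
      linarith
    have hd1 : (q:ℤ) ∣ (r k - (r j + c₀)) := hCcong k _ _ _ _ hn2 hup
    -- window bounds
    have hb1 := hrbnd j
    have hb2 := hrbnd k
    have hj1 := hrne j
    have habs : |c₀| ≤ 1 := hc₀
    rw [abs_le] at habs
    have hlow : ρ + 1 ≤ r j + c₀ := by
      rcases eq_or_lt_of_le (show ρ ≤ r j + c₀ by omega) with heq | hlt
      · exfalso
        apply hρne k
        have h3 : (q:ℤ) ∣ (r k - cc k) := hrdvd k
        have h4 : cc k - ρ = (r k - (r j + c₀)) - (r k - cc k) := by omega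
        rw [h4]
        exact dvd_sub hd1 h3
      · omega
    have : r k - (r j + c₀) = 0 := by
      apply tp_int_eq (q:ℤ) _ hqZ hd1 <;> omega
    omega
  · -- irrational case : the coefficient is unique
    push_neg at hq
    have huniq : ∀ (c c' n n' : ℤ) (a b : ℝ),
        b = a + (c:ℝ)*ε + (n:ℝ) → b = a + (c':ℝ)*ε + (n':ℝ) → c = c' := by
      intro c c' n n' a b h1 h2
      by_contra hne
      have hres : ((c - c' : ℤ):ℝ) * ε = ((n' - n : ℤ):ℝ) := by push_cast; linarith
      have hpos : 0 < (c - c').natAbs := by omega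
      rcases Int.natAbs_eq (c - c') with he | he
      · refine hq (c - c').natAbs hpos (n' - n) ?_
        have hcast : (((c - c').natAbs : ℕ) : ℝ) = ((c - c' : ℤ) : ℝ) := by
          rw [Nat.cast_natAbs]
          exact_mod_cast (abs_of_nonneg (by omega : (0:ℤ) ≤ c - c'))
        rw [hcast, hres]
      · refine hq (c - c').natAbs hpos (n - n') ?_
        have hcast : (((c - c').natAbs : ℕ) : ℝ) = -((c - c' : ℤ) : ℝ) := by
          rw [Nat.cast_natAbs]
          exact_mod_cast (abs_of_nonpos (by omega : (c - c' : ℤ) ≤ 0))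
        rw [hcast]
        push_cast at hres ⊢
        linarith
    refine ⟨cc, ?_⟩
    rintro j k c₀ hc₀ ⟨n₀, hrel⟩
    have hre : rep j = rep k := hrepeq j k ⟨c₀, n₀, hrel⟩
    have h1 := hcn j
    have h2 := hcn k
    have hup : v k = v (rep k) + ((cc j + c₀ : ℤ):ℝ)*ε + ((nn j + n₀ : ℤ):ℝ) := by
      rw [← hre]
      push_cast
      push_cast at h1 hrel
      linarith
    exact huniq _ _ _ _ _ _ h2 hup



lemma tp_perturb (d m : ℕ) (hd : 1 ≤ d) (hm : 1 ≤ m) (ε : ℝ) (hε0 : 0 < ε) (hε1 : ε < 1)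
    (NR : ∀ t : ℕ, 1 ≤ t → t ≤ m → ∀ n : ℤ, (t:ℝ) * ε ≠ (n:ℝ))
    (b : Fin m → Fin d → ℝ)
    (hc : ∀ y : Fin d → ℝ, ∃ j, ∀ i, Int.fract (y i - b j i) ≤ ε) :
    ∃ ε' : ℝ, 0 < ε' ∧ ε' < ε ∧ ∃ b' : Fin m → Fin d → ℝ,
      ∀ y : Fin d → ℝ, ∃ j, ∀ i, Int.fract (y i - b' j i) ≤ ε' := by
  classical
  obtain ⟨i₀, hi₀⟩ : ∃ i : Fin d, True := ⟨⟨0, hd⟩, trivial⟩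
  obtain ⟨j₀, hj₀⟩ : ∃ j : Fin m, True := ⟨⟨0, hm⟩, trivial⟩
  have hpot : ∀ i : Fin d, ∃ r : Fin m → ℤ, ∀ j k : Fin m, ∀ c : ℤ, |c| ≤ 1 →
      (∃ n : ℤ, b k i = b j i + (c:ℝ)*ε + (n:ℝ)) → r k = r j + c :=
    fun i => tp_potential m ε NR (fun j => b j i)
  choose r hr using hpot
  set val : Fin d → Fin m × Fin 2 → ℝ := fun i p => b p.1 i + ((p.2 : ℕ) : ℝ) * ε with hval
  have hfε : Int.fract ε = ε := Int.fract_eq_self.2 ⟨le_of_lt hε0, hε1⟩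
  -- the minimal positive cyclic gap between endpoints
  set F : Finset ℝ := Finset.image
    (fun q : Fin d × (Fin m × Fin 2) × (Fin m × Fin 2) =>
      Int.fract (val q.1 q.2.1 - val q.1 q.2.2)) Finset.univ with hF
  have hv10 : ∀ i j, val i (j, 1) - val i (j, 0) = ε := by
    intro i j; simp [hval]
  have hεF : ε ∈ F.filter (fun x => 0 < x) := by
    rw [Finset.mem_filter]
    constructor
    · rw [hF, Finset.mem_image]
      refine ⟨(i₀, (j₀, 1), (j₀, 0)), Finset.mem_univ _, ?_⟩
      rw [hv10 i₀ j₀, hfε]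
    · exact hε0
  set g : ℝ := (F.filter (fun x => 0 < x)).min' ⟨ε, hεF⟩ with hgdef
  have hg0 : 0 < g :=
    (Finset.mem_filter.1 ((F.filter (fun x => 0 < x)).min'_mem ⟨ε, hεF⟩)).2
  have hgε : g ≤ ε := Finset.min'_le _ ε hεF
  have hgap : ∀ (i : Fin d) (p p' : Fin m × Fin 2),
      Int.fract (val i p - val i p') ≠ 0 → g ≤ Int.fract (val i p - val i p') := by
    intro i p p' hne
    apply Finset.min'_le
    rw [Finset.mem_filter]
    refine ⟨?_, lt_of_le_of_ne (Int.fract_nonneg _) (Ne.symm hne)⟩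
    rw [hF, Finset.mem_image]
    exact ⟨(i, p, p'), Finset.mem_univ _, rfl⟩
  have hgε1 : g ≤ 1 - ε := by
    have h1 : val i₀ (j₀, 0) - val i₀ (j₀, 1) = -ε := by
      have := hv10 i₀ j₀; linarith
    have h2 : Int.fract (val i₀ (j₀, 0) - val i₀ (j₀, 1)) = 1 - ε := by
      rw [h1, Int.fract_neg (by rw [hfε]; linarith)]
      rw [hfε]
    have := hgap i₀ (j₀, 0) (j₀, 1) (by rw [h2]; intro hcon; linarith)
    rw [h2] at this; exact this
  -- bound on the potentials and the perturbation size
  set RB₀ : ℤ := Finset.sup' Finset.univ ⟨(i₀, j₀), Finset.mem_univ _⟩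
    (fun q : Fin d × Fin m => |r q.1 q.2|) with hRB₀
  have hRB₀le : ∀ i j, |r i j| ≤ RB₀ := by
    intro i j
    exact Finset.le_sup' (fun q : Fin d × Fin m => |r q.1 q.2|) (Finset.mem_univ (i, j))
  have hRB₀0 : 0 ≤ RB₀ := le_trans (abs_nonneg _) (hRB₀le i₀ j₀)
  set RB : ℝ := (RB₀ : ℝ) + 1 with hRB
  have hRB1 : 1 ≤ RB := by
    rw [hRB]
    have : (0:ℝ) ≤ (RB₀ : ℝ) := by exact_mod_cast hRB₀0
    linarith
  have hRBr : ∀ (i : Fin d) (j : Fin m) (σ : Fin 2), |((r i j + ((σ:ℕ):ℤ) : ℤ) : ℝ)| ≤ RB := by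
    intro i j σ
    have h1 : |r i j + ((σ:ℕ):ℤ)| ≤ RB₀ + 1 := by
      have := hRB₀le i j
      have hσ : ((σ:ℕ):ℤ) = 0 ∨ ((σ:ℕ):ℤ) = 1 := by omega
      rcases abs_le.1 this with ⟨hl, hu⟩
      rw [abs_le]
      rcases hσ with h | h <;> rw [h] <;> constructor <;> omega
    calc |((r i j + ((σ:ℕ):ℤ) : ℤ) : ℝ)| = ((|r i j + ((σ:ℕ):ℤ)| : ℤ) : ℝ) := by
          rw [Int.cast_abs]
      _ ≤ ((RB₀ + 1 : ℤ) : ℝ) := by exact_mod_cast h1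
      _ = RB := by rw [hRB]; push_cast; ring
  set δ : ℝ := g / (8 * RB) with hδdef
  have hδ0 : 0 < δ := by
    apply div_pos hg0; nlinarith
  have hδg : δ ≤ g / 8 := by
    rw [hδdef, div_le_div_iff₀ (by nlinarith) (by norm_num)]
    nlinarith
  -- perturbed configuration
  set b' : Fin m → Fin d → ℝ := fun j i => b j i - ((r i j : ℤ) : ℝ) * δ with hb'
  set nval : Fin d → Fin m × Fin 2 → ℝ :=
    fun i p => val i p - ((r i p.1 + ((p.2:ℕ):ℤ) : ℤ) : ℝ) * δ with hnval
  have hnval' : ∀ i p, nval i p = b' p.1 i + ((p.2:ℕ):ℝ) * (ε - δ) := by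
    intro i p
    simp only [hnval, hval, hb']
    push_cast
    ring
  have hDbd : ∀ (i : Fin d) (p : Fin m × Fin 2), |val i p - nval i p| ≤ g/8 := by
    intro i p
    simp only [hnval, sub_sub_cancel]
    rw [abs_mul, abs_of_pos hδ0]
    calc |((r i p.1 + ((p.2:ℕ):ℤ) : ℤ) : ℝ)| * δ ≤ RB * δ := by
          have := hRBr i p.1 p.2
          nlinarith
      _ = g / 8 := by
          rw [hδdef]
          field_simp
  have hcoin : ∀ (i : Fin d) (p p' : Fin m × Fin 2),
      Int.fract (val i p - val i p') = 0 →
      val i p - nval i p = val i p' - nval i p' := by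
    intro i p p' h0
    obtain ⟨n, hn⟩ : ∃ n : ℤ, val i p - val i p' = (n:ℝ) := by
      refine ⟨⌊val i p - val i p'⌋, ?_⟩
      have := Int.self_sub_floor (val i p - val i p')
      rw [h0] at this; linarith
    have hrel : ∃ n : ℤ, b p.1 i = b p'.1 i + ((((p'.2:ℕ):ℤ) - ((p.2:ℕ):ℤ) : ℤ):ℝ)*ε + (n:ℝ) := by
      refine ⟨n, ?_⟩
      simp only [hval] at hn
      push_cast
      linarith
    have hc1 : |(((p'.2:ℕ):ℤ) - ((p.2:ℕ):ℤ) : ℤ)| ≤ 1 := by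
      have h1 : (p.2:ℕ) < 2 := p.2.2
      have h2 : (p'.2:ℕ) < 2 := p'.2.2
      rw [abs_le]; omega
    have := hr i p'.1 p.1 _ hc1 hrel
    simp only [hnval, sub_sub_cancel]
    have heq : r i p.1 + ((p.2:ℕ):ℤ) = r i p'.1 + ((p'.2:ℕ):ℤ) := by omega
    rw [heq]
  -- covering with the smaller cubes
  refine ⟨ε - δ, by linarith [hδg, hgε], by linarith, b', ?_⟩
  intro y
  have hmin : ∀ i : Fin d, ∃ p : Fin m × Fin 2, ∀ p' : Fin m × Fin 2,
      Int.fract (y i - nval i p) ≤ Int.fract (y i - nval i p') := by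
    intro i
    obtain ⟨p, _, hp⟩ := Finset.exists_min_image Finset.univ
      (fun p => Int.fract (y i - nval i p)) ⟨(j₀, 0), Finset.mem_univ _⟩
    exact ⟨p, fun p' => hp p' (Finset.mem_univ _)⟩
  choose ph hph using hmin
  set x : Fin d → ℝ := fun i => val i (ph i) + min (Int.fract (y i - nval i (ph i))) (g/2)
    with hx
  obtain ⟨j, hj⟩ := hc x
  refine ⟨j, fun i => ?_⟩
  have hkey := tp_key ε δ g hε0 hε1 hδ0 hδg hg0 hgε hgε1 (val i) (nval i)
    (hDbd i) (hcoin i) (hgap i) (y i) (Int.fract (y i - nval i (ph i))) (ph i)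
    (fun p => hph i p) rfl (j, 0) (j, 1) (by linarith [hv10 i j])
    (by rw [hnval' i (j,0), hnval' i (j,1)]; norm_num)
  have hL : x i - b j i = val i (ph i) + min (Int.fract (y i - nval i (ph i))) (g/2) - val i (j, 0) := by
    simp [hx, hval]
  have hR : y i - b' j i = y i - nval i (j, 0) := by
    rw [hnval' i (j, 0)]
    norm_num
  rw [hR]
  rw [← hkey]
  have := hj i
  rw [hL] at this
  exact this

lemma tp_circ_eq (x y : ℝ) : (x : AddCircle (1:ℝ)) = (y : AddCircle (1:ℝ)) ↔ ∃ n : ℤ, x - y = n := by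
  rw [QuotientAddGroup.eq_iff_sub_mem, AddSubgroup.mem_zmultiples_iff]
  constructor
  · rintro ⟨n, hn⟩; exact ⟨n, by simpa using hn.symm⟩
  · rintro ⟨n, hn⟩; exact ⟨n, by simpa using hn.symm⟩

lemma tp_bridge1 (d m : ℕ) (ε : ℝ) (hε0 : 0 ≤ ε) (hε1 : ε < 1) (h : Coverable d m ε) :
    ∃ b : Fin m → Fin d → ℝ, ∀ y : Fin d → ℝ, ∃ j, ∀ i, Int.fract (y i - b j i) ≤ ε := by
  obtain ⟨x0, hx0⟩ := h
  choose bb hbb using fun (j : Fin m) (i : Fin d) => Quotient.exists_rep (x0 j i)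
  refine ⟨bb, fun y => ?_⟩
  have hy : (fun i => ((y i : ℝ) : AddCircle (1:ℝ))) ∈ ⋃ j, subCube d ε (x0 j) := by
    rw [hx0]; trivial
  obtain ⟨j, hj⟩ := Set.mem_iUnion.1 hy
  refine ⟨j, fun i => ?_⟩
  obtain ⟨θ, hθ0, hθε, hθ⟩ := hj i
  have hbbe : ((bb j i : ℝ) : AddCircle (1:ℝ)) = x0 j i := hbb j i
  have hθ' : ((y i : ℝ) : AddCircle (1:ℝ)) = x0 j i + (θ : AddCircle (1:ℝ)) := hθ
  have heq : ((y i : ℝ) : AddCircle (1:ℝ)) = ((bb j i + θ : ℝ) : AddCircle (1:ℝ)) := by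
    rw [hθ', ← hbbe]; rfl
  obtain ⟨n, hn⟩ := (tp_circ_eq _ _).1 heq
  have hfr : Int.fract (y i - bb j i) = θ := by
    have h1 : y i - bb j i = θ + (n:ℝ) := by linarith
    rw [h1, Int.fract_add_intCast, Int.fract_eq_self.2 ⟨hθ0, by linarith⟩]
  rw [hfr]; exact hθε

lemma tp_bridge2 (d m : ℕ) (ε : ℝ) (hε0 : 0 ≤ ε) (b : Fin m → Fin d → ℝ)
    (hc : ∀ y : Fin d → ℝ, ∃ j, ∀ i, Int.fract (y i - b j i) ≤ ε) :
    Coverable d m ε := by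
  refine ⟨fun j i => ((b j i : ℝ) : AddCircle (1:ℝ)), ?_⟩
  rw [Set.eq_univ_iff_forall]
  intro x
  rw [Set.mem_iUnion]
  choose y hy using fun i => Quotient.exists_rep (x i)
  obtain ⟨j, hj⟩ := hc y
  refine ⟨j, fun i => ?_⟩
  refine ⟨Int.fract (y i - b j i), Int.fract_nonneg _, hj i, ?_⟩
  have h1 : ((b j i : ℝ) : AddCircle (1:ℝ)) + ((Int.fract (y i - b j i) : ℝ) : AddCircle (1:ℝ))
      = ((b j i + Int.fract (y i - b j i) : ℝ) : AddCircle (1:ℝ)) := rfl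
  rw [← hy i, h1]
  rw [tp_circ_eq]
  exact ⟨⌊y i - b j i⌋, by have := Int.self_sub_floor (y i - b j i); linarith⟩

/-- Claim 1 (first part): the minimal `ε₀ ∈ (0,1]` for which `T^d` can be covered by
`μ` sub-cubes of side `ε₀` is rational, `ε₀ = s₀/t₀` with `s₀, t₀` coprime and `t₀ ≤ μ`. -/
theorem minimal_side_rational (d m : ℕ) (hd : 1 ≤ d) (hm : 1 ≤ m) (ε₀ : ℝ)
    (h : IsLeast {ε : ℝ | 0 < ε ∧ ε ≤ 1 ∧ Coverable d m ε} ε₀) :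
    ∃ s₀ t₀ : ℕ, 0 < s₀ ∧ 0 < t₀ ∧ Nat.Coprime s₀ t₀ ∧ t₀ ≤ m ∧
      ε₀ = (s₀ : ℝ) / (t₀ : ℝ) := by
  obtain ⟨⟨hε0, hε1, hcov⟩, hlb⟩ := h
  by_cases hone : ε₀ = 1
  · exact ⟨1, 1, one_pos, one_pos, Nat.coprime_one_left 1, hm, by rw [hone]; norm_num⟩
  have hε1' : ε₀ < 1 := lt_of_le_of_ne hε1 hone
  have hkeyfact : ∃ t : ℕ, 1 ≤ t ∧ t ≤ m ∧ ∃ n : ℤ, (t:ℝ) * ε₀ = (n:ℝ) := by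
    by_contra hno
    push_neg at hno
    obtain ⟨b, hb⟩ := tp_bridge1 d m ε₀ (le_of_lt hε0) hε1' hcov
    obtain ⟨ε', hε'0, hε'lt, b', hb'⟩ :=
      tp_perturb d m hd hm ε₀ hε0 hε1' hno b hb
    have hcov' : Coverable d m ε' := tp_bridge2 d m ε' (le_of_lt hε'0) b' hb'
    have hmem : ε' ∈ {ε : ℝ | 0 < ε ∧ ε ≤ 1 ∧ Coverable d m ε} :=
      ⟨hε'0, by linarith, hcov'⟩
    have := hlb hmem
    linarith
  obtain ⟨t, ht1, htm, n, hn⟩ := hkeyfact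
  have htpos : (0:ℝ) < (t:ℝ) := by exact_mod_cast ht1
  have hnpos : 0 < n := by
    have h1 : (0:ℝ) < (n:ℝ) := by
      rw [← hn]; positivity
    exact_mod_cast h1
  set s : ℕ := n.toNat with hsdef
  have hsn : (s:ℝ) = (n:ℝ) := by
    rw [hsdef]
    exact_mod_cast Int.toNat_of_nonneg (le_of_lt hnpos)
  have hspos : 0 < s := by omega
  set G : ℕ := Nat.gcd s t with hG
  have hGpos : 0 < G := Nat.gcd_pos_of_pos_right s (by omega)
  refine ⟨s / G, t / G, ?_, ?_, Nat.coprime_div_gcd_div_gcd hGpos, ?_, ?_⟩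
  · exact Nat.div_pos (Nat.le_of_dvd hspos (Nat.gcd_dvd_left s t)) hGpos
  · exact Nat.div_pos (Nat.le_of_dvd (by omega) (Nat.gcd_dvd_right s t)) hGpos
  · exact le_trans (Nat.div_le_self t G) htm
  · have h1 : ((s / G : ℕ) : ℝ) * (G:ℝ) = (s:ℝ) := by
      exact_mod_cast congrArg (Nat.cast : ℕ → ℝ) (Nat.div_mul_cancel (Nat.gcd_dvd_left s t))
    have h2 : ((t / G : ℕ) : ℝ) * (G:ℝ) = (t:ℝ) := by
      exact_mod_cast congrArg (Nat.cast : ℕ → ℝ) (Nat.div_mul_cancel (Nat.gcd_dvd_right s t))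
    have ht'pos : (0:ℝ) < ((t / G : ℕ) : ℝ) := by
      have := Nat.div_pos (Nat.le_of_dvd (by omega) (Nat.gcd_dvd_right s t)) hGpos
      exact_mod_cast this
    have hGR : (0:ℝ) < (G:ℝ) := by exact_mod_cast hGpos
    rw [eq_div_iff (ne_of_gt ht'pos)]
    have h3 : ε₀ * (t:ℝ) = (s:ℝ) := by rw [hsn, ← hn]; ring
    have h4 : ε₀ * (((t / G : ℕ) : ℝ) * (G:ℝ)) = ((s / G : ℕ) : ℝ) * (G:ℝ) := by
      rw [h1, h2]; exact h3
    have h5 : (ε₀ * ((t / G : ℕ) : ℝ) - ((s / G : ℕ) : ℝ)) * (G:ℝ) = 0 := by ring_nf; ring_nf at h4; linarith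
    rcases mul_eq_zero.1 h5 with h6 | h6
    · linarith
    · linarith

end
end

section
/- Let d ≥ 1 and μ ≥ 1 be integers, and let ε₀ be the minimum of all ε ∈ (0,1] such that the torus T^d = (ℝ/ℤ)^d can be covered by μ 'sub-cubes' of side ε. Then for every rational ε = s/t ≥ ε₀ (with s, t positive integers, ε ≤ 1), there exists a covering of T^d by μ 'sub-cubes' of side ε all of whose base vertices have all coordinates equal to integer multiples of 1/t. -/
open Set

noncomputable section

lemma circ_eq_iff (x y : ℝ) : (x : AddCircle (1:ℝ)) = y ↔ ∃ n : ℤ, x - y = n := by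
  rw [← sub_eq_zero, ← AddCircle.coe_sub, AddCircle.coe_eq_zero_iff]
  constructor
  · rintro ⟨n, hn⟩; exact ⟨n, by simpa using hn.symm⟩
  · rintro ⟨n, hn⟩; exact ⟨n, by simpa using hn.symm⟩

lemma circ_surj (q : AddCircle (1:ℝ)) : ∃ a : ℝ, (a : AddCircle (1:ℝ)) = q :=
  Quotient.exists_rep q

/-- Claim 1 (second part): for every rational `ε = s/t ≥ ε₀` (with `ε ≤ 1`), there is a
covering of `T^d` by `μ` sub-cubes of side `ε` whose base vertices have all coordinates
integer multiples of `1/t`. -/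
theorem covering_with_rational_vertices (d m : ℕ) (hd : 1 ≤ d) (hm : 1 ≤ m) (ε₀ : ℝ)
    (h : IsLeast {ε : ℝ | 0 < ε ∧ ε ≤ 1 ∧ Coverable d m ε} ε₀)
    (s t : ℕ) (hs : 0 < s) (ht : 0 < t)
    (hle : (s : ℝ) / (t : ℝ) ≤ 1) (hge : ε₀ ≤ (s : ℝ) / (t : ℝ)) :
    ∃ x0 : Fin m → (Fin d → AddCircle (1:ℝ)),
      (⋃ j, subCube d ((s : ℝ) / (t : ℝ)) (x0 j)) = Set.univ ∧
      ∀ j i, ∃ k : ℤ, x0 j i = (((k : ℝ) / (t : ℝ)) : AddCircle (1:ℝ)) := by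

  classical
  obtain ⟨⟨hε₀pos, hε₀le1, x0, hcov⟩, -⟩ := h
  have ht' : (0:ℝ) < t := by exact_mod_cast ht
  choose v hv using fun (j : Fin m) (i : Fin d) => circ_surj (x0 j i)
  have hne : (Finset.univ : Finset (Fin m × Fin d)).Nonempty :=
    ⟨⟨⟨0, hm⟩, ⟨0, hd⟩⟩, Finset.mem_univ _⟩
  set M : ℝ := Finset.sup' Finset.univ hne (fun p => Int.fract (v p.1 p.2 * t)) with hM
  have hM0 : 0 ≤ M :=
    le_trans (Int.fract_nonneg (v ⟨0,hm⟩ ⟨0,hd⟩ * t))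
      (Finset.le_sup' (fun p : Fin m × Fin d => Int.fract (v p.1 p.2 * t))
        (Finset.mem_univ (⟨⟨0,hm⟩,⟨0,hd⟩⟩ : Fin m × Fin d)))
  set c : ℝ := (1 + M) / 2 with hc
  have hc0 : 0 < c := by positivity
  have hc1 : c < 1 := by
    have hM1 : M < 1 := by
      rw [hM, Finset.sup'_lt_iff]
      intro p _; exact Int.fract_lt_one _
    rw [hc]; linarith
  have hcf : ∀ j i, Int.fract (v j i * t) < c := by
    intro j i
    have h1 : Int.fract (v j i * t) ≤ M :=
      Finset.le_sup' (fun p : Fin m × Fin d => Int.fract (v p.1 p.2 * t))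
        (Finset.mem_univ (⟨j, i⟩ : Fin m × Fin d))
    have hM1 : M < 1 := by
      rw [hM, Finset.sup'_lt_iff]
      intro p _; exact Int.fract_lt_one _
    rw [hc]; linarith
  refine ⟨fun j i => ((((⌊v j i * t⌋ : ℝ) / t) : ℝ) : AddCircle (1:ℝ)), ?_, fun j i => ⟨⌊v j i * t⌋, rfl⟩⟩
  apply Set.eq_univ_of_forall
  intro x
  choose X hX using fun i => circ_surj (x i)
  set a : Fin d → ℤ := fun i => ⌊X i * t⌋ with ha
  have hP : (fun i => ((((a i : ℝ) + c)/t : ℝ) : AddCircle (1:ℝ))) ∈ ⋃ j, subCube d ε₀ (x0 j) := by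
    rw [hcov]; trivial
  obtain ⟨j, hj⟩ := Set.mem_iUnion.mp hP
  refine Set.mem_iUnion.mpr ⟨j, fun i => ?_⟩
  obtain ⟨θ, hθ0, hθε, hθeq⟩ := hj i
  rw [← hv j i, ← AddCircle.coe_add] at hθeq
  obtain ⟨n, hn⟩ := (circ_eq_iff _ _).mp hθeq
  -- hn : (a i + c)/t - (v j i + θ) = n
  set K : ℤ := ⌊v j i * t⌋ with hK
  set k' : ℤ := K + n * t with hk'
  have hf0 : (0:ℝ) ≤ v j i * t - K := by
    have := Int.floor_le (v j i * t); linarith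
  have hf1 : v j i * t - (K:ℝ) < c := by
    have := hcf j i
    rwa [Int.fract] at this
  have hθts : θ * t ≤ s := by
    have h1 : θ ≤ (s:ℝ) / t := le_trans hθε hge
    calc θ * t ≤ ((s:ℝ)/t) * t := by nlinarith
      _ = s := div_mul_cancel₀ _ ht'.ne'
  have hk'r : (k' : ℝ) = (K : ℝ) + (n : ℝ) * (t : ℝ) := by
    rw [hk']; push_cast; ring
  have h2 : ((a i : ℝ) + c) / t = (n : ℝ) + (v j i + θ) := sub_eq_iff_eq_add.mp hn
  have h3 : (a i : ℝ) + c = ((n : ℝ) + (v j i + θ)) * t := (div_eq_iff ht'.ne').mp h2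
  have key : θ * (t:ℝ) = (a i : ℝ) + c - v j i * t - (n:ℝ) * t := by linear_combination -h3
  have hθt0 : 0 ≤ θ * (t:ℝ) := mul_nonneg hθ0 ht'.le
  have hlow : k' ≤ a i := by
    have hr : (k' : ℝ) < ((a i + 1 : ℤ) : ℝ) := by
      rw [hk'r]; push_cast; linarith
    exact Int.lt_add_one_iff.mp (by exact_mod_cast hr)
  have hup : a i + 1 ≤ k' + s := by
    have hr : ((a i : ℤ) : ℝ) < ((k' + (s:ℤ) : ℤ) : ℝ) := by
      push_cast; rw [hk'r] at *; linarith
    exact Int.add_one_le_iff.mpr (by exact_mod_cast hr)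
  have hXlow : (a i : ℝ) ≤ X i * t := Int.floor_le _
  have hXup : X i * t < (a i : ℝ) + 1 := Int.lt_floor_add_one _
  refine ⟨X i - (k' : ℝ)/t, ?_, ?_, ?_⟩
  · have : (k' : ℝ) ≤ X i * t := by
      have : (k' : ℝ) ≤ (a i : ℝ) := by exact_mod_cast hlow
      linarith
    rw [sub_nonneg, div_le_iff₀ ht']
    linarith
  · have h1 : X i * t ≤ (k' : ℝ) + s := by
      have : (a i : ℝ) + 1 ≤ (k' : ℝ) + s := by exact_mod_cast hup
      linarith
    rw [sub_le_iff_le_add, ← add_div, le_div_iff₀ ht']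
    linarith
  · rw [← hX i, ← AddCircle.coe_add]
    have hdiv : (k' : ℝ)/t = (K : ℝ)/t + (n : ℝ) := by
      rw [hk'r, add_div, mul_div_assoc, div_self ht'.ne', mul_one]
    have harg : (K : ℝ)/t + (X i - (k':ℝ)/t) = X i - n := by rw [hdiv]; ring
    rw [harg, circ_eq_iff]
    exact ⟨n, by push_cast; ring⟩

end
end

section
/- Let s ≤ t be positive integers with ⌊t/s⌋ = r and ⌈t/s⌉ = r+1. Suppose the discrete two-dimensional torus (ℤ/tℤ)² is covered by s squares A₁, A₂, …, A_s of side s. Fix a coordinate direction γ ∈ {1,2}. Then the number of γ-columns that meet at least r+2 of the squares A₁,…,A_s is at most s² − t(r+1). -/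
/-
Each square meets exactly `s` of the `t` columns in direction `γ`, so counting incidences gives
`∑_c N c = s · s`, where `N c` is the number of squares meeting column `c`. The squares meeting
column `c` cover every point of it, and each contributes only `s` of them, so
`N c · s ≥ t > r · s` (as `r < ⌈t/s⌉`): every column meets at least `r + 1` squares. Hence
`s² = ∑_c N c ≥ (r + 1) t + #{c | N c ≥ r + 2}`.
-/

open Set

noncomputable section

/-- A square of side `s` in `(ℤ/tℤ)²` with base vertex `x0`. -/
def square (t s : ℕ) (x0 : Fin 2 → ZMod t) : Set (Fin 2 → ZMod t) :=
  {x | ∀ i, ∃ j : ℕ, j < s ∧ x i = x0 i + (j : ZMod t)}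

/-- For `γ ∈ {1,2}` and `c : ZMod t`, the `γ`-column of points whose coordinate other
than `γ` equals `c`. -/
def column (t : ℕ) (γ : Fin 2) (c : ZMod t) : Set (Fin 2 → ZMod t) :=
  {x | ∀ i, i ≠ γ → x i = c}

open Finset

theorem Finset.mul_card_add_card_filter_lt_le_sum {α : Type*} (u : Finset α) (f : α → ℕ) (m : ℕ)
    (hf : ∀ x ∈ u, m ≤ f x) : m * #u + #{x ∈ u | m < f x} ≤ ∑ x ∈ u, f x := by
  rw [card_filter, mul_comm, ← smul_eq_mul, ← sum_const, ← sum_add_distrib]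
  refine sum_le_sum fun x hx => ?_
  split_ifs with h <;> have := hf x hx <;> omega

theorem mul_lt_of_lt_ceil_div {r s t : ℕ} (h : (r : ℤ) < ⌈(t : ℚ) / s⌉) : r * s < t := by
  have hlt : ((r : ℤ) : ℚ) < t / s := Int.lt_ceil.mp h
  rcases Nat.eq_zero_or_pos s with rfl | hs
  · rw [Nat.cast_zero, div_zero] at hlt
    exact absurd hlt (not_lt.mpr (by positivity))
  · exact_mod_cast (lt_div_iff₀ (by exact_mod_cast hs : (0 : ℚ) < s)).mp hlt

theorem Fin.two_ne_iff_eq_rev {i γ : Fin 2} : i ≠ γ ↔ i = γ.rev := by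
  revert i γ; decide

def cyclicInterval {t : ℕ} (a : ZMod t) (s : ℕ) : Finset (ZMod t) :=
  (range s).image fun k : ℕ => a + k

section

variable {t s : ℕ}

theorem mem_cyclicInterval {a c : ZMod t} : c ∈ cyclicInterval a s ↔ ∃ k < s, c = a + k := by
  simp only [cyclicInterval, Finset.mem_image, Finset.mem_range, eq_comm]

theorem card_cyclicInterval (hst : s ≤ t) (a : ZMod t) : #(cyclicInterval a s) = s := by
  rw [cyclicInterval, card_image_of_injOn, card_range]
  intro k hk l hl hkl
  simp only [coe_range, Set.mem_Iio] at hk hl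
  have := (ZMod.natCast_eq_natCast_iff' k l t).mp (add_left_cancel hkl)
  rwa [Nat.mod_eq_of_lt (by omega), Nat.mod_eq_of_lt (by omega)] at this

theorem card_cyclicInterval_le (a : ZMod t) : #(cyclicInterval a s) ≤ s :=
  card_image_le.trans (card_range s).le

theorem mem_square_iff {a x : Fin 2 → ZMod t} :
    x ∈ square t s a ↔ ∀ i, x i ∈ cyclicInterval (a i) s := by
  simp only [square, Set.mem_ofPred_eq, mem_cyclicInterval]

theorem column_inter_square_nonempty_iff {γ : Fin 2} {c : ZMod t} {a : Fin 2 → ZMod t} :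
    (column t γ c ∩ square t s a).Nonempty ↔ c ∈ cyclicInterval (a γ.rev) s := by
  constructor
  · rintro ⟨x, hx, hxa⟩
    rw [← hx γ.rev (Fin.two_ne_iff_eq_rev.mpr rfl)]
    exact mem_square_iff.mp hxa γ.rev
  · intro hc
    obtain ⟨k, hk, -⟩ := mem_cyclicInterval.mp hc
    refine ⟨Function.update (fun _ => c) γ (a γ), fun i hi => Function.update_of_ne hi _ _,
      mem_square_iff.mpr fun i => ?_⟩
    rcases eq_or_ne i γ with rfl | hi
    · rw [Function.update_self]
      exact mem_cyclicInterval.mpr ⟨0, by omega, by simp⟩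
    · rwa [Function.update_of_ne hi, Fin.two_ne_iff_eq_rev.mp hi]

variable {ι : Type*} [Fintype ι] (b : ι → Fin 2 → ZMod t) (γ : Fin 2)

theorem sum_ncard_squares_meeting_column [NeZero t] (hst : s ≤ t) :
    ∑ c : ZMod t, {j | (column t γ c ∩ square t s (b j)).Nonempty}.ncard =
      Fintype.card ι * s := by
  classical
  simp_rw [column_inter_square_nonempty_iff, Set.ncard_eq_toFinset_card', Set.toFinset_ofPred,
    card_filter]
  rw [sum_comm]
  simp [card_cyclicInterval hst]

theorem le_ncard_squares_meeting_column_mul [NeZero t]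
    (hcov : ⋃ j, square t s (b j) = Set.univ) (c : ZMod t) :
    t ≤ {j | (column t γ c ∩ square t s (b j)).Nonempty}.ncard * s := by
  classical
  set J := {j | (column t γ c ∩ square t s (b j)).Nonempty}.toFinset
  have hcover : (univ : Finset (ZMod t)) ⊆ J.biUnion fun j => cyclicInterval (b j γ) s := by
    intro a _
    set p := Function.update (fun _ => c) γ a
    have hp : p ∈ column t γ c := fun i hi => Function.update_of_ne hi _ _
    obtain ⟨j, hj⟩ := Set.mem_iUnion.mp (hcov ▸ Set.mem_univ p)
    refine mem_biUnion.mpr ⟨j, Set.mem_toFinset.mpr ⟨p, hp, hj⟩, ?_⟩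
    simpa [p] using mem_square_iff.mp hj γ
  calc t = #(univ : Finset (ZMod t)) := (ZMod.card t).symm
    _ ≤ #(J.biUnion fun j => cyclicInterval (b j γ) s) := card_le_card hcover
    _ ≤ #J * s := card_biUnion_le_card_mul _ _ _ fun j _ => card_cyclicInterval_le _
    _ = _ := by rw [Set.ncard_eq_toFinset_card']

end

theorem few_columns_meet_many_squares_general (s t r : ℕ) (hst : s ≤ t)
    (hceil : ⌈(t : ℚ) / (s : ℚ)⌉ = (r : ℤ) + 1)
    (b : Fin s → Fin 2 → ZMod t)
    (hcov : (⋃ j, square t s (b j)) = Set.univ)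
    (γ : Fin 2) :
    ({c : ZMod t |
        r + 2 ≤ {j : Fin s | (column t γ c ∩ square t s (b j)).Nonempty}.ncard}.ncard : ℤ)
      ≤ (s : ℤ)^2 - t * (r + 1) := by
  have hrt : r * s < t := mul_lt_of_lt_ceil_div (hceil ▸ lt_add_one _)
  have : NeZero t := ⟨by omega⟩
  set N : ZMod t → ℕ := fun c => {j | (column t γ c ∩ square t s (b j)).Nonempty}.ncard
  have hN : ∀ c, r + 1 ≤ N c := fun c =>
    Nat.lt_of_mul_lt_mul_right (hrt.trans_le (le_ncard_squares_meeting_column_mul b γ hcov c))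
  have hcount := mul_card_add_card_filter_lt_le_sum univ N (r + 1) fun c _ => hN c
  rw [sum_ncard_squares_meeting_column b γ hst, Fintype.card_fin, card_univ, ZMod.card,
    ← Set.toFinset_ofPred, ← Set.ncard_eq_toFinset_card'] at hcount
  change (r + 1) * t + {c | r + 2 ≤ N c}.ncard ≤ s * s at hcount
  have := (Nat.cast_le (α := ℤ)).mpr hcount
  push_cast at this
  linarith

/-- Claim 2: if `(ℤ/tℤ)²` is covered by `s` squares of side `s`, then the number of
`γ`-columns crossing at least `r + 2` of the squares is at most `s² - t(r+1)`. -/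
theorem few_columns_meet_many_squares (s t r : ℕ) (hs : 0 < s) (hst : s ≤ t)
    (hfloor : ⌊(t : ℚ) / (s : ℚ)⌋ = (r : ℤ))
    (hceil : ⌈(t : ℚ) / (s : ℚ)⌉ = (r : ℤ) + 1)
    (b : Fin s → Fin 2 → ZMod t)
    (hcov : (⋃ j, square t s (b j)) = Set.univ)
    (γ : Fin 2) :
    ({c : ZMod t |
        r + 2 ≤ {j : Fin s | (column t γ c ∩ square t s (b j)).Nonempty}.ncard}.ncard : ℤ)
      ≤ (s : ℤ)^2 - t * (r + 1) :=
  few_columns_meet_many_squares_general s t r hst hceil b hcov γ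

end
end
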